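/- arXiv:1906.05764 — 11 statements merged into one kernel-verified Lean document; each statement's English description precedes it below -/
import Mathlib

section
/- Let a : Fin n → ℝ^d be a point configuration whose points affinely span ℝ^d and let 1 ≤ k ≤ n−1. If two weight vectors w, w' : Fin n → ℝ induce the same coherent hypersimplicial subdivision at level k of a, and for every x ∈ Fin n they induce the same coherent hypersimplicial subdivision at level k of the restricted configuration a|_{Fin n \ {x}}, then w and w' induce the same coherent hypersimplicial subdivision at level k+1 of a. (This says that F^{(k+1)}(A) is a Minkowski summand of F^{(k)}(A) + Σ_{x} F^{(k)}(A_{[n]\x}).) -/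
/-- The tile `[X,Y]` (with `X ⊆ Y ⊆ J`) is a `w`-tile of the restricted
configuration `a|_J`. -/
def IsWTileOn {n d : ℕ} (a : Fin n → (Fin d → ℝ)) (w : Fin n → ℝ)
    (J X Y : Finset (Fin n)) : Prop :=
  ∃ f : (Fin d → ℝ) →ᵃ[ℝ] ℝ,
    (∀ i ∈ X, w i < f (a i)) ∧ (∀ i ∈ Y \ X, f (a i) = w i) ∧
      (∀ i ∈ J \ Y, f (a i) < w i)

/-- `w` and `w'` induce the same coherent hypersimplicial subdivision at level `k`
of the restricted configuration `a|_J`. -/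
def SameHypOn {n d : ℕ} (a : Fin n → (Fin d → ℝ)) (w w' : Fin n → ℝ)
    (J : Finset (Fin n)) (k : ℕ) : Prop :=
  ∀ X Y : Finset (Fin n), X ⊆ Y → Y ⊆ J → X.card < k → k < Y.card →
    (IsWTileOn a w J X Y ↔ IsWTileOn a w' J X Y)

/-- `w` and `w'` induce the same coherent hypersimplicial subdivision at level `k`
of the full configuration `a`. -/
def SameHyp {n d : ℕ} (a : Fin n → (Fin d → ℝ)) (w w' : Fin n → ℝ) (k : ℕ) : Prop :=
  SameHypOn a w w' Finset.univ k

private lemma exists_eps {ι : Type*} [DecidableEq ι] (S : Finset ι) (u v : ι → ℝ)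
    (hu : ∀ i ∈ S, 0 < u i) : ∃ ε : ℝ, 0 < ε ∧ ∀ i ∈ S, ε * |v i| < u i := by
  induction S using Finset.induction_on with
  | empty => exact ⟨1, one_pos, by simp⟩
  | @insert b S hbS ih =>
    obtain ⟨ε, hε, hS⟩ := ih (fun i hi => hu i (Finset.mem_insert_of_mem hi))
    have hub : 0 < u b := hu b (Finset.mem_insert_self b S)
    have h1 : (0:ℝ) < |v b| + 1 := by positivity
    refine ⟨min ε (u b / (|v b| + 1)), lt_min hε (by positivity), ?_⟩
    intro i hi
    rcases Finset.mem_insert.mp hi with rfl | hi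
    · calc min ε (u i / (|v i| + 1)) * |v i| ≤ (u i / (|v i| + 1)) * |v i| :=
            mul_le_mul_of_nonneg_right (min_le_right _ _) (abs_nonneg _)
        _ < u i := by
            rw [div_mul_eq_mul_div, div_lt_iff₀ h1]
            nlinarith [abs_nonneg (v i)]
    · calc min ε (u b / (|v b| + 1)) * |v i| ≤ ε * |v i| :=
            mul_le_mul_of_nonneg_right (min_le_left _ _) (abs_nonneg _)
        _ < u i := hS i hi

/-- Perturb an affine map `p` slightly in the direction `p - q`, keeping strict
inequalities over the finite sets `P` and `N`. -/
private lemma perturb {n d : ℕ} (a : Fin n → (Fin d → ℝ)) (c : Fin n → ℝ)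
    (p q : (Fin d → ℝ) →ᵃ[ℝ] ℝ) (P N : Finset (Fin n))
    (hP : ∀ i ∈ P, c i < p (a i)) (hN : ∀ i ∈ N, p (a i) < c i) :
    ∃ (ε : ℝ) (φ : (Fin d → ℝ) →ᵃ[ℝ] ℝ), 0 < ε ∧
      (∀ z, φ z = p z + ε * (p z - q z)) ∧
      (∀ i ∈ P, c i < φ (a i)) ∧ (∀ i ∈ N, φ (a i) < c i) := by
  classical
  obtain ⟨ε₁, hε₁, h₁⟩ := exists_eps P (fun i => p (a i) - c i) (fun i => p (a i) - q (a i))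
    (fun i hi => sub_pos.mpr (hP i hi))
  obtain ⟨ε₂, hε₂, h₂⟩ := exists_eps N (fun i => c i - p (a i)) (fun i => p (a i) - q (a i))
    (fun i hi => sub_pos.mpr (hN i hi))
  set ε := min ε₁ ε₂ with hεdef
  have hε : 0 < ε := lt_min hε₁ hε₂
  refine ⟨ε, (1 + ε) • p - ε • q, hε, ?_, ?_, ?_⟩
  · intro z
    simp [smul_eq_mul]
    ring
  · intro i hi
    have key : ε * |p (a i) - q (a i)| < p (a i) - c i :=
      lt_of_le_of_lt (mul_le_mul_of_nonneg_right (min_le_left _ _) (abs_nonneg _)) (h₁ i hi)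
    have habs : -(|p (a i) - q (a i)|) ≤ p (a i) - q (a i) := neg_abs_le _
    have : ((1 + ε) • p - ε • q) (a i) = p (a i) + ε * (p (a i) - q (a i)) := by
      simp [smul_eq_mul]; ring
    rw [this]
    nlinarith [mul_le_mul_of_nonneg_left habs hε.le]
  · intro i hi
    have key : ε * |p (a i) - q (a i)| < c i - p (a i) :=
      lt_of_le_of_lt (mul_le_mul_of_nonneg_right (min_le_right _ _) (abs_nonneg _)) (h₂ i hi)
    have habs : p (a i) - q (a i) ≤ |p (a i) - q (a i)| := le_abs_self _
    have : ((1 + ε) • p - ε • q) (a i) = p (a i) + ε * (p (a i) - q (a i)) := by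
      simp [smul_eq_mul]; ring
    rw [this]
    nlinarith [mul_le_mul_of_nonneg_left habs hε.le]

private lemma key_step {n d : ℕ} (a : Fin n → (Fin d → ℝ)) (k : ℕ) (hk1 : 1 ≤ k)
    (w w' : Fin n → ℝ)
    (hfull : SameHyp a w w' k) (hdel : ∀ x : Fin n, SameHypOn a w w' {x}ᶜ k)
    (X Y : Finset (Fin n)) (hXY : X ⊆ Y) (hX : X.card < k + 1) (hY : k + 1 < Y.card)
    (ht : IsWTileOn a w Finset.univ X Y) : IsWTileOn a w' Finset.univ X Y := by
  classical
  by_cases hXk : X.card < k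
  · exact (hfull X Y hXY (Finset.subset_univ _) hXk (by omega)).mp ht
  have hXc : X.card = k := by omega
  have hXne : X.Nonempty := Finset.card_pos.mp (by omega)
  obtain ⟨x, hxX⟩ := hXne
  have hxY : x ∈ Y := hXY hxX
  set X' := X.erase x with hX'def
  set Y' := Y.erase x with hY'def
  -- membership facts
  have hmemX' : ∀ i, i ∈ X → i ≠ x → i ∈ X' := fun i h1 h2 => Finset.mem_erase.mpr ⟨h2, h1⟩
  have hX'sub : ∀ i ∈ X', i ∈ X := fun i hi => Finset.mem_of_mem_erase hi
  have hEfwd : ∀ i, i ∈ Y \ X → i ∈ Y' \ X' := by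
    intro i hi
    rw [Finset.mem_sdiff] at hi ⊢
    have hix : i ≠ x := fun h => hi.2 (h ▸ hxX)
    exact ⟨Finset.mem_erase.mpr ⟨hix, hi.1⟩, fun hc => hi.2 (Finset.mem_of_mem_erase hc)⟩
  have hEbwd : ∀ i, i ∈ Y' \ X' → i ∈ Y \ X := by
    intro i hi
    rw [Finset.mem_sdiff] at hi ⊢
    obtain ⟨h1, h2⟩ := hi
    rw [Finset.mem_erase] at h1
    exact ⟨h1.2, fun hiX => h2 (Finset.mem_erase.mpr ⟨h1.1, hiX⟩)⟩
  have hCfwd : ∀ i, i ∈ Finset.univ \ Y → i ∈ ({x}ᶜ : Finset (Fin n)) \ Y' := by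
    intro i hi
    rw [Finset.mem_sdiff] at hi ⊢
    have hiY : i ∉ Y := hi.2
    have hix : i ≠ x := fun h => hiY (h ▸ hxY)
    refine ⟨by simp [hix], fun hc => hiY (Finset.mem_of_mem_erase hc)⟩
  have hCbwd : ∀ i, i ∈ ({x}ᶜ : Finset (Fin n)) \ Y' → i ∈ Finset.univ \ Y := by
    intro i hi
    rw [Finset.mem_sdiff] at hi ⊢
    obtain ⟨h1, h2⟩ := hi
    have hix : i ≠ x := by simpa using h1
    exact ⟨Finset.mem_univ _, fun hiY => h2 (Finset.mem_erase.mpr ⟨hix, hiY⟩)⟩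
  have hxYX' : x ∈ Y \ X' := by
    rw [Finset.mem_sdiff]
    exact ⟨hxY, fun hc => (Finset.mem_erase.mp hc).1 rfl⟩
  have hxUY' : x ∈ Finset.univ \ Y' := by
    rw [Finset.mem_sdiff]
    exact ⟨Finset.mem_univ _, fun hc => (Finset.mem_erase.mp hc).1 rfl⟩
  have hYX'mem : ∀ i, i ∈ Y \ X' → i = x ∨ i ∈ Y \ X := by
    intro i hi
    rw [Finset.mem_sdiff] at hi
    by_cases hix : i = x
    · exact Or.inl hix
    · exact Or.inr (Finset.mem_sdiff.mpr ⟨hi.1, fun hiX => hi.2 (hmemX' i hiX hix)⟩)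
  have hUY'mem : ∀ i, i ∈ Finset.univ \ Y' → i = x ∨ i ∈ Finset.univ \ Y := by
    intro i hi
    rw [Finset.mem_sdiff] at hi
    by_cases hix : i = x
    · exact Or.inl hix
    · exact Or.inr (Finset.mem_sdiff.mpr
        ⟨Finset.mem_univ _, fun hiY => hi.2 (Finset.mem_erase.mpr ⟨hix, hiY⟩)⟩)
  have hYXsub : ∀ i, i ∈ Y \ X → i ∈ Y \ X' := by
    intro i hi
    rw [Finset.mem_sdiff] at hi ⊢
    exact ⟨hi.1, fun hc => hi.2 (Finset.mem_of_mem_erase hc)⟩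
  have hUYsub : ∀ i, i ∈ Finset.univ \ Y → i ∈ Finset.univ \ Y' := by
    intro i hi
    rw [Finset.mem_sdiff] at hi ⊢
    exact ⟨Finset.mem_univ _, fun hc => hi.2 (Finset.mem_of_mem_erase hc)⟩
  -- cardinalities and subsets
  have hX'k : X'.card < k := by
    have h := Finset.card_erase_lt_of_mem hxX
    rw [← hX'def] at h
    omega
  have hY'k : k < Y'.card := by
    have h := Finset.card_erase_of_mem hxY
    rw [← hY'def] at h
    omega
  have hX'Y' : X' ⊆ Y' := Finset.erase_subset_erase x hXY
  have hY'c : Y' ⊆ ({x}ᶜ : Finset (Fin n)) := by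
    intro i hi
    simp [(Finset.mem_erase.mp hi).1]
  have hX'Y : X' ⊆ Y := (Finset.erase_subset x X).trans hXY
  obtain ⟨f, hf1, hf2, hf3⟩ := ht
  have hfax : w x < f (a x) := hf1 x hxX
  -- Step 1: [X', Y'] is a w-tile of the deletion at x, hence a w'-tile.
  have hdelT : IsWTileOn a w ({x}ᶜ : Finset (Fin n)) X' Y' :=
    ⟨f, fun i hi => hf1 i (hX'sub i hi), fun i hi => hf2 i (hEbwd i hi),
      fun i hi => hf3 i (hCbwd i hi)⟩
  obtain ⟨g, hg1, hg2, hg3⟩ := (hdel x X' Y' hX'Y' hY'c hX'k hY'k).mp hdelT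
  rcases lt_trichotomy (g (a x)) (w' x) with hgx | hgx | hgx
  · -- Case B: g(a x) < w' x
    have hgfull : IsWTileOn a w' Finset.univ X' Y' := by
      refine ⟨g, hg1, hg2, ?_⟩
      intro i hi
      rcases hUY'mem i hi with rfl | hi'
      · exact hgx
      · exact hg3 i (hCfwd i hi')
    obtain ⟨h, hh1, hh2, hh3⟩ :=
      (hfull X' Y' hX'Y' (Finset.subset_univ _) hX'k hY'k).mpr hgfull
    have hhax : h (a x) < w x := hh3 x hxUY'
    obtain ⟨t, ht0, ht1, htmul⟩ : ∃ t : ℝ, 0 < t ∧ t < 1 ∧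
        t * (f (a x) - h (a x)) = w x - h (a x) := by
      have hden : 0 < f (a x) - h (a x) := by linarith
      exact ⟨(w x - h (a x)) / (f (a x) - h (a x)), div_pos (by linarith) hden,
        (div_lt_one hden).mpr (by linarith), div_mul_cancel₀ _ hden.ne'⟩
    obtain ⟨m, hmev⟩ : ∃ m : (Fin d → ℝ) →ᵃ[ℝ] ℝ, ∀ z, m z = (1 - t) * h z + t * f z :=
      ⟨(1 - t) • h + t • f, fun z => by simp [smul_eq_mul]⟩
    have hmax : m (a x) = w x := by
      rw [hmev]
      nlinarith [htmul]
    have hmtile : IsWTileOn a w Finset.univ X' Y := by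
      refine ⟨m, ?_, ?_, ?_⟩
      · intro i hi
        have hfi := hf1 i (hX'sub i hi)
        have hhi := hh1 i hi
        rw [hmev]
        nlinarith
      · intro i hi
        rcases hYX'mem i hi with rfl | hi'
        · exact hmax
        · have := hf2 i hi'
          have := hh2 i (hEfwd i hi')
          rw [hmev]
          nlinarith
      · intro i hi
        have hfi := hf3 i hi
        have hhi := hh3 i (hUYsub i hi)
        rw [hmev]
        nlinarith
    obtain ⟨p, hp1, hp2, hp3⟩ :=
      (hfull X' Y hX'Y (Finset.subset_univ _) hX'k (by omega)).mp hmtile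
    have hpax : p (a x) = w' x := hp2 x hxYX'
    obtain ⟨ε, φ, hε, hφev, hφP, hφN⟩ := perturb a w' p g X' (Finset.univ \ Y) hp1 hp3
    refine ⟨φ, ?_, ?_, fun i hi => hφN i hi⟩
    · intro i hi
      by_cases hix : i = x
      · subst hix
        rw [hφev, hpax]
        nlinarith
      · exact hφP i (hmemX' i hi hix)
    · intro i hi
      have h1 : p (a i) = w' i := hp2 i (hYXsub i hi)
      have h2 : g (a i) = w' i := hg2 i (hEfwd i hi)
      rw [hφev, h1, h2]
      ring
  · -- Case C: g(a x) = w' x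
    have hgfull : IsWTileOn a w' Finset.univ X' Y := by
      refine ⟨g, hg1, ?_, ?_⟩
      · intro i hi
        rcases hYX'mem i hi with rfl | hi'
        · exact hgx
        · exact hg2 i (hEfwd i hi')
      · intro i hi
        exact hg3 i (hCfwd i hi)
    obtain ⟨h, hh1, hh2, hh3⟩ :=
      (hfull X' Y hX'Y (Finset.subset_univ _) hX'k (by omega)).mpr hgfull
    have hhax : h (a x) = w x := hh2 x hxYX'
    obtain ⟨ε₁, φ₁, hε₁, hφ₁ev, hφ₁P, hφ₁N⟩ :=
      perturb a w h f X' (Finset.univ \ Y) hh1 hh3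
    have hφ₁tile : IsWTileOn a w Finset.univ X' Y' := by
      refine ⟨φ₁, hφ₁P, ?_, ?_⟩
      · intro i hi
        have hi' := hEbwd i hi
        have h1 : h (a i) = w i := hh2 i (hYXsub i hi')
        have h2 : f (a i) = w i := hf2 i hi'
        rw [hφ₁ev, h1, h2]
        ring
      · intro i hi
        rcases hUY'mem i hi with rfl | hi'
        · rw [hφ₁ev, hhax]
          nlinarith
        · exact hφ₁N i hi'
    obtain ⟨p, hp1, hp2, hp3⟩ :=
      (hfull X' Y' hX'Y' (Finset.subset_univ _) hX'k hY'k).mp hφ₁tile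
    have hpax : p (a x) < w' x := hp3 x hxUY'
    have hg3' : ∀ i ∈ Finset.univ \ Y, g (a i) < w' i := fun i hi => hg3 i (hCfwd i hi)
    obtain ⟨ε, φ, hε, hφev, hφP, hφN⟩ := perturb a w' g p X' (Finset.univ \ Y) hg1 hg3'
    refine ⟨φ, ?_, ?_, fun i hi => hφN i hi⟩
    · intro i hi
      by_cases hix : i = x
      · subst hix
        rw [hφev, hgx]
        nlinarith
      · exact hφP i (hmemX' i hi hix)
    · intro i hi
      have h1 : g (a i) = w' i := hg2 i (hEfwd i hi)
      have h2 : p (a i) = w' i := hp2 i (hEfwd i hi)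
      rw [hφev, h1, h2]
      ring
  · -- Case A: w' x < g(a x) : g itself is a witness.
    refine ⟨g, ?_, ?_, ?_⟩
    · intro i hi
      by_cases hix : i = x
      · subst hix; exact hgx
      · exact hg1 i (hmemX' i hi hix)
    · intro i hi
      exact hg2 i (hEfwd i hi)
    · intro i hi
      exact hg3 i (hCfwd i hi)

theorem hypersecondary_summand {n d : ℕ} (a : Fin n → (Fin d → ℝ))
    (hspan : affineSpan ℝ (Set.range a) = ⊤)
    (k : ℕ) (hk1 : 1 ≤ k) (hk2 : k ≤ n - 1)
    (w w' : Fin n → ℝ)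
    (hfull : SameHyp a w w' k)
    (hdel : ∀ x : Fin n, SameHypOn a w w' {x}ᶜ k) :
    SameHyp a w w' (k + 1) := by
  have hfull' : SameHyp a w' w k := fun X Y h1 h2 h3 h4 => (hfull X Y h1 h2 h3 h4).symm
  have hdel' : ∀ x : Fin n, SameHypOn a w' w {x}ᶜ k :=
    fun x X Y h1 h2 h3 h4 => (hdel x X Y h1 h2 h3 h4).symm
  intro X Y hXY hYu hX hY
  exact ⟨key_step a k hk1 w w' hfull hdel X Y hXY hX hY,
    key_step a k hk1 w' w hfull' hdel' X Y hXY hX hY⟩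
end

section
/- Let a : Fin n → ℝ^d be a point configuration whose points affinely span ℝ^d and let 1 ≤ k ≤ d. Then for all weight vectors w, w' : Fin n → ℝ, the following are equivalent: (i) w and w' induce the same coherent hypersimplicial subdivision at level k+1 of a; (ii) w and w' induce the same coherent hypersimplicial subdivision at level k of a, and for every x ∈ Fin n they induce the same coherent hypersimplicial subdivision at level k of the restricted configuration a|_{Fin n \ {x}}. (This says that F^{(k+1)}(A) is normally equivalent to F^{(k)}(A) + Σ_{x} F^{(k)}(A_{[n]\x}).) -/
/-!
A `w`-tile `[X, Y]` is witnessed by an affine function `f` such that `f (a i) - w i` is positive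
on `X`, zero on `Y \ X` and negative off `Y`. Two facts hold for all weights. If `[X, Y]` is a face
of a `w`-tile `[X', Y']` (`X' ⊆ X ⊆ Y ⊆ Y'`) and `[X', Y']` is also a `w'`-tile, then so is
`[X, Y]`: perturb a `w'`-witness of `[X', Y']` in the direction of the difference of the two
`w`-witnesses. And if the points `a i`, `i ∈ Y \ X`, do not affinely span, then `[X, Y]` is a
proper face of a coarser tile: move `f` along a direction vanishing at these points until one more
point reaches the graph.

From level `k + 1` down to level `k` (induction on `|X|`): a tile covering `k` with `|Y| > k + 1`
covers `k + 1`, and otherwise its coarser tile covers `k + 1` or has a smaller `X`. The exception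
is `X = ∅` with `a|_Y` an affine basis, forced by `|Y| = k + 1 ≤ d + 1`. Then `[∅, Y]` is
compared with the affine interpolant of `w'` on `Y` through the faces `[{z}, Y]`, with `z` chosen
for each `j ∉ Y` so that the barycentric coordinate of `a j` at `z` is positive.

A tile of `a` restricted to the complement of `x` extends to exactly one of the tiles `[X, Y]`,
`[X, Y ∪ x]`, `[X ∪ x, Y ∪ x]` of `a`, which cover levels `k`, `k`, `k + 1`. Conversely, for
`|X| = k` and `x ∈ X` the restricted tile `[X - x, Y - x]` transfers, and each of its three
extensions leads back to `[X, Y]` through the face `[X - x, Y]`.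
-/

open Finset Filter Topology Module

theorem eventually_lt_add_mul {u v c : ℝ} (h : u < v ∨ u = v ∧ 0 < c) :
    ∀ᶠ ε in 𝓝[>] (0 : ℝ), u < v + ε * c := by
  rcases h with h | ⟨rfl, hc⟩
  · have : Continuous fun ε : ℝ => v + ε * c := by fun_prop
    exact ((this.tendsto' 0 v (by simp)).mono_left nhdsWithin_le_nhds).eventually_const_lt h
  · filter_upwards [self_mem_nhdsWithin] with ε hε
    linarith [mul_pos (Set.mem_Ioi.1 hε) hc]

theorem eventually_add_mul_lt {u v c : ℝ} (h : v < u ∨ v = u ∧ c < 0) :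
    ∀ᶠ ε in 𝓝[>] (0 : ℝ), v + ε * c < u := by
  refine (eventually_lt_add_mul (u := -u) (v := -v) (c := -c) ?_).mono fun ε hε => by linarith
  rcases h with h | ⟨rfl, hc⟩
  exacts [.inl (neg_lt_neg h), .inr ⟨rfl, neg_pos.2 hc⟩]

theorem AffineSubspace.exists_affineMap_ne_zero_of_notMem {k V P : Type*} [Field k]
    [AddCommGroup V] [Module k V] [AddTorsor V P] {S : AffineSubspace k P} {p : P} (hp : p ∉ S) :
    ∃ h : P →ᵃ[k] k, (∀ q ∈ S, h q = 0) ∧ h p ≠ 0 := by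
  obtain rfl | ⟨s, hs⟩ := S.eq_bot_or_nonempty
  · exact ⟨AffineMap.const k P 1, fun q hq => absurd hq (AffineSubspace.notMem_bot k V q),
      one_ne_zero⟩
  obtain ⟨g, hgp, hgS⟩ := Submodule.exists_dual_map_eq_bot_of_notMem
    (mt (AffineSubspace.vsub_right_mem_direction_iff_mem hs p).1 hp) inferInstance
  refine ⟨g.toAffineMap.comp (AffineMap.id k P -ᵥ AffineMap.const k P s), fun q hq => ?_, hgp⟩
  simpa using (Submodule.mem_bot k).1
    (hgS ▸ Submodule.mem_map_of_mem (AffineSubspace.vsub_mem_direction hq hs))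

theorem AffineBasis.sum_coord_mul_apply {ι k V P : Type*} [Fintype ι] [Field k]
    [AddCommGroup V] [Module k V] [AddTorsor V P] (b : AffineBasis ι k P) (f : P →ᵃ[k] k) (q : P) :
    ∑ i, b.coord i q * f (b i) = f q := by
  conv_rhs => rw [← b.affineCombination_coord_eq_self q]
  rw [univ.map_affineCombination _ _ (b.sum_coord_apply_eq_one q),
    univ.affineCombination_eq_linear_combination _ _ (b.sum_coord_apply_eq_one q)]
  rfl

section AffineSpan

variable {ι V P : Type*} [AddCommGroup V] [Module ℝ V] [AddTorsor V P]

theorem finrank_add_one_le_card_of_affineSpan_eq_top {a : ι → P} {s : Finset ι}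
    (hs : affineSpan ℝ (a '' ↑s) = ⊤) : finrank ℝ V + 1 ≤ #s := by
  classical
  obtain ⟨m, hm⟩ : ∃ m, #s = m + 1 := Nat.exists_eq_succ_of_ne_zero fun h => by
    simp [card_eq_zero.1 h] at hs
  have := finrank_vectorSpan_image_finset_le ℝ a s hm
  rw [coe_image, AffineSubspace.vectorSpan_eq_top_of_affineSpan_eq_top ℝ V P hs,
    finrank_top] at this
  omega

theorem exists_affineBasis_of_card_eq {a : ι → P} {Y : Finset ι} (hY : affineSpan ℝ (a '' ↑Y) = ⊤)
    (hcard : #Y = finrank ℝ V + 1) : ∃ b : AffineBasis Y ℝ P, ∀ z, b z = a z := by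
  have hrange : Set.range (fun z : Y => a z) = a '' ↑Y := by ext; simp
  have hind : AffineIndependent ℝ (fun z : Y => a z) := by
    rw [affineIndependent_iff_le_finrank_vectorSpan ℝ _ (by simpa using hcard), hrange,
      AffineSubspace.vectorSpan_eq_top_of_affineSpan_eq_top ℝ V P hY, finrank_top]
  exact ⟨⟨_, hind, hrange ▸ hY⟩, fun _ => rfl⟩

end AffineSpan

namespace Hypersimplicial

variable {ι V P : Type*} [DecidableEq ι] [AddCommGroup V] [Module ℝ V] [AddTorsor V P]

structure Realizes (a : ι → P) (w : ι → ℝ) (f : P →ᵃ[ℝ] ℝ) (X Y : Finset ι) : Prop where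
  pos : ∀ i ∈ X, w i < f (a i)
  zero : ∀ i ∈ Y \ X, f (a i) = w i
  neg : ∀ i ∉ Y, f (a i) < w i

def IsTile (a : ι → P) (w : ι → ℝ) (X Y : Finset ι) : Prop :=
  ∃ f : P →ᵃ[ℝ] ℝ, Realizes a w f X Y

-- `IsWTileOn` is the case `P = Fin d → ℝ`, definitionally.
def IsTileOn (a : ι → P) (w : ι → ℝ) (J X Y : Finset ι) : Prop :=
  ∃ f : P →ᵃ[ℝ] ℝ, (∀ i ∈ X, w i < f (a i)) ∧ (∀ i ∈ Y \ X, f (a i) = w i) ∧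
    ∀ i ∈ J \ Y, f (a i) < w i

def TransfersAt (a : ι → P) (w w' : ι → ℝ) (k : ℕ) : Prop :=
  ∀ X Y : Finset ι, #X < k → k < #Y → IsTile a w X Y → IsTile a w' X Y

section Tiles

variable {a : ι → P} {w w' : ι → ℝ} {f h : P →ᵃ[ℝ] ℝ} {X Y X' Y' : Finset ι}

theorem Realizes.subset (hf : Realizes a w f X Y) : X ⊆ Y := fun i hi =>
  by_contra fun hiY => (hf.pos i hi).not_gt (hf.neg i hiY)

theorem IsTile.subset (ht : IsTile a w X Y) : X ⊆ Y :=
  let ⟨_, hf⟩ := ht; hf.subset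

theorem IsTile.erase_of_erase_erase {x : ι} (hx : x ∈ X) (ht : IsTile a w X Y)
    (ht' : IsTile a w (X.erase x) (Y.erase x)) : IsTile a w (X.erase x) Y := by
  obtain ⟨f, hf⟩ := ht
  obtain ⟨g, hg⟩ := ht'
  have hA := hf.pos x hx
  have hB := hg.neg x (notMem_erase x Y)
  set t := (f (a x) - w x) / (f (a x) - g (a x))
  have ht0 : 0 < t := div_pos (by linarith) (by linarith)
  have ht1 : t < 1 := (div_lt_one (by linarith)).2 (by linarith)
  have htx : t * (f (a x) - g (a x)) = f (a x) - w x := div_mul_cancel₀ _ (by linarith)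
  refine ⟨(1 - t) • f + t • g, ⟨fun i hi => ?_, fun i hi => ?_, fun i hi => ?_⟩⟩ <;>
    simp only [AffineMap.coe_add, AffineMap.coe_smul, Pi.add_apply, Pi.smul_apply, smul_eq_mul]
  · nlinarith [hf.pos i (mem_of_mem_erase hi), hg.pos i hi]
  · obtain ⟨hiY, hiX⟩ := Finset.mem_sdiff.1 hi
    by_cases hix : i = x
    · subst hix
      linarith
    · have hiX' : i ∉ X := fun h => hiX (mem_erase.2 ⟨hix, h⟩)
      rw [hf.zero i (Finset.mem_sdiff.2 ⟨hiY, hiX'⟩),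
        hg.zero i (Finset.mem_sdiff.2 ⟨mem_erase.2 ⟨hix, hiY⟩, hiX⟩)]
      ring
  · nlinarith [hf.neg i hi, hg.neg i fun h => hi (mem_of_mem_erase h)]

theorem isTile_empty_of_affineBasis {Y : Finset ι} (b : AffineBasis Y ℝ P) (hb : ∀ z, b z = a z)
    (h : ∀ j ∉ Y, ∀ z, 0 < b.coord z (a j) → IsTile a w' {↑z} Y) : IsTile a w' ∅ Y := by
  let f := (Fintype.linearCombination ℝ fun z : Y => w' z).toAffineMap.comp b.coords
  have hf : ∀ q, f q = ∑ z, b.coord z q * w' z := fun q => by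
    simp [f, Fintype.linearCombination_apply, AffineBasis.coords_apply]
  refine ⟨f, by simp, fun i hi => ?_, fun j hj => ?_⟩
  · have hi : i ∈ Y := by simpa using hi
    rw [hf, ← hb ⟨i, hi⟩]
    simp [AffineBasis.coord_apply]
  obtain ⟨z, -, hz⟩ : ∃ z ∈ univ, 0 < b.coord z (a j) :=
    exists_lt_of_sum_lt (f := 0) (by
      simp only [Pi.zero_apply, sum_const_zero, b.sum_coord_apply_eq_one, zero_lt_one])
  obtain ⟨g, hg⟩ := h j hj z hz
  have hgb : ∀ z', g (b z') = w' z' + if z' = z then g (a z) - w' z else 0 := fun z' => by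
    split_ifs with h
    · simp [h, hb]
    · rw [hb, hg.zero z' (by simpa using h)]
      simp
  -- `g = f + (g (a z) - w' z) • b.coord z`, evaluated at `a j`
  have hgj := b.sum_coord_mul_apply g (a j)
  simp only [hgb, mul_add, sum_add_distrib, mul_ite, mul_zero, sum_ite_eq', mem_univ, if_true,
    ← hf] at hgj
  have hgz := hg.pos z (mem_singleton_self _)
  linarith [hg.neg j hj, mul_pos hz (sub_pos.2 hgz)]

variable [Fintype ι]

theorem realizes_filter (f : P →ᵃ[ℝ] ℝ) :
    Realizes a w f {i | w i < f (a i)} {i | w i ≤ f (a i)} where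
  pos i hi := (mem_filter.1 hi).2
  zero i hi := by
    simp only [Finset.mem_sdiff, mem_filter, mem_univ, true_and, not_lt] at hi
    exact le_antisymm hi.2 hi.1
  neg i hi := by simpa using hi

theorem isTileOn_univ_iff : IsTileOn a w univ X Y ↔ IsTile a w X Y := by
  refine exists_congr fun f => ⟨fun ⟨h₁, h₂, h₃⟩ => ⟨h₁, h₂, fun i hi => h₃ i (by simpa using hi)⟩,
    fun hf => ⟨hf.pos, hf.zero, fun i hi => hf.neg i (Finset.mem_sdiff.1 hi).2⟩⟩

theorem isTileOn_compl_singleton_iff {x : ι} (hxY : x ∉ Y) :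
    IsTileOn a w {x}ᶜ X Y ↔
      IsTile a w X Y ∨ IsTile a w X (insert x Y) ∨ IsTile a w (insert x X) (insert x Y) := by
  constructor
  · rintro ⟨f, hpos, hzero, hneg⟩
    have hneg' : ∀ i ≠ x, i ∉ Y → f (a i) < w i := fun i hix hiY => hneg i (by simp [hix, hiY])
    rcases lt_trichotomy (f (a x)) (w x) with hlt | heq | hgt
    · refine .inl ⟨f, hpos, hzero, fun i hi => ?_⟩
      obtain rfl | hix := eq_or_ne i x
      exacts [hlt, hneg' i hix hi]
    · refine .inr (.inl ⟨f, hpos, fun i hi => ?_, fun i hi => ?_⟩)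
      · obtain ⟨hi, hiX⟩ := Finset.mem_sdiff.1 hi
        obtain rfl | hiY := mem_insert.1 hi
        exacts [heq, hzero i (Finset.mem_sdiff.2 ⟨hiY, hiX⟩)]
      · obtain ⟨hix, hiY⟩ := not_or.1 (mem_insert.not.1 hi)
        exact hneg' i hix hiY
    · refine .inr (.inr ⟨f, fun i hi => ?_, fun i hi => ?_, fun i hi => ?_⟩)
      · obtain rfl | hiX := mem_insert.1 hi
        exacts [hgt, hpos i hiX]
      · obtain ⟨hi, hiX⟩ := Finset.mem_sdiff.1 hi
        obtain ⟨hix, hiX⟩ := not_or.1 (mem_insert.not.1 hiX)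
        exact hzero i (Finset.mem_sdiff.2 ⟨(mem_insert.1 hi).resolve_left hix, hiX⟩)
      · obtain ⟨hix, hiY⟩ := not_or.1 (mem_insert.not.1 hi)
        exact hneg' i hix hiY
  · rintro (⟨f, hf⟩ | ⟨f, hf⟩ | ⟨f, hf⟩)
    · exact ⟨f, hf.pos, hf.zero, fun i hi => hf.neg i (Finset.mem_sdiff.1 hi).2⟩
    · exact ⟨f, hf.pos, fun i hi => hf.zero i (by grind [mem_compl]),
        fun i hi => hf.neg i (by grind [mem_compl])⟩
    · refine ⟨f, fun i hi => hf.pos i (mem_insert_of_mem hi), fun i hi => hf.zero i ?_,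
        fun i hi => hf.neg i (by grind [mem_compl])⟩
      grind

theorem IsTile.perturb (hXY : X ⊆ Y) (hX : X' ⊆ X) (hY : Y ⊆ Y')
    (hpos : ∀ i ∈ X \ X', 0 < h (a i)) (hzero : ∀ i ∈ Y \ X, h (a i) = 0)
    (hneg : ∀ i ∈ Y' \ Y, h (a i) < 0) (ht : IsTile a w X' Y') : IsTile a w X Y := by
  obtain ⟨f, hf⟩ := ht
  have hon : ∀ i ∈ Y', i ∉ X' → f (a i) = w i := fun i hi hi' => hf.zero i (mem_sdiff.2 ⟨hi, hi'⟩)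
  have hup : ∀ i ∈ X, ∀ᶠ ε in 𝓝[>] (0 : ℝ), w i < f (a i) + ε * h (a i) := fun i hi =>
    eventually_lt_add_mul <| if hi' : i ∈ X' then .inl (hf.pos i hi') else
      .inr ⟨(hon i (hY (hXY hi)) hi').symm, hpos i (mem_sdiff.2 ⟨hi, hi'⟩)⟩
  have hdown : ∀ i ∈ Yᶜ, ∀ᶠ ε in 𝓝[>] (0 : ℝ), f (a i) + ε * h (a i) < w i := fun i hi =>
    eventually_add_mul_lt <| if hi' : i ∈ Y' then
      .inr ⟨hon i hi' fun h => mem_compl.1 hi (hXY (hX h)),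
        hneg i (mem_sdiff.2 ⟨hi', mem_compl.1 hi⟩)⟩
    else .inl (hf.neg i hi')
  obtain ⟨ε, hεup, hεdown⟩ :=
    (((eventually_all_finset X).2 hup).and ((eventually_all_finset Yᶜ).2 hdown)).exists
  refine ⟨f + ε • h, fun i hi => hεup i hi, fun i hi => ?_, fun i hi => hεdown i (mem_compl.2 hi)⟩
  have hi' : i ∉ X' := fun h => (mem_sdiff.1 hi).2 (hX h)
  simp [hon i (hY (mem_sdiff.1 hi).1) hi', hzero i hi]

theorem IsTile.of_coarser (ht : IsTile a w X Y) (ht' : IsTile a w X' Y') (hX : X' ⊆ X)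
    (hY : Y ⊆ Y') : IsTile a w' X' Y' → IsTile a w' X Y := by
  obtain ⟨f, hf⟩ := ht
  obtain ⟨g, hg⟩ := ht'
  have hon : ∀ i ∈ Y', i ∉ X' → g (a i) = w i := fun i hi hi' => hg.zero i (mem_sdiff.2 ⟨hi, hi'⟩)
  refine IsTile.perturb (h := f - g) hf.subset hX hY (fun i hi => ?_) (fun i hi => ?_)
    fun i hi => ?_
  all_goals
    obtain ⟨hi, hi'⟩ := mem_sdiff.1 hi
    simp only [AffineMap.coe_sub, Pi.sub_apply]
  · linarith [hf.pos i hi, hon i (hY (hf.subset hi)) hi']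
  · linarith [hf.zero i (mem_sdiff.2 ⟨hi, hi'⟩), hon i (hY hi) fun h => hi' (hX h)]
  · linarith [hf.neg i hi', hon i hi fun h => hi' (hf.subset (hX h))]

theorem Realizes.exists_first_contact (hf : Realizes a w f X Y) (i₀ : ι)
    (hi₀ : i₀ ∈ X ∧ h (a i₀) < 0 ∨ i₀ ∉ Y ∧ 0 < h (a i₀)) :
    ∃ t > 0, ∃ j, (j ∈ X ∨ j ∉ Y) ∧ f (a j) + t * h (a j) = w j ∧
      (∀ i ∈ X, w i ≤ f (a i) + t * h (a i)) ∧ ∀ i ∉ Y, f (a i) + t * h (a i) ≤ w i := by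
  set S := ({i | i ∈ X ∧ h (a i) < 0 ∨ i ∉ Y ∧ 0 < h (a i)} : Finset ι)
  have hS : ∀ {i}, i ∈ S ↔ i ∈ X ∧ h (a i) < 0 ∨ i ∉ Y ∧ 0 < h (a i) := by simp [S]
  let τ i := (w i - f (a i)) / h (a i)
  obtain ⟨j, hjS, hj⟩ := S.exists_min_image τ ⟨i₀, hS.2 hi₀⟩
  have ht : 0 < τ j := by
    rcases hS.1 hjS with ⟨hjX, hjh⟩ | ⟨hjY, hjh⟩
    · exact div_pos_of_neg_of_neg (by linarith [hf.pos j hjX]) hjh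
    · exact div_pos (by linarith [hf.neg j hjY]) hjh
  refine ⟨τ j, ht, j, ?_, ?_, fun i hi => ?_, fun i hi => ?_⟩
  · exact (hS.1 hjS).imp (·.1) (·.1)
  · have hjh : h (a j) ≠ 0 := (hS.1 hjS).elim (·.2.ne) (·.2.ne')
    simp only [τ, div_mul_cancel₀ _ hjh]
    ring
  · rcases lt_or_ge (h (a i)) 0 with hlt | hge
    · have := (le_div_iff_of_neg hlt).1 (hj i (hS.2 (.inl ⟨hi, hlt⟩)))
      linarith
    · linarith [hf.pos i hi, mul_nonneg ht.le hge]
  · rcases lt_or_ge 0 (h (a i)) with hlt | hge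
    · have := (le_div_iff₀ hlt).1 (hj i (hS.2 (.inr ⟨hi, hlt⟩)))
      linarith
    · linarith [hf.neg i hi, mul_nonpos_of_nonneg_of_nonpos ht.le hge]

theorem Realizes.exists_coarser (hf : Realizes a w f X Y) (hh : ∀ i ∈ Y \ X, h (a i) = 0)
    (i₀ : ι) (hi₀ : i₀ ∈ X ∧ h (a i₀) < 0 ∨ i₀ ∉ Y ∧ 0 < h (a i₀)) :
    ∃ X' Y', X' ⊆ X ∧ Y ⊆ Y' ∧ (X' ⊂ X ∨ Y ⊂ Y') ∧ IsTile a w X' Y' ∧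
      ∀ i ∈ X \ X', h (a i) < 0 := by
  obtain ⟨t, ht, j, hj, hjeq, hX, hY⟩ := hf.exists_first_contact i₀ hi₀
  set g := f + t • h
  have hg : ∀ i, g (a i) = f (a i) + t * h (a i) := fun i => rfl
  have hZ : ∀ i ∈ Y \ X, g (a i) = w i := fun i hi => by simp [hg, hh i hi, hf.zero i hi]
  set X' : Finset ι := {i | w i < g (a i)}
  set Y' : Finset ι := {i | w i ≤ g (a i)}
  have hX' : X' ⊆ X := fun i hi => by
    by_contra hiX
    rw [mem_filter_univ] at hi
    by_cases hiY : i ∈ Y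
    · linarith [hZ i (Finset.mem_sdiff.2 ⟨hiY, hiX⟩)]
    · linarith [hY i hiY, hg i]
  have hY' : Y ⊆ Y' := fun i hi => by
    rw [mem_filter_univ]
    by_cases hiX : i ∈ X
    · linarith [hX i hiX, hg i]
    · exact (hZ i (Finset.mem_sdiff.2 ⟨hi, hiX⟩)).ge
  refine ⟨X', Y', hX', hY', ?_, ⟨g, realizes_filter g⟩, fun i hi => ?_⟩
  · refine hj.imp (fun hjX => ?_) fun hjY => ?_
    · exact (ssubset_iff_of_subset hX').2 ⟨j, hjX, by simp [X', hg, hjeq]⟩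
    · exact (ssubset_iff_of_subset hY').2 ⟨j, by simp [Y', hg, hjeq], hjY⟩
  · obtain ⟨hiX, hiX'⟩ := Finset.mem_sdiff.1 hi
    rw [mem_filter_univ, not_lt, hg] at hiX'
    exact neg_of_mul_neg_right (by linarith [hf.pos i hiX]) ht.le

theorem IsTile.exists_strictly_coarser (hspan : affineSpan ℝ (Set.range a) = ⊤)
    (ht : IsTile a w X Y) (hne : affineSpan ℝ (a '' ↑(Y \ X)) ≠ ⊤) :
    ∃ X' Y', X' ⊆ X ∧ Y ⊆ Y' ∧ (X' ⊂ X ∨ Y ⊂ Y') ∧ IsTile a w X' Y' := by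
  obtain ⟨f, hf⟩ := ht
  obtain ⟨i₀, hi₀⟩ : ∃ i₀, a i₀ ∉ affineSpan ℝ (a '' ↑(Y \ X)) := by
    by_contra! h
    exact hne (eq_top_iff.2 (hspan ▸ affineSpan_le.2 (Set.range_subset_iff.2 h)))
  have hmem : ∀ i ∈ Y \ X, a i ∈ affineSpan ℝ (a '' ↑(Y \ X)) := fun i hi =>
    subset_affineSpan ℝ _ ⟨i, hi, rfl⟩
  obtain ⟨h, hzero, hi₀h⟩ := AffineSubspace.exists_affineMap_ne_zero_of_notMem hi₀
  have hi₀XY : i₀ ∈ X ∨ i₀ ∉ Y := by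
    by_contra! hc
    exact hi₀ (hmem i₀ (Finset.mem_sdiff.2 ⟨hc.2, hc.1⟩))
  -- orient `h` so that moving along it brings `a i₀` onto the graph
  obtain ⟨h', hh', hi₀'⟩ : ∃ h' : P →ᵃ[ℝ] ℝ, (∀ i ∈ Y \ X, h' (a i) = 0) ∧
      (i₀ ∈ X ∧ h' (a i₀) < 0 ∨ i₀ ∉ Y ∧ 0 < h' (a i₀)) := by
    have hzero' : ∀ i ∈ Y \ X, (-h) (a i) = 0 := fun i hi => by simp [hzero _ (hmem i hi)]
    rcases hi₀XY with hX | hY <;> rcases hi₀h.lt_or_gt with hlt | hgt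
    · exact ⟨h, fun i hi => hzero _ (hmem i hi), .inl ⟨hX, hlt⟩⟩
    · exact ⟨-h, hzero', .inl ⟨hX, by simpa using hgt⟩⟩
    · exact ⟨-h, hzero', .inr ⟨hY, by simpa using hlt⟩⟩
    · exact ⟨h, fun i hi => hzero _ (hmem i hi), .inr ⟨hY, hgt⟩⟩
  obtain ⟨X', Y', hX, hY, hs, ht', -⟩ := hf.exists_coarser hh' i₀ hi₀'
  exact ⟨X', Y', hX, hY, hs, ht'⟩

end Tiles

section Levels

variable [Fintype ι] {a : ι → P} {w w' : ι → ℝ} {k : ℕ}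

theorem IsTileOn.transfer_compl_singleton {x : ι} {X Y : Finset ι} (hk : TransfersAt a w w' k)
    (hsucc : TransfersAt a w w' (k + 1)) (hY : Y ⊆ {x}ᶜ) (hX : #X < k) (hkY : k < #Y)
    (ht : IsTileOn a w {x}ᶜ X Y) : IsTileOn a w' {x}ᶜ X Y := by
  have hxY : x ∉ Y := fun h => by simpa using hY h
  have hcard : #(insert x Y) = #Y + 1 := card_insert_of_notMem hxY
  rw [isTileOn_compl_singleton_iff hxY] at ht ⊢
  rcases ht with h | h | h
  · exact .inl (hk X Y hX hkY h)
  · exact .inr (.inl (hk _ _ hX (by omega) h))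
  · exact .inr (.inr (hsucc _ _ (by have := card_insert_le x X; omega) (by omega) h))

theorem TransfersAt.succ (hk : TransfersAt a w w' k) (hk' : TransfersAt a w' w k) (hk₁ : 1 ≤ k)
    (hdel : ∀ x X Y, X ⊆ Y → Y ⊆ {x}ᶜ → #X < k → k < #Y →
      IsTileOn a w {x}ᶜ X Y → IsTileOn a w' {x}ᶜ X Y) :
    TransfersAt a w w' (k + 1) := by
  intro X Y hX hY ht
  rcases (show #X < k ∨ #X = k by omega) with hX | hX
  · exact hk X Y hX (by omega) ht
  obtain ⟨x, hx⟩ : X.Nonempty := card_pos.1 (by omega)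
  have hxY := ht.subset hx
  have hXx : #(X.erase x) < k := by rw [card_erase_of_mem hx]; omega
  have hYx : k < #(Y.erase x) := by rw [card_erase_of_mem hxY]; omega
  have hYx' : Y.erase x ⊆ {x}ᶜ := fun i hi => by simpa using ne_of_mem_erase hi
  have hxYx : x ∉ Y.erase x := notMem_erase x Y
  have hdel' : IsTileOn a w' {x}ᶜ (X.erase x) (Y.erase x) := by
    refine hdel x _ _ (erase_subset_erase x ht.subset) hYx' hXx hYx ?_
    rw [isTileOn_compl_singleton_iff hxYx, insert_erase hx, insert_erase hxY]
    exact .inr (.inr ht)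
  rw [isTileOn_compl_singleton_iff hxYx, insert_erase hx, insert_erase hxY] at hdel'
  have hface : IsTile a w' (X.erase x) Y → IsTile a w' X Y := fun h' =>
    ht.of_coarser (hk' _ _ hXx (by omega) h') (erase_subset x X) subset_rfl h'
  rcases hdel' with h' | h' | h'
  · exact hface (hk _ _ hXx (by omega) (ht.erase_of_erase_erase hx (hk' _ _ hXx hYx h')))
  · exact hface h'
  · exact h'

theorem transfer_of_affineSpan_eq_top {X Y : Finset ι} (hkd : k ≤ finrank ℝ V)
    (H : TransfersAt a w w' (k + 1)) (hX : #X < k) (hY : #Y = k + 1)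
    (htop : affineSpan ℝ (a '' ↑(Y \ X)) = ⊤) (ht : IsTile a w X Y) : IsTile a w' X Y := by
  have hcard := finrank_add_one_le_card_of_affineSpan_eq_top htop
  rw [card_sdiff_of_subset ht.subset] at hcard
  obtain rfl : X = ∅ := card_eq_zero.1 (by omega)
  obtain ⟨b, hb⟩ := exists_affineBasis_of_card_eq (by simpa using htop) (by omega)
  refine isTile_empty_of_affineBasis b hb fun j hj z hz => ?_
  have hbz : ∀ i ∈ Y \ {↑z}, b.coord z (a i) = 0 := fun i hi => by
    obtain ⟨hiY, hiz⟩ := Finset.mem_sdiff.1 hi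
    rw [← Subtype.coe_mk i hiY, ← hb, b.coord_apply_ne]
    exact fun h => hiz (by simp [h])
  have hz' : IsTile a w {↑z} Y := ht.perturb (h := b.coord z) (singleton_subset_iff.2 z.2)
    (empty_subset _) subset_rfl (fun i hi => by simp_all [← hb]) hbz (by simp)
  obtain ⟨f, hf⟩ := hz'
  obtain ⟨X', Y', hX', hY', hs, ht', hneg⟩ := hf.exists_coarser hbz j (.inr ⟨hj, hz⟩)
  have hzX' : (z : ι) ∈ X' := by
    by_contra hzX'
    have := hneg z (Finset.mem_sdiff.2 ⟨mem_singleton_self _, hzX'⟩)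
    rw [← hb, b.coord_apply_eq] at this
    exact one_pos.not_gt this
  have hYY' : Y ⊂ Y' := hs.resolve_left fun h => by simp [ssubset_singleton_iff.1 h] at hzX'
  have hX'card : #X' ≤ 1 := (card_le_card hX').trans (card_singleton _).le
  exact IsTile.of_coarser ⟨f, hf⟩ ht' hX' hY'
    (H X' Y' (by omega) (by have := card_lt_card hYY'; omega) ht')

theorem TransfersAt.of_succ (hspan : affineSpan ℝ (Set.range a) = ⊤) (hkd : k ≤ finrank ℝ V)
    (H : TransfersAt a w w' (k + 1)) :
    TransfersAt a w w' k := by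
  intro X
  induction X using Finset.strongInduction with
  | H X ih =>
  intro Y hX hkY ht
  rcases (show k + 1 < #Y ∨ #Y = k + 1 by omega) with hY | hY
  · exact H X Y (by omega) hY ht
  by_cases htop : affineSpan ℝ (a '' ↑(Y \ X)) = ⊤
  · exact transfer_of_affineSpan_eq_top hkd H hX hY htop ht
  obtain ⟨X', Y', hX', hY', hs, ht'⟩ := ht.exists_strictly_coarser hspan htop
  refine ht.of_coarser ht' hX' hY' ?_
  rcases hs with hs | hs
  · exact ih X' hs Y' ((card_lt_card hs).trans hX) (hkY.trans_le (card_le_card hY')) ht'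
  · exact H X' Y' (by have := card_le_card hX'; omega) (by have := card_lt_card hs; omega) ht'

end Levels

theorem sameHyp_iff {n d k : ℕ} {a : Fin n → Fin d → ℝ} {w w' : Fin n → ℝ} :
    SameHyp a w w' k ↔ TransfersAt a w w' k ∧ TransfersAt a w' w k := by
  have hiff : ∀ {w X Y}, IsWTileOn a w univ X Y ↔ IsTile a w X Y := isTileOn_univ_iff
  simp only [SameHyp, SameHypOn, hiff, subset_univ, forall_const]
  exact ⟨fun h => ⟨fun X Y hX hY ht => (h X Y ht.subset hX hY).1 ht,
    fun X Y hX hY ht => (h X Y ht.subset hX hY).2 ht⟩,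
    fun ⟨h, h'⟩ X Y _ hX hY => ⟨h X Y hX hY, h' X Y hX hY⟩⟩

end Hypersimplicial

open Hypersimplicial

theorem hypersecondary_eq_sum_with_deletions {n d : ℕ} (a : Fin n → (Fin d → ℝ))
    (hspan : affineSpan ℝ (Set.range a) = ⊤)
    (k : ℕ) (hk1 : 1 ≤ k) (hk2 : k ≤ d)
    (w w' : Fin n → ℝ) :
    SameHyp a w w' (k + 1) ↔
      (SameHyp a w w' k ∧ ∀ x : Fin n, SameHypOn a w w' {x}ᶜ k) := by
  have hkd : k ≤ finrank ℝ (Fin d → ℝ) := by rwa [finrank_fin_fun]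
  rw [sameHyp_iff, sameHyp_iff]
  constructor
  · rintro ⟨h, h'⟩
    have hk := h.of_succ hspan hkd
    have hk' := h'.of_succ hspan hkd
    exact ⟨⟨hk, hk'⟩, fun x X Y _ hY hX hkY =>
      ⟨IsTileOn.transfer_compl_singleton hk h hY hX hkY,
        IsTileOn.transfer_compl_singleton hk' h' hY hX hkY⟩⟩
  · rintro ⟨⟨hk, hk'⟩, hdel⟩
    exact ⟨hk.succ hk' hk1 fun x X Y hXY hY hX hkY => (hdel x X Y hXY hY hX hkY).1,
      hk'.succ hk hk1 fun x X Y hXY hY hX hkY => (hdel x X Y hXY hY hX hkY).2⟩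
end

section
/- Let a : Fin n → ℝ^d be a point configuration whose points affinely span ℝ^d, with n > d+2, and let 1 ≤ k ≤ d. Then for all weight vectors w, w' : Fin n → ℝ, the following are equivalent: (i) w and w' induce the same coherent hypersimplicial subdivision at level k+1 of a; (ii) for every x ∈ Fin n, w and w' induce the same coherent hypersimplicial subdivision at level k of the restricted configuration a|_{Fin n \ {x}}. (This says that F^{(k+1)}(A) is normally equivalent to Σ_{x} F^{(k)}(A_{[n]\x}).) -/
/-!
Write `Z = Y \ X` for the points lying on the lifting hyperplane of a tile `[X, Y]`.

*Climbing.* If `Z` does not affinely span, tilt a witness `f` of the tile along an affine `h`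
vanishing on `Z` until the first new point reaches the level: this gives a tile
`[X \ C, Y ∪ C]` with a strictly larger zero set, still covering the relevant level, and any
witness of it for another weight vector, tilted slightly back along `-h`, witnesses `[X, Y]`
again. So both directions reduce to tiles whose zero set spans.

*From `k + 1` to the deletions.* A tile of `a|_{[n] \ x}` covering level `k` becomes, after
reinserting `x` on the side where the witness places it, a tile of `a` with `|X| ≤ k < |Y|`. If
it covers level `k + 1` we are done; otherwise `|Y| = k + 1`, and when `Z` spans this forces
`X = ∅`, `k = d` and `Y` an affine basis. For `j ∉ Y` pick `i ∈ Y` whose barycentric coordinate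
at `a j` is positive; climbing along that coordinate from `[{i}, Y]` produces a tile covering
level `d + 1`, and comparing its transferred witness with the interpolant of `w'` on `Y` shows
that `a j` lies strictly below.

*From the deletions to `k + 1`.* If `Z` spans, it contains a spanning `T` of at most `d + 1`
points. Deleting a point `y` gives a tile of `a|_{[n] \ y}` covering level `k` as soon as
`|X \ {y}| < k`, so the transferred witnesses `g_y` for two such `y ∉ T` agree on `T`, hence
coincide, and together see every point. When no two such `y` exist, `X = {x₀}` and `k = 1`:
then `g_{x₀}` must put `x₀` strictly above the level, since otherwise its tile on
`a|_{[n] \ x₁}` for some `x₁ ∉ T ∪ {x₀}` would transfer back to a witness for `w` agreeing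
with the original one on `T`, but not at `x₀`.
-/

open Finset Module SignType

section Signs

open Filter Topology

lemma sign_eq_of_mul_pos {α : Type*} [Ring α] [LinearOrder α] [IsStrictOrderedRing α]
    {x y : α} (h : 0 < x * y) : sign y = sign x := by
  rcases pos_and_pos_or_neg_and_neg_of_mul_pos h with ⟨hx, hy⟩ | ⟨hx, hy⟩
  · rw [sign_pos hx, sign_pos hy]
  · rw [sign_neg hx, sign_neg hy]

lemma eventually_sign_add_mul (α β : ℝ) :
    ∀ᶠ t in 𝓝[>] (0 : ℝ), sign (α + t * β) = if α = 0 then sign β else sign α := by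
  have hlim : Tendsto (fun t : ℝ => α + t * β) (𝓝[>] 0) (𝓝 α) := by
    have : Continuous fun t : ℝ => α + t * β := by fun_prop
    simpa using (this.tendsto 0).mono_left nhdsWithin_le_nhds
  rcases lt_trichotomy α 0 with hα | rfl | hα
  · filter_upwards [hlim.eventually (gt_mem_nhds hα)] with t ht
    rw [if_neg hα.ne, sign_neg ht, sign_neg hα]
  · filter_upwards [self_mem_nhdsWithin] with t (ht : 0 < t)
    rw [if_pos rfl, zero_add, sign_mul, sign_pos ht, one_mul]
  · filter_upwards [hlim.eventually (lt_mem_nhds hα)] with t ht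
    rw [if_neg hα.ne', sign_pos ht, sign_pos hα]

variable {ι : Type*}

lemma exists_pos_sign_add_mul (s : Finset ι) (α β : ι → ℝ) :
    ∃ t > 0, ∀ i ∈ s, sign (α i + t * β i) = if α i = 0 then sign (β i) else sign (α i) :=
  (((eventually_all_finset s).2 fun i _ => eventually_sign_add_mul (α i) (β i)).and
    self_mem_nhdsWithin).exists.imp fun _ h => ⟨h.2, h.1⟩

lemma exists_pos_first_root {s : Finset ι} {α β : ι → ℝ} (h : ∃ i ∈ s, α i * β i < 0) :
    ∃ t > 0, (∀ i ∈ s, 0 ≤ α i * (α i + t * β i)) ∧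
      ∃ i ∈ s, α i * β i < 0 ∧ α i + t * β i = 0 := by
  classical
  obtain ⟨i₀, hi₀, hmin⟩ := (s.filter fun i => α i * β i < 0).exists_min_image
    (fun i => -α i / β i) (by obtain ⟨i, hi, hneg⟩ := h; exact ⟨i, mem_filter.2 ⟨hi, hneg⟩⟩)
  obtain ⟨hi₀s, hi₀⟩ := mem_filter.1 hi₀
  have hβ₀ : β i₀ ≠ 0 := by rintro h; simp [h] at hi₀
  have ht : 0 < -α i₀ / β i₀ := by
    rw [show -α i₀ / β i₀ = -(α i₀ * β i₀) / β i₀ ^ 2 by field_simp]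
    exact div_pos (neg_pos.2 hi₀) (by positivity)
  have hroot : α i₀ + -α i₀ / β i₀ * β i₀ = 0 := by rw [div_mul_cancel₀ _ hβ₀]; ring
  generalize -α i₀ / β i₀ = t at ht hroot hmin
  refine ⟨t, ht, fun i hi => ?_, i₀, hi₀s, hi₀, hroot⟩
  by_cases hneg : α i * β i < 0
  · have hβ : β i ≠ 0 := by rintro h; simp [h] at hneg
    have e : -α i / β i * (α i * β i) = -α i ^ 2 := by field_simp
    have := mul_le_mul_of_nonpos_right (hmin i (mem_filter.2 ⟨hi, hneg⟩)) hneg.le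
    nlinarith
  · nlinarith [mul_nonneg ht.le (not_lt.1 hneg), sq_nonneg (α i)]

end Signs

section AffineSpan

variable {k V P ι : Type*} [Field k] [AddCommGroup V] [Module k V] [AddTorsor V P]

lemma exists_affineMap_ne_zero_of_affineSpan_ne_top {s : Set P} (h : affineSpan k s ≠ ⊤) :
    ∃ f : P →ᵃ[k] k, f ≠ 0 ∧ ∀ p ∈ s, f p = 0 := by
  rcases s.eq_empty_or_nonempty with rfl | ⟨p₀, hp₀⟩
  · obtain ⟨p⟩ := AddTorsor.nonempty (G := V) (P := P)
    exact ⟨AffineMap.const k P 1, fun h1 => one_ne_zero (congrArg (· p) h1), by simp⟩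
  have hdir : (affineSpan k s).direction < ⊤ := by
    refine lt_top_iff_ne_top.2 fun htop => h ?_
    exact (AffineSubspace.direction_eq_top_iff_of_nonempty
      ((affineSpan_nonempty k).2 ⟨p₀, hp₀⟩)).1 htop
  obtain ⟨φ, hφ, hker⟩ := Submodule.exists_le_ker_of_lt_top _ hdir
  obtain ⟨v, hv⟩ : ∃ v, φ v ≠ 0 := by by_contra! h0; exact hφ (LinearMap.ext h0)
  refine ⟨φ.toAffineMap.comp (AffineEquiv.vaddConst k p₀).symm.toAffineMap, fun h0 => hv ?_,
    fun p hp => ?_⟩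
  · simpa using congrArg (· (v +ᵥ p₀)) h0
  · simpa using hker (AffineSubspace.vsub_mem_direction (subset_affineSpan k s hp)
      (subset_affineSpan k s hp₀))

variable {a : ι → P} {S : Finset ι}

lemma finrank_add_one_le_card_of_affineSpan_eq_top_s8 (h : affineSpan k (a '' S) = ⊤) :
    finrank k V + 1 ≤ #S := by
  classical
  obtain ⟨m, hm⟩ : ∃ m, #S = m + 1 := by
    refine Nat.exists_eq_succ_of_ne_zero (card_ne_zero.2 (nonempty_iff_ne_empty.2 ?_))
    rintro rfl
    simp at h
  have := finrank_vectorSpan_image_finset_le k a S hm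
  rw [coe_image, ← direction_affineSpan, h, AffineSubspace.direction_top, finrank_top] at this
  omega

lemma exists_subset_card_le_affineSpan_eq_top [FiniteDimensional k V]
    (h : affineSpan k (a '' S) = ⊤) :
    ∃ T ⊆ S, #T ≤ finrank k V + 1 ∧ affineSpan k (a '' T) = ⊤ := by
  classical
  obtain ⟨t, hts, hspan, hind⟩ := exists_affineIndependent k V (a '' S)
  have htfin : t.Finite := (S.finite_toSet.image a).subset hts
  obtain ⟨T, hTS, hinj, himg⟩ := exists_subset_injOn_image_eq_of_surjOn (f := a) (↑S)
    htfin.toFinset (by simpa [Set.SurjOn] using hts)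
  have : Fintype t := htfin.fintype
  refine ⟨T, by exact_mod_cast hTS, ?_, ?_⟩
  · rw [← card_image_of_injOn hinj, himg, htfin.card_toFinset]
    exact hind.card_le_finrank_succ.trans (by gcongr; exact Submodule.finrank_le _)
  · rw [← coe_image, himg, Set.Finite.coe_toFinset, hspan, h]

lemma affineIndependent_of_affineSpan_eq_top_of_card_eq (h : affineSpan k (a '' S) = ⊤)
    (hc : #S = finrank k V + 1) : AffineIndependent k fun i : S => a i := by
  have hrange : Set.range (fun i : S => a i) = a '' S := by ext; simp
  rw [affineIndependent_iff_le_finrank_vectorSpan k _ (by simpa using hc), hrange,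
    ← direction_affineSpan, h, AffineSubspace.direction_top, finrank_top]

variable [DecidableEq ι] {b : AffineBasis S k P}

lemma AffineBasis.coord_apply_of_mem (hb : ∀ i, b i = a i) (i : S) {q : ι} (hq : q ∈ S) :
    b.coord i (a q) = if (i : ι) = q then 1 else 0 := by
  rw [← hb ⟨q, hq⟩, b.coord_apply]
  simp [Subtype.ext_iff]

lemma AffineBasis.exists_affineMap_apply_eq (hb : ∀ i, b i = a i) (u : ι → k) :
    ∃ g : P →ᵃ[k] k, ∀ q ∈ S, g (a q) = u q := by
  refine ⟨∑ i : S, u i • b.coord i, fun q hq => ?_⟩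
  have heval : (∑ i : S, u i • b.coord i) (a q) = ∑ i : S, u i * b.coord i (a q) :=
    map_sum (AddMonoidHom.mk' (fun g : P →ᵃ[k] k => g (a q)) fun _ _ => rfl) _ _
  simp only [heval, b.coord_apply_of_mem hb _ hq, mul_ite, mul_one, mul_zero]
  rw [univ_eq_attach, sum_attach S fun i => if i = q then u i else 0]
  simp [hq]

end AffineSpan

lemma exists_affineMap_mul_neg {ι V P : Type*} [AddCommGroup V] [Module ℝ V] [AddTorsor V P]
    {a : ι → P} (hspan : affineSpan ℝ (Set.range a) = ⊤) {S : Set ι}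
    (hS : affineSpan ℝ (a '' S) ≠ ⊤) {α : ι → ℝ} (hα : ∀ i, α i = 0 → i ∈ S) :
    ∃ h : P →ᵃ[ℝ] ℝ, (∀ i ∈ S, h (a i) = 0) ∧ ∃ i, α i * h (a i) < 0 := by
  obtain ⟨h, hne, hS⟩ := exists_affineMap_ne_zero_of_affineSpan_ne_top hS
  obtain ⟨i, hi⟩ : ∃ i, h (a i) ≠ 0 := by
    by_contra! h0
    exact hne (AffineMap.ext_on hspan (by rintro _ ⟨i, rfl⟩; simp [h0]))
  have hαi : α i ≠ 0 := fun h0 => hi (hS _ (Set.mem_image_of_mem a (hα i h0)))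
  rcases (mul_ne_zero hαi hi).lt_or_gt with hneg | hpos
  · exact ⟨h, fun j hj => hS _ (Set.mem_image_of_mem a hj), i, hneg⟩
  · refine ⟨-h, fun j hj => by simp [hS _ (Set.mem_image_of_mem a hj)], i, ?_⟩
    simpa using hpos

section Tiles

variable {ι V P : Type*} [DecidableEq ι] [AddCommGroup V] [Module ℝ V] [AddTorsor V P]

def tileSign (X Y : Finset ι) (i : ι) : SignType :=
  if i ∈ X then 1 else if i ∈ Y then 0 else -1

lemma tileSign_eq_zero_iff {X Y : Finset ι} {i : ι} : tileSign X Y i = 0 ↔ i ∈ Y \ X := by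
  unfold tileSign; split_ifs <;> simp_all

lemma tileSign_sdiff_union (X Y C : Finset ι) (i : ι) :
    tileSign (X \ C) (Y ∪ C) i = if i ∈ C then 0 else tileSign X Y i := by
  unfold tileSign; split_ifs <;> simp_all

lemma tileSign_erase {X Y : Finset ι} {i y : ι} (h : i ≠ y) :
    tileSign (X.erase y) (Y.erase y) i = tileSign X Y i := by
  simp [tileSign, h]

/-- `f` witnesses `[X, Y]` as a `w`-tile of `a|_J`, in sign-vector form so that perturbations of
`f` can be followed point by point. -/
def RealizesTile (a : ι → P) (w : ι → ℝ) (J X Y : Finset ι) (f : P →ᵃ[ℝ] ℝ) : Prop :=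
  ∀ i ∈ J, sign (f (a i) - w i) = tileSign X Y i

variable {a : ι → P} {w : ι → ℝ} {J X Y X' Y' : Finset ι} {f g g' h : P →ᵃ[ℝ] ℝ}

lemma RealizesTile.eq_of_mem {i : ι} (hf : RealizesTile a w J X Y f) (hi : i ∈ J)
    (hZ : i ∈ Y \ X) : f (a i) = w i :=
  sub_eq_zero.1 (sign_eq_zero_iff.1 ((hf i hi).trans (tileSign_eq_zero_iff.2 hZ)))

lemma RealizesTile.exists_add_smul (hg : RealizesTile a w J X' Y' g)
    (hXY : ∀ i ∈ J, tileSign X Y i =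
      if tileSign X' Y' i = 0 then sign (h (a i)) else tileSign X' Y' i) :
    ∃ s : ℝ, 0 < s ∧ RealizesTile a w J X Y (g + s • h) := by
  obtain ⟨s, hs, hsign⟩ := exists_pos_sign_add_mul J (fun i => g (a i) - w i) (fun i => h (a i))
  refine ⟨s, hs, fun i hi => ?_⟩
  rw [AffineMap.coe_add, AffineMap.coe_smul, Pi.add_apply, Pi.smul_apply, smul_eq_mul,
    add_sub_right_comm, hsign i hi, hXY i hi, ← hg i hi]
  simp only [sign_eq_zero_iff]

lemma RealizesTile.exists_climb (hf : RealizesTile a w J X Y f)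
    (hZ : ∀ i ∈ Y \ X, h (a i) = 0) (hK : ∃ i ∈ J, (f (a i) - w i) * h (a i) < 0) :
    ∃ C : Finset ι, C.Nonempty ∧ (∀ i ∈ C, (f (a i) - w i) * h (a i) < 0) ∧
      (∃ f', RealizesTile a w J (X \ C) (Y ∪ C) f') ∧
      ∀ w' : ι → ℝ, ∀ g, RealizesTile a w' J (X \ C) (Y ∪ C) g →
        ∃ g', RealizesTile a w' J X Y g' := by
  obtain ⟨t, ht, hnonneg, i₀, hi₀J, hi₀, hroot⟩ := exists_pos_first_root hK
  set C := J.filter fun i => (f (a i) - w i) * h (a i) < 0 ∧ f (a i) - w i + t * h (a i) = 0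
  refine ⟨C, ⟨i₀, mem_filter.2 ⟨hi₀J, hi₀, hroot⟩⟩,
    fun i hi => (mem_filter.1 hi).2.1, ⟨f + t • h, fun i hi => ?_⟩, fun w' g hg => ?_⟩
  · simp only [AffineMap.coe_add, AffineMap.coe_smul, Pi.add_apply, Pi.smul_apply, smul_eq_mul,
      add_sub_right_comm, tileSign_sdiff_union]
    split_ifs with hiC
    · rw [(mem_filter.1 hiC).2.2, sign_zero]
    rw [← hf i hi]
    by_cases hα : f (a i) - w i = 0
    · rw [hα, hZ i (tileSign_eq_zero_iff.1 (by rw [← hf i hi, hα, sign_zero]))]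
      simp
    refine sign_eq_of_mul_pos (lt_of_le_of_ne (hnonneg i hi) (Ne.symm fun h0 => hiC ?_))
    have hroot' := (mul_eq_zero.1 h0).resolve_left hα
    refine mem_filter.2 ⟨hi, ?_, hroot'⟩
    nlinarith [sq_pos_of_ne_zero hα]
  have hsigns : ∀ i ∈ J, tileSign X Y i = if tileSign (X \ C) (Y ∪ C) i = 0
      then sign ((-h) (a i)) else tileSign (X \ C) (Y ∪ C) i := by
    intro i hi
    rw [tileSign_sdiff_union]
    by_cases hiC : i ∈ C
    · obtain ⟨-, hneg, -⟩ := mem_filter.1 hiC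
      rw [if_pos hiC, if_pos rfl, ← hf i hi, AffineMap.coe_neg, Pi.neg_apply]
      exact (sign_eq_of_mul_pos (by rw [mul_neg]; linarith)).symm
    rw [if_neg hiC]
    split_ifs with hi0
    · rw [hi0, AffineMap.coe_neg, Pi.neg_apply, hZ i (tileSign_eq_zero_iff.1 hi0), neg_zero,
        sign_zero]
    · rfl
  obtain ⟨s, -, hs⟩ := hg.exists_add_smul hsigns
  exact ⟨_, hs⟩

lemma RealizesTile.of_compl_pair [Fintype ι] {y y' : ι} {T : Finset ι}
    (hg : RealizesTile a w {y}ᶜ X Y g) (hg' : RealizesTile a w {y'}ᶜ X Y g') (hne : y ≠ y')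
    (hT : affineSpan ℝ (a '' T) = ⊤) (hTZ : T ⊆ Y \ X) (hyT : y ∉ T) (hy'T : y' ∉ T) :
    RealizesTile a w univ X Y g := by
  have hgg' : g = g' := by
    refine AffineMap.ext_on hT ?_
    rintro _ ⟨i, hi, rfl⟩
    have hiy : i ≠ y := fun h => hyT (h ▸ hi)
    have hiy' : i ≠ y' := fun h => hy'T (h ▸ hi)
    rw [hg.eq_of_mem (by simpa using hiy) (hTZ hi), hg'.eq_of_mem (by simpa using hiy') (hTZ hi)]
  intro i _
  by_cases hiy : i = y
  · subst hiy; rw [hgg']; exact hg' i (by simpa using hne)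
  · exact hg i (by simpa using hiy)

end Tiles

section Hypersimplicial

variable {n d : ℕ} {a : Fin n → Fin d → ℝ} {w w' : Fin n → ℝ} {J X Y : Finset (Fin n)}
  {k : ℕ} {f g v : (Fin d → ℝ) →ᵃ[ℝ] ℝ}

lemma isWTileOn_iff_exists_realizesTile (hXY : X ⊆ Y) (hYJ : Y ⊆ J) :
    IsWTileOn a w J X Y ↔ ∃ f, RealizesTile a w J X Y f := by
  constructor
  · rintro ⟨f, hX, hZ, hM⟩
    refine ⟨f, fun i hi => ?_⟩
    unfold tileSign
    split_ifs with h1 h2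
    · exact sign_pos (sub_pos.2 (hX i h1))
    · rw [hZ i (mem_sdiff.2 ⟨h2, h1⟩), sub_self, sign_zero]
    · exact sign_neg (sub_neg.2 (hM i (mem_sdiff.2 ⟨hi, h2⟩)))
  · rintro ⟨f, hf⟩
    refine ⟨f, fun i hi => ?_, fun i hi => hf.eq_of_mem (hYJ (mem_sdiff.1 hi).1) hi,
      fun i hi => ?_⟩
    · simpa [tileSign, hi, sign_eq_one_iff] using hf i (hYJ (hXY hi))
    · obtain ⟨hiJ, hiY⟩ := mem_sdiff.1 hi
      have hiX : i ∉ X := fun h => hiY (hXY h)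
      simpa [tileSign, hiY, hiX, sign_eq_neg_one_iff] using hf i hiJ

lemma SameHypOn.symm (H : SameHypOn a w w' J k) : SameHypOn a w' w J k :=
  fun X Y hXY hYJ hX hY => (H X Y hXY hYJ hX hY).symm

lemma isWTileOn_filter (f : (Fin d → ℝ) →ᵃ[ℝ] ℝ) :
    IsWTileOn a w J (J.filter fun i => w i < f (a i)) (J.filter fun i => w i ≤ f (a i)) := by
  refine ⟨f, fun i hi => (mem_filter.1 hi).2, fun i hi => ?_, fun i hi => ?_⟩
  · simp only [mem_sdiff, mem_filter, not_and, not_lt] at hi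
    exact le_antisymm (hi.2 hi.1.1) hi.1.2
  · simp only [mem_sdiff, mem_filter, not_and, not_le] at hi
    exact hi.2 hi.1

lemma RealizesTile.filter_lt_eq (hf : RealizesTile a w J X Y f) (hXJ : X ⊆ J) :
    J.filter (fun i => w i < f (a i)) = X := by
  ext i
  by_cases hi : i ∈ J
  · rw [mem_filter, ← sub_pos, ← sign_eq_one_iff, hf i hi, tileSign]
    split_ifs <;> simp_all
  · simp only [mem_filter, hi, false_and, false_iff]
    exact fun h => hi (hXJ h)

lemma RealizesTile.filter_le_eq (hf : RealizesTile a w J X Y f) (hXY : X ⊆ Y) (hYJ : Y ⊆ J) :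
    J.filter (fun i => w i ≤ f (a i)) = Y := by
  ext i
  by_cases hi : i ∈ J
  · rw [mem_filter, ← sub_nonneg, ← not_lt, ← sign_eq_neg_one_iff, hf i hi, tileSign]
    have := @hXY i
    split_ifs <;> simp_all
  · simp only [mem_filter, hi, false_and, false_iff]
    exact fun h => hi (hYJ h)

lemma IsWTileOn.erase (h : IsWTileOn a w J X Y) (y : Fin n) :
    IsWTileOn a w (J.erase y) (X.erase y) (Y.erase y) := by
  obtain ⟨f, hX, hZ, hM⟩ := h
  refine ⟨f, fun i hi => hX i (mem_of_mem_erase hi), fun i hi => hZ i ?_, fun i hi => hM i ?_⟩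
  · simp only [mem_sdiff, mem_erase] at hi ⊢; tauto
  · simp only [mem_sdiff, mem_erase] at hi ⊢; tauto

lemma isWTileOn_univ_imp_of_spanning (hspan : affineSpan ℝ (Set.range a) = ⊤)
    (p : Finset (Fin n) → Finset (Fin n) → Prop)
    (hp : ∀ ⦃X Y X' Y'⦄, p X Y → X' ⊆ X → Y ⊆ Y' → p X' Y')
    (hspanning : ∀ ⦃X Y⦄, X ⊆ Y → p X Y → affineSpan ℝ (a '' ↑(Y \ X)) = ⊤ →
      IsWTileOn a w univ X Y → IsWTileOn a w' univ X Y)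
    (hXY : X ⊆ Y) (hpXY : p X Y) : IsWTileOn a w univ X Y → IsWTileOn a w' univ X Y := by
  generalize hm : #(Y \ X)ᶜ = m
  induction m using Nat.strong_induction_on generalizing X Y with
  | _ m ih =>
  intro hw
  by_cases hZ : affineSpan ℝ (a '' ↑(Y \ X)) = ⊤
  · exact hspanning hXY hpXY hZ hw
  obtain ⟨f, hf⟩ := (isWTileOn_iff_exists_realizesTile hXY (subset_univ _)).1 hw
  obtain ⟨h, hZh, i, hi⟩ := exists_affineMap_mul_neg hspan hZ (α := fun i => f (a i) - w i)
    fun i hi => tileSign_eq_zero_iff.1 (by rw [← hf i (mem_univ _), hi, sign_zero])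
  obtain ⟨C, ⟨c, hc⟩, hC, ⟨f', hf'⟩, hback⟩ := hf.exists_climb hZh ⟨i, mem_univ _, hi⟩
  have hcZ : c ∉ Y \ X := fun hcZ => by simpa [hZh c hcZ] using hC c hc
  have hsub : X \ C ⊆ Y ∪ C := fun i hi => mem_union_left _ (hXY (mem_sdiff.1 hi).1)
  have hlt : #((Y ∪ C) \ (X \ C))ᶜ < m := by
    rw [← hm]
    refine card_lt_card (compl_ssubset_compl.2 (Finset.ssubset_iff_subset_ne.2 ⟨?_, ?_⟩))
    · intro i hi; simp only [mem_sdiff, mem_union] at hi ⊢; tauto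
    · rintro hEq
      exact hcZ (hEq ▸ mem_sdiff.2 ⟨mem_union_right _ hc, fun h => (mem_sdiff.1 h).2 hc⟩)
  have hw' := ih _ hlt hsub (hp hpXY sdiff_subset subset_union_left) rfl
    ((isWTileOn_iff_exists_realizesTile hsub (subset_univ _)).2 ⟨f', hf'⟩)
  obtain ⟨g, hg⟩ := (isWTileOn_iff_exists_realizesTile hsub (subset_univ _)).1 hw'
  exact (isWTileOn_iff_exists_realizesTile hXY (subset_univ _)).2 (hback w' g hg)

lemma exists_realizesTile_singleton_of_sameHyp (hd : 1 ≤ d) (H : SameHyp a w w' (d + 1))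
    (hcard : #Y = d + 1) {b : AffineBasis Y ℝ (Fin d → ℝ)} (hb : ∀ i, b i = a i)
    (hv : RealizesTile a w univ ∅ Y v) (i : Y) {j : Fin n} (hj : j ∉ Y)
    (hij : 0 < b.coord i (a j)) : ∃ g, RealizesTile a w' univ {↑i} Y g := by
  obtain ⟨s, hs, hvi⟩ := hv.exists_add_smul (X := {↑i}) (Y := Y) (h := b.coord i) fun q _ => by
    by_cases hq : q ∈ Y
    · simp only [tileSign, mem_singleton, hq, b.coord_apply_of_mem hb i hq, eq_comm]
      split_ifs <;> simp_all
    · have hqi : q ≠ ↑i := fun h => hq (h ▸ i.2)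
      simp [tileSign, hq, hqi]
  have hvj : (v + s • b.coord i) (a j) - w j < 0 := by
    have hji : j ≠ ↑i := fun h => hj (h ▸ i.2)
    simpa [tileSign, hj, hji, sign_eq_neg_one_iff] using hvi j (mem_univ _)
  obtain ⟨C, ⟨c, hc⟩, hC, ⟨f', hf'⟩, hback⟩ := hvi.exists_climb (h := b.coord i)
    (fun q hq => by
      obtain ⟨hqY, hqi⟩ := mem_sdiff.1 hq
      rw [b.coord_apply_of_mem hb i hqY, if_neg (fun h => hqi (by simp [h]))])
    ⟨j, mem_univ _, mul_neg_of_neg_of_pos hvj hij⟩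
  have hCY : Disjoint C Y := by
    refine disjoint_left.2 fun q hqC hqY => (hC q hqC).not_ge ?_
    rw [b.coord_apply_of_mem hb i hqY]
    split_ifs with hqi
    · subst hqi
      have hpos := hvi i (mem_univ _)
      simp only [tileSign, mem_singleton, if_true, sign_eq_one_iff] at hpos
      rw [mul_one]
      exact hpos.le
    · rw [mul_zero]
  have hsub : {↑i} \ C ⊆ Y ∪ C := sdiff_subset.trans (by simp [i.2])
  have hcover : d + 1 < #(Y ∪ C) := by
    rw [card_union_of_disjoint hCY.symm, hcard]
    have := card_pos.2 ⟨c, hc⟩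
    omega
  have htile := (H _ _ hsub (subset_univ _) ((card_le_card sdiff_subset).trans_lt
    (by simp; omega)) hcover).1
    ((isWTileOn_iff_exists_realizesTile hsub (subset_univ _)).2 ⟨f', hf'⟩)
  obtain ⟨g, hg⟩ := (isWTileOn_iff_exists_realizesTile hsub (subset_univ _)).1 htile
  exact hback w' g hg

lemma isWTileOn_empty_of_sameHyp_of_card_eq (hd : 1 ≤ d) (H : SameHyp a w w' (d + 1))
    (hY : affineSpan ℝ (a '' Y) = ⊤) (hcard : #Y = d + 1) (hw : IsWTileOn a w univ ∅ Y) :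
    IsWTileOn a w' univ ∅ Y := by
  have hrange : Set.range (fun i : Y => a i) = a '' Y := by ext; simp
  let b : AffineBasis Y ℝ (Fin d → ℝ) :=
    ⟨fun i => a i, affineIndependent_of_affineSpan_eq_top_of_card_eq hY
      (by rw [finrank_fin_fun, hcard]), hrange ▸ hY⟩
  have hb : ∀ i, b i = a i := fun _ => rfl
  obtain ⟨v, hv⟩ := (isWTileOn_iff_exists_realizesTile (empty_subset _) (subset_univ _)).1 hw
  obtain ⟨g, hgY⟩ := b.exists_affineMap_apply_eq hb w'
  refine ⟨g, by simp, fun q hq => hgY q (by simpa using hq), fun j hj => ?_⟩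
  have hjY : j ∉ Y := (mem_sdiff.1 hj).2
  obtain ⟨i, hi⟩ : ∃ i, 0 < b.coord i (a j) := by
    by_contra! h
    linarith [b.sum_coord_apply_eq_one (a j), sum_nonpos fun i (_ : i ∈ univ) => h i]
  obtain ⟨g₁, hg₁⟩ := exists_realizesTile_singleton_of_sameHyp hd H hcard hb hv i hjY hi
  have hg₁i : w' i < g₁ (a i) := by simpa [tileSign, sign_eq_one_iff] using hg₁ i (mem_univ _)
  have hg₁j : g₁ (a j) < w' j := by
    have hji : j ≠ ↑i := fun h => hjY (h ▸ i.2)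
    simpa [tileSign, hjY, hji, sign_eq_neg_one_iff] using hg₁ j (mem_univ _)
  have hg₁eq : g₁ = g + (g₁ (a i) - w' i) • b.coord i := by
    refine AffineMap.ext_on hY ?_
    rintro _ ⟨q, hq : q ∈ Y, rfl⟩
    simp only [AffineMap.coe_add, AffineMap.coe_smul, Pi.add_apply, Pi.smul_apply, smul_eq_mul,
      hgY q hq, b.coord_apply_of_mem hb i hq]
    split_ifs with hqi
    · rw [← hqi]; ring
    · rw [hg₁.eq_of_mem (mem_univ _) (by simp [hq, Ne.symm hqi])]; ring
  have hj₁ := congrArg (· (a j)) hg₁eq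
  simp only [AffineMap.coe_add, AffineMap.coe_smul, Pi.add_apply, Pi.smul_apply,
    smul_eq_mul] at hj₁
  nlinarith

lemma isWTileOn_of_sameHyp_of_card_le (hspan : affineSpan ℝ (Set.range a) = ⊤) (hk1 : 1 ≤ k)
    (hk2 : k ≤ d) (H : SameHyp a w w' (k + 1)) (hXY : X ⊆ Y) (hX : #X ≤ k)
    (hY : k + 1 ≤ #Y) : IsWTileOn a w univ X Y → IsWTileOn a w' univ X Y := by
  refine isWTileOn_univ_imp_of_spanning hspan (fun X Y => #X ≤ k ∧ k + 1 ≤ #Y)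
    (fun _ _ _ _ h hX hY => ⟨(card_le_card hX).trans h.1, h.2.trans (card_le_card hY)⟩)
    (fun X Y hXY h hZ hw => ?_) hXY ⟨hX, hY⟩
  rcases h.2.lt_or_eq with hlt | heq
  · exact (H X Y hXY (subset_univ _) (by omega) hlt).1 hw
  have hZcard := finrank_add_one_le_card_of_affineSpan_eq_top_s8 hZ
  rw [finrank_fin_fun, card_sdiff_of_subset hXY] at hZcard
  obtain rfl : X = ∅ := card_eq_zero.1 (by omega)
  obtain rfl : k = d := by omega
  exact isWTileOn_empty_of_sameHyp_of_card_eq hk1 H (by simpa using hZ) heq.symm hw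

lemma isWTileOn_compl_of_sameHyp (hspan : affineSpan ℝ (Set.range a) = ⊤) (hk1 : 1 ≤ k)
    (hk2 : k ≤ d) (H : SameHyp a w w' (k + 1)) {x : Fin n} (hXY : X ⊆ Y) (hYx : Y ⊆ {x}ᶜ)
    (hX : #X < k) (hY : k < #Y) (hw : IsWTileOn a w {x}ᶜ X Y) : IsWTileOn a w' {x}ᶜ X Y := by
  obtain ⟨f, hf⟩ := (isWTileOn_iff_exists_realizesTile hXY hYx).1 hw
  have hX₁ : (univ.filter fun i => w i < f (a i)).erase x = X := by
    rw [← filter_erase, ← compl_singleton, hf.filter_lt_eq (hXY.trans hYx)]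
  have hY₁ : (univ.filter fun i => w i ≤ f (a i)).erase x = Y := by
    rw [← filter_erase, ← compl_singleton, hf.filter_le_eq hXY hYx]
  have hw₁ := isWTileOn_of_sameHyp_of_card_le hspan hk1 hk2 H
    (monotone_filter_right _ fun i _ (h : w i < f (a i)) => h.le) ?_ ?_ (isWTileOn_filter f)
  · simpa only [← compl_singleton, hX₁, hY₁] using hw₁.erase x
  · have := pred_card_le_card_erase (s := univ.filter fun i => w i < f (a i)) (a := x)
    rw [hX₁] at this
    omega
  · exact hY.trans_le (hY₁ ▸ card_erase_le)

lemma SameHyp.sameHypOn_compl (hspan : affineSpan ℝ (Set.range a) = ⊤) (hk1 : 1 ≤ k)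
    (hk2 : k ≤ d) (H : SameHyp a w w' (k + 1)) (x : Fin n) : SameHypOn a w w' {x}ᶜ k :=
  fun _ _ hXY hYx hX hY => ⟨isWTileOn_compl_of_sameHyp hspan hk1 hk2 H hXY hYx hX hY,
    isWTileOn_compl_of_sameHyp hspan hk1 hk2 (SameHypOn.symm H) hXY hYx hX hY⟩

lemma SameHypOn.exists_realizesTile_compl {y : Fin n} (H : SameHypOn a w w' {y}ᶜ k)
    (hXY : X ⊆ Y) (hX : #(X.erase y) < k) (hY : k + 1 < #Y) (hw : IsWTileOn a w univ X Y) :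
    ∃ g, RealizesTile a w' {y}ᶜ X Y g := by
  have hsub : X.erase y ⊆ Y.erase y := erase_subset_erase y hXY
  have hYy : Y.erase y ⊆ {y}ᶜ := compl_singleton y ▸ erase_subset_erase y (subset_univ Y)
  have hw' := (H _ _ hsub hYy hX (by have := pred_card_le_card_erase (s := Y) (a := y); omega)).1
    (compl_singleton y ▸ hw.erase y)
  obtain ⟨g, hg⟩ := (isWTileOn_iff_exists_realizesTile hsub hYy).1 hw'
  exact ⟨g, fun i hi => by rw [hg i hi, tileSign_erase (by simpa using hi)]⟩

lemma RealizesTile.of_compl_singleton {T : Finset (Fin n)} {x₀ x₁ : Fin n}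
    (H : SameHypOn a w w' {x₁}ᶜ k) (hk : 1 ≤ k) (hTk : k < #T)
    (hg : RealizesTile a w' {x₀}ᶜ {x₀} Y g) (hv : RealizesTile a w univ {x₀} Y v)
    (hT : affineSpan ℝ (a '' T) = ⊤) (hTZ : T ⊆ Y \ {x₀}) (hx₁T : x₁ ∉ T) (hx₁ : x₁ ≠ x₀) :
    RealizesTile a w' univ {x₀} Y g := by
  suffices hx₀ : w' x₀ < g (a x₀) by
    intro i _
    by_cases hi : i = x₀
    · subst hi; simpa [tileSign, sign_eq_one_iff] using hx₀
    · exact hg i (by simpa using hi)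
  by_contra! hle
  set Yg := ({x₁}ᶜ : Finset (Fin n)).filter fun i => w' i ≤ g (a i)
  have hXg : ({x₁}ᶜ : Finset (Fin n)).filter (fun i => w' i < g (a i)) = ∅ := by
    refine filter_eq_empty_iff.2 fun i _ hi => ?_
    by_cases hix : i = x₀
    · subst hix; linarith
    rw [← sub_pos, ← sign_eq_one_iff, hg i (by simpa using hix), tileSign,
      if_neg (by simpa using hix)] at hi
    split_ifs at hi
  have hTY : T ⊆ Yg := fun i hi => by
    have hix₀ : i ≠ x₀ := by simpa using (mem_sdiff.1 (hTZ hi)).2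
    refine mem_filter.2 ⟨by simpa using ne_of_mem_of_not_mem hi hx₁T, ?_⟩
    exact (hg.eq_of_mem (by simpa using hix₀) (hTZ hi)).ge
  have htile := isWTileOn_filter (a := a) (w := w') (J := {x₁}ᶜ) g
  rw [hXg] at htile
  obtain ⟨φ, -, hφZ, hφM⟩ := (H _ _ (empty_subset _) (filter_subset _ _) (by simp; omega)
    (hTk.trans_le (card_le_card hTY))).2 htile
  have hφv : φ = v := by
    refine AffineMap.ext_on hT ?_
    rintro _ ⟨i, hi : i ∈ T, rfl⟩
    rw [hφZ i (by rw [sdiff_empty]; exact hTY hi), hv.eq_of_mem (mem_univ _) (hTZ hi)]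
  have hφx₀ : φ (a x₀) ≤ w x₀ := by
    by_cases h : x₀ ∈ Yg
    · exact (hφZ x₀ (by rw [sdiff_empty]; exact h)).le
    · exact (hφM x₀ (mem_sdiff.2 ⟨by simpa using hx₁.symm, h⟩)).le
  have hvx₀ : w x₀ < v (a x₀) := by
    simpa [tileSign, sign_eq_one_iff] using hv x₀ (mem_univ _)
  rw [hφv] at hφx₀
  linarith

lemma isWTileOn_of_sameHypOn_compl_of_spanning (hn : d + 2 < n) (hk1 : 1 ≤ k) (hk2 : k ≤ d)
    (H : ∀ x, SameHypOn a w w' {x}ᶜ k) (hXY : X ⊆ Y) (hX : #X ≤ k) (hY : k + 1 < #Y)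
    (hZ : affineSpan ℝ (a '' ↑(Y \ X)) = ⊤) (hw : IsWTileOn a w univ X Y) :
    IsWTileOn a w' univ X Y := by
  obtain ⟨T, hTZ, hTcard, hT⟩ := exists_subset_card_le_affineSpan_eq_top hZ
  rw [finrank_fin_fun] at hTcard
  obtain ⟨y₁, hy₁, y₂, hy₂, hne⟩ := one_lt_card.1 (show 1 < #Tᶜ by
    rw [card_compl, Fintype.card_fin]; omega)
  rw [mem_compl] at hy₁ hy₂
  have hXT : ∀ x ∈ X, x ∉ T := fun x hx hxT => (mem_sdiff.1 (hTZ hxT)).2 hx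
  rw [isWTileOn_iff_exists_realizesTile hXY (subset_univ _)]
  rcases hX.lt_or_eq with hXk | hXk
  · obtain ⟨g₁, hg₁⟩ := (H y₁).exists_realizesTile_compl hXY (card_erase_le.trans_lt hXk) hY hw
    obtain ⟨g₂, hg₂⟩ := (H y₂).exists_realizesTile_compl hXY (card_erase_le.trans_lt hXk) hY hw
    exact ⟨g₁, hg₁.of_compl_pair hg₂ hne hT hTZ hy₁ hy₂⟩
  rcases hk1.lt_or_eq with hk | hk
  · obtain ⟨x, hx, x', hx', hne'⟩ := one_lt_card.1 (hXk ▸ hk)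
    obtain ⟨g₁, hg₁⟩ := (H x).exists_realizesTile_compl hXY
      (by rw [card_erase_of_mem hx]; omega) hY hw
    obtain ⟨g₂, hg₂⟩ := (H x').exists_realizesTile_compl hXY
      (by rw [card_erase_of_mem hx']; omega) hY hw
    exact ⟨g₁, hg₁.of_compl_pair hg₂ hne' hT hTZ (hXT x hx) (hXT x' hx')⟩
  obtain ⟨x₀, rfl⟩ := card_eq_one.1 (hXk.trans hk.symm)
  obtain ⟨g, hg⟩ := (H x₀).exists_realizesTile_compl hXY (by simp; omega) hY hw
  obtain ⟨v, hv⟩ := (isWTileOn_iff_exists_realizesTile hXY (subset_univ _)).1 hw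
  obtain ⟨x₁, hx₁T, hx₁⟩ : ∃ x₁ ∉ T, x₁ ≠ x₀ := by
    by_cases h : y₁ = x₀
    exacts [⟨y₂, hy₂, h ▸ hne.symm⟩, ⟨y₁, hy₁, h⟩]
  have hTk := finrank_add_one_le_card_of_affineSpan_eq_top_s8 hT
  rw [finrank_fin_fun] at hTk
  exact ⟨g, hg.of_compl_singleton (H x₁) hk1 (by omega) hv hT hTZ hx₁T hx₁⟩

lemma isWTileOn_univ_of_sameHypOn_compl (hspan : affineSpan ℝ (Set.range a) = ⊤)
    (hn : d + 2 < n) (hk1 : 1 ≤ k) (hk2 : k ≤ d) (H : ∀ x, SameHypOn a w w' {x}ᶜ k)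
    (hXY : X ⊆ Y) (hX : #X ≤ k) (hY : k + 1 < #Y) :
    IsWTileOn a w univ X Y → IsWTileOn a w' univ X Y :=
  isWTileOn_univ_imp_of_spanning hspan (fun X Y => #X ≤ k ∧ k + 1 < #Y)
    (fun _ _ _ _ h hX hY => ⟨(card_le_card hX).trans h.1, h.2.trans_le (card_le_card hY)⟩)
    (fun _ _ hXY h hZ => isWTileOn_of_sameHypOn_compl_of_spanning hn hk1 hk2 H hXY h.1 h.2 hZ)
    hXY ⟨hX, hY⟩

lemma sameHyp_of_forall_sameHypOn_compl (hspan : affineSpan ℝ (Set.range a) = ⊤)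
    (hn : d + 2 < n) (hk1 : 1 ≤ k) (hk2 : k ≤ d) (H : ∀ x, SameHypOn a w w' {x}ᶜ k) :
    SameHyp a w w' (k + 1) :=
  fun _ _ hXY _ hX hY =>
    ⟨isWTileOn_univ_of_sameHypOn_compl hspan hn hk1 hk2 H hXY (by omega) hY,
      isWTileOn_univ_of_sameHypOn_compl hspan hn hk1 hk2 (fun x => (H x).symm) hXY (by omega) hY⟩

end Hypersimplicial

theorem hypersecondary_eq_sum_of_deletions {n d : ℕ} (a : Fin n → (Fin d → ℝ))
    (hspan : affineSpan ℝ (Set.range a) = ⊤)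
    (hn : d + 2 < n)
    (k : ℕ) (hk1 : 1 ≤ k) (hk2 : k ≤ d)
    (w w' : Fin n → ℝ) :
    SameHyp a w w' (k + 1) ↔
      ∀ x : Fin n, SameHypOn a w w' {x}ᶜ k :=
  ⟨fun H => H.sameHypOn_compl hspan hk1 hk2, sameHyp_of_forall_sameHypOn_compl hspan hn hk1 hk2⟩
end

section
/- Let a : Fin n → ℝ^d be a point configuration, let w : Fin n → ℝ, let 1 ≤ k ≤ n−1, and let [X,Y] be a tile covering level k (i.e. |X| < k < |Y|). Then [X,Y] is a w-tile of a if and only if there exists an affine map g : ℝ^d → ℝ such that g(Σ_{i∈B} a i) = Σ_{i∈B} w i for every k-element subset B with X ⊆ B ⊆ Y, and g(Σ_{i∈B} a i) < Σ_{i∈B} w i for every k-element subset B ⊆ Fin n with ¬(X ⊆ B ⊆ Y). (In other words, the level-k slice of the coherent zonotopal tiling S(Z(A),w) is the coherent subdivision S(A^{(k)},w) of the configuration A^{(k)} = {Σ_{i∈B} a i : |B| = k} with weights B ↦ Σ_{i∈B} w i.) -/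
/-- The tile `[X,Y]` is a `w`-tile of the configuration `a`. -/
def IsWTile {n d : ℕ} (a : Fin n → (Fin d → ℝ)) (w : Fin n → ℝ)
    (X Y : Finset (Fin n)) : Prop :=
  ∃ f : (Fin d → ℝ) →ᵃ[ℝ] ℝ,
    (∀ i ∈ X, w i < f (a i)) ∧ (∀ i ∈ Y \ X, f (a i) = w i) ∧ (∀ i ∉ Y, f (a i) < w i)

private lemma affine_eval {d : ℕ} (f : (Fin d → ℝ) →ᵃ[ℝ] ℝ) (x : Fin d → ℝ) :
    f x = f.linear x + f 0 := by
  simpa using f.map_vadd 0 x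

theorem slice_of_coherent_tiling_is_coherent {n d : ℕ} (a : Fin n → (Fin d → ℝ))
    (w : Fin n → ℝ) (k : ℕ) (hk1 : 1 ≤ k) (hk2 : k ≤ n - 1)
    (X Y : Finset (Fin n)) (hXY : X ⊆ Y)
    (hcovX : X.card < k) (hcovY : k < Y.card) :
    IsWTile a w X Y ↔
      ∃ g : (Fin d → ℝ) →ᵃ[ℝ] ℝ,
        (∀ B : Finset (Fin n), B.card = k → X ⊆ B → B ⊆ Y →
          g (∑ i ∈ B, a i) = ∑ i ∈ B, w i) ∧
        (∀ B : Finset (Fin n), B.card = k → ¬(X ⊆ B ∧ B ⊆ Y) →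
          g (∑ i ∈ B, a i) < ∑ i ∈ B, w i) := by
  constructor
  · rintro ⟨f, hfX, hfYX, hfout⟩
    set s : Fin n → ℝ := fun i => f (a i) - w i with hs
    have hs_pos : ∀ i ∈ X, 0 < s i := fun i hi => by simp [hs, sub_pos, hfX i hi]
    have hs_zero : ∀ i ∈ Y \ X, s i = 0 := fun i hi => by
      simp [hs, sub_eq_zero, hfYX i hi]
    have hs_neg : ∀ i ∉ Y, s i < 0 := fun i hi => by
      simp [hs, sub_neg, hfout i hi]
    set c : ℝ := ∑ i ∈ X, s i with hc
    refine ⟨f.linear.toAffineMap + AffineMap.const ℝ (Fin d → ℝ) ((k : ℝ) * f 0 - c),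
      ?_, ?_⟩
    all_goals
      intro B hBcard
      have hgB : (f.linear.toAffineMap + AffineMap.const ℝ (Fin d → ℝ)
          ((k : ℝ) * f 0 - c)) (∑ i ∈ B, a i) = (∑ i ∈ B, w i) + (∑ i ∈ B, s i) - c := by
        have : f.linear (∑ i ∈ B, a i) = ∑ i ∈ B, (f (a i) - f 0) := by
          rw [map_sum]
          exact Finset.sum_congr rfl fun i _ => by rw [affine_eval f (a i)]; ring
        show f.linear (∑ i ∈ B, a i) + ((k : ℝ) * f 0 - c) = _
        rw [this, Finset.sum_sub_distrib, Finset.sum_const, hBcard]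
        have : ∀ i ∈ B, f (a i) = w i + s i := fun i _ => by simp [hs]
        rw [Finset.sum_congr rfl this, Finset.sum_add_distrib]
        simp only [nsmul_eq_mul]
        ring
    · intro hXB hBY
      rw [hgB]
      have : ∑ i ∈ B, s i = c := by
        rw [← Finset.sum_sdiff hXB, hc]
        have : ∑ i ∈ B \ X, s i = 0 := Finset.sum_eq_zero fun i hi => by
          have hiY : i ∈ Y \ X := by
            simp only [Finset.mem_sdiff] at hi ⊢
            exact ⟨hBY hi.1, hi.2⟩
          exact hs_zero i hiY
        rw [this, zero_add]
      rw [this]; ring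
    · intro hbad
      rw [hgB]
      have key : ∑ i ∈ B, s i < c := by
        rw [← Finset.sum_inter_add_sum_sdiff B X s, hc]
        by_cases hXB : X ⊆ B
        · -- then ¬ B ⊆ Y
          have hBY : ¬ B ⊆ Y := fun h => hbad ⟨hXB, h⟩
          obtain ⟨i₀, hi₀B, hi₀Y⟩ := Finset.not_subset.mp hBY
          have h1 : ∑ i ∈ B ∩ X, s i ≤ ∑ i ∈ X, s i :=
            Finset.sum_le_sum_of_subset_of_nonneg (Finset.inter_subset_right)
              (fun i hi hni => (hs_pos i hi).le)
          have h2 : ∑ i ∈ B \ X, s i < 0 := by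
            have := Finset.sum_lt_sum (f := s) (g := fun _ => (0:ℝ)) (s := B \ X)
              (fun i hi => by
                rcases Finset.mem_sdiff.mp hi with ⟨hiB, hiX⟩
                by_cases hiY : i ∈ Y
                · exact le_of_eq (hs_zero i (Finset.mem_sdiff.mpr ⟨hiY, hiX⟩))
                · exact (hs_neg i hiY).le)
              ⟨i₀, Finset.mem_sdiff.mpr ⟨hi₀B, fun h => hi₀Y (hXY h)⟩, hs_neg i₀ hi₀Y⟩
            simpa using this
          linarith
        · obtain ⟨i₀, hi₀X, hi₀B⟩ := Finset.not_subset.mp hXB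
          have h1 : ∑ i ∈ B ∩ X, s i < ∑ i ∈ X, s i :=
            Finset.sum_lt_sum_of_subset (Finset.inter_subset_right) hi₀X
              (fun h => hi₀B (Finset.mem_inter.mp h).1) (hs_pos i₀ hi₀X)
              (fun j hj _ => (hs_pos j hj).le)
          have h2 : ∑ i ∈ B \ X, s i ≤ 0 := Finset.sum_nonpos fun i hi => by
            rcases Finset.mem_sdiff.mp hi with ⟨hiB, hiX⟩
            by_cases hiY : i ∈ Y
            · exact le_of_eq (hs_zero i (Finset.mem_sdiff.mpr ⟨hiY, hiX⟩))
            · exact (hs_neg i hiY).le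
          linarith
      linarith
  · rintro ⟨g, hgood, hbad⟩
    set u : Fin n → ℝ := fun i => g.linear (a i) - w i with hu
    -- sum translation
    have hval : ∀ B : Finset (Fin n),
        g (∑ i ∈ B, a i) - ∑ i ∈ B, w i = (∑ i ∈ B, u i) + g 0 := by
      intro B
      rw [affine_eval g, map_sum]
      rw [show ∑ i ∈ B, g.linear (a i) = ∑ i ∈ B, (u i + w i) from
        Finset.sum_congr rfl fun i _ => by simp [hu]]
      rw [Finset.sum_add_distrib]
      ring
    have hSgood : ∀ B : Finset (Fin n), B.card = k → X ⊆ B → B ⊆ Y →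
        ∑ i ∈ B, u i = -g 0 := by
      intro B h1 h2 h3
      have := hval B
      rw [hgood B h1 h2 h3] at this
      linarith
    have hSbad : ∀ B : Finset (Fin n), B.card = k → ¬(X ⊆ B ∧ B ⊆ Y) →
        ∑ i ∈ B, u i < -g 0 := by
      intro B h1 h2
      have := hval B
      have := hbad B h1 h2
      linarith
    -- swap lemma
    have hswap : ∀ (B : Finset (Fin n)) (i j : Fin n), i ∈ B → j ∉ B →
        ∑ x ∈ insert j (B.erase i), u x = ∑ x ∈ B, u x - u i + u j ∧
        (insert j (B.erase i)).card = B.card := by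
      intro B i j hi hj
      have hje : j ∉ B.erase i := fun h => hj (Finset.mem_of_mem_erase h)
      constructor
      · rw [Finset.sum_insert hje, Finset.sum_erase_eq_sub hi]; ring
      · rw [Finset.card_insert_of_notMem hje, Finset.card_erase_of_mem hi]
        have := Finset.card_pos.mpr ⟨i, hi⟩
        omega
    -- a "generic" good set avoiding j₀
    obtain ⟨j₀, hj₀⟩ : (Y \ X).Nonempty := by
      rw [← Finset.card_pos, Finset.card_sdiff_of_subset hXY]; omega
    have hj₀Y : j₀ ∈ Y := (Finset.mem_sdiff.mp hj₀).1
    have hj₀X : j₀ ∉ X := (Finset.mem_sdiff.mp hj₀).2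
    -- constant on Y \ X
    have hconst : ∀ j ∈ Y \ X, u j = u j₀ := by
      intro j hj
      rcases Finset.mem_sdiff.mp hj with ⟨hjY, hjX⟩
      by_cases hjj : j = j₀
      · rw [hjj]
      · obtain ⟨B, hB1, hB2, hB3⟩ := Finset.exists_subsuperset_card_eq (n := k)
          (show insert j X ⊆ Y.erase j₀ by
            intro x hx
            rcases Finset.mem_insert.mp hx with h | h
            · subst h; exact Finset.mem_erase.mpr ⟨hjj, hjY⟩
            · exact Finset.mem_erase.mpr ⟨fun he => hj₀X (he ▸ h), hXY h⟩)
          (by rw [Finset.card_insert_of_notMem hjX]; omega)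
          (by rw [Finset.card_erase_of_mem hj₀Y]; omega)
        have hjB : j ∈ B := hB1 (Finset.mem_insert_self j X)
        have hXB : X ⊆ B := fun x hx => hB1 (Finset.mem_insert_of_mem hx)
        have hBY : B ⊆ Y := fun x hx => Finset.mem_of_mem_erase (hB2 hx)
        have hj₀B : j₀ ∉ B := fun h => (Finset.mem_erase.mp (hB2 h)).1 rfl
        obtain ⟨hsum, hcard⟩ := hswap B j j₀ hjB hj₀B
        have hB'good : ∑ x ∈ insert j₀ (B.erase j), u x = -g 0 := by
          apply hSgood _ (by rw [hcard, hB3])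
          · intro x hx
            exact Finset.mem_insert_of_mem (Finset.mem_erase.mpr
              ⟨fun he => hjX (he ▸ hx), hXB hx⟩)
          · intro x hx
            rcases Finset.mem_insert.mp hx with h | h
            · subst h; exact hj₀Y
            · exact hBY (Finset.mem_of_mem_erase h)
        have hBgood := hSgood B hB3 hXB hBY
        rw [hsum, hBgood] at hB'good
        linarith
    -- a good set avoiding j₀ entirely
    obtain ⟨B₀, hB₀1, hB₀2, hB₀3⟩ := Finset.exists_subsuperset_card_eq (n := k)
      (show X ⊆ Y.erase j₀ from fun x hx =>
        Finset.mem_erase.mpr ⟨fun he => hj₀X (he ▸ hx), hXY hx⟩)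
      (le_of_lt hcovX)
      (by rw [Finset.card_erase_of_mem hj₀Y]; omega)
    have hB₀Y : B₀ ⊆ Y := fun x hx => Finset.mem_of_mem_erase (hB₀2 hx)
    have hj₀B₀ : j₀ ∉ B₀ := fun h => (Finset.mem_erase.mp (hB₀2 h)).1 rfl
    have hB₀good := hSgood B₀ hB₀3 hB₀1 hB₀Y
    -- on X : u i > u j₀
    have hXgt : ∀ i ∈ X, u j₀ < u i := by
      intro i hi
      have hiB₀ : i ∈ B₀ := hB₀1 hi
      obtain ⟨hsum, hcard⟩ := hswap B₀ i j₀ hiB₀ hj₀B₀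
      have hbad' : ∑ x ∈ insert j₀ (B₀.erase i), u x < -g 0 := by
        apply hSbad _ (by rw [hcard, hB₀3])
        rintro ⟨hXB', -⟩
        have : i ∈ insert j₀ (B₀.erase i) := hXB' hi
        rcases Finset.mem_insert.mp this with h | h
        · exact hj₀X (h ▸ hi)
        · exact (Finset.notMem_erase i B₀) h
      rw [hsum, hB₀good] at hbad'
      linarith
    -- outside Y : u i < u j₀
    have hYlt : ∀ i ∉ Y, u i < u j₀ := by
      intro i hiY
      obtain ⟨j, hj⟩ : (B₀ \ X).Nonempty := by
        rw [← Finset.card_pos, Finset.card_sdiff_of_subset hB₀1]; omega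
      rcases Finset.mem_sdiff.mp hj with ⟨hjB₀, hjX⟩
      have hjYX : j ∈ Y \ X := Finset.mem_sdiff.mpr ⟨hB₀Y hjB₀, hjX⟩
      have hiB₀ : i ∉ B₀ := fun h => hiY (hB₀Y h)
      obtain ⟨hsum, hcard⟩ := hswap B₀ j i hjB₀ hiB₀
      have hbad' : ∑ x ∈ insert i (B₀.erase j), u x < -g 0 := by
        apply hSbad _ (by rw [hcard, hB₀3])
        rintro ⟨-, hB'Y⟩
        exact hiY (hB'Y (Finset.mem_insert_self i _))
      rw [hsum, hB₀good] at hbad'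
      have := hconst j hjYX
      linarith
    refine ⟨g.linear.toAffineMap + AffineMap.const ℝ (Fin d → ℝ) (-u j₀), ?_, ?_, ?_⟩
    · intro i hi
      have : (g.linear.toAffineMap + AffineMap.const ℝ (Fin d → ℝ) (-u j₀)) (a i)
          = u i + w i - u j₀ := by
        show g.linear (a i) + (-u j₀) = _
        simp [hu]; ring
      rw [this]
      have := hXgt i hi
      linarith
    · intro i hi
      have : (g.linear.toAffineMap + AffineMap.const ℝ (Fin d → ℝ) (-u j₀)) (a i)
          = u i + w i - u j₀ := by
        show g.linear (a i) + (-u j₀) = _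
        simp [hu]; ring
      rw [this, hconst i hi]; ring
    · intro i hi
      have : (g.linear.toAffineMap + AffineMap.const ℝ (Fin d → ℝ) (-u j₀)) (a i)
          = u i + w i - u j₀ := by
        show g.linear (a i) + (-u j₀) = _
        simp [hu]; ring
      rw [this]
      have := hYlt i hi
      linarith
end

section
/- Let a : Fin n → ℝ^d be a point configuration and let [X1,Y1], [X2,Y2] be tiles (X_j ⊆ Y_j ⊆ Fin n). Then the following are equivalent: (i) there exists an affine map f : ℝ^d → ℝ with f (a i) > 0 for all i ∈ (X1 \ X2) ∪ (Y1 \ Y2), f (a i) < 0 for all i ∈ (X2 \ X1) ∪ (Y2 \ Y1), and f (a i) = 0 for all i ∈ (Y1 ∩ Y2) \ (X1 ∪ X2); (ii) there is no λ : Fin n → ℝ, not identically zero, with Σ_i λ i = 0 and Σ_i λ i • a i = 0, such that {i : λ i > 0} ⊆ Y1 \ X2, {i : λ i < 0} ⊆ Y2 \ X1, and λ i ≠ 0 for some i ∉ (Y1 ∩ Y2) \ (X1 ∪ X2). (Condition (ii) is the nonexistence of a circuit (C⁺,C⁻) of A with C⁺ ⊆ Y1\X2, C⁻ ⊆ Y2\X1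 and C⁺∪C⁻ not contained in (Y1∩Y2)\(X1∪X2), i.e. the definition of the tiles being separated; (i) is the covector characterization of separation.) -/
/-- The tiles `[X1,Y1]` and `[X2,Y2]` are separated with respect to `a`:
there is an affine functional positive on `(X1 \ X2) ∪ (Y1 \ Y2)`, negative on
`(X2 \ X1) ∪ (Y2 \ Y1)` and zero on `(Y1 ∩ Y2) \ (X1 ∪ X2)`. -/
def SeparatedTiles {n d : ℕ} (a : Fin n → (Fin d → ℝ))
    (X1 Y1 X2 Y2 : Finset (Fin n)) : Prop :=
  ∃ f : (Fin d → ℝ) →ᵃ[ℝ] ℝ,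
    (∀ i ∈ (X1 \ X2) ∪ (Y1 \ Y2), 0 < f (a i)) ∧
    (∀ i ∈ (X2 \ X1) ∪ (Y2 \ Y1), f (a i) < 0) ∧
    (∀ i ∈ (Y1 ∩ Y2) \ (X1 ∪ X2), f (a i) = 0)

/-!
Homogenizing `a i ↦ (a i, 1)` turns affine functionals on `ℝ^d` into linear functionals on
`ℝ^d × ℝ` and affine dependences of the `a i` into linear dependences of the `(a i, 1)`, so the
statement becomes a Motzkin-type alternative for vectors `b i` required to be positive on `P`,
negative on `N` and zero on `Z`. Replacing `b i` by `-b i` on `N` reduces it to a Gordan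
alternative relative to `W = span {b i | i ∈ Z}`: either some convex combination of the flipped
vectors on `P ∪ N` lies in `W`, and writing it as a combination of the `b i`, `i ∈ Z`, gives the
forbidden dependence, or the compact convex hull of these vectors misses the closed subspace `W`,
and Hahn–Banach separation gives a functional vanishing on `W` and positive on each flipped vector.
-/

open Finset
open scoped NNReal

theorem sum_smul_prod_mk_one {ι k V : Type*} [Semiring k] [AddCommMonoid V] [Module k V]
    (s : Finset ι) (w : ι → k) (p : ι → V) :
    ∑ i ∈ s, w i • (p i, (1 : k)) = (∑ i ∈ s, w i • p i, ∑ i ∈ s, w i) := by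
  ext <;> simp [Prod.fst_sum, Prod.snd_sum]

theorem AffineMap.exists_iff_exists_linearMap_prod {k V : Type*} [Ring k] [AddCommGroup V]
    [Module k V] (Φ : (V → k) → Prop) :
    (∃ f : V →ᵃ[k] k, Φ f) ↔ ∃ g : V × k →ₗ[k] k, Φ fun x ↦ g (x, 1) := by
  constructor
  · rintro ⟨f, hf⟩
    refine ⟨f.linear.coprod (LinearMap.toSpanSingleton k k (f 0)), ?_⟩
    convert hf using 2 with x
    simpa using (f.map_vadd 0 x).symm
  · rintro ⟨g, hg⟩
    refine ⟨(g ∘ₗ LinearMap.inl k V k).toAffineMap + AffineMap.const k V (g (0, 1)), ?_⟩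
    convert hg using 2 with x
    simp [← map_add]

section SignedDependence

variable {ι 𝕜 V : Type*} [Fintype ι] [Field 𝕜] [LinearOrder 𝕜] [IsStrictOrderedRing 𝕜]
  [AddCommGroup V] [Module 𝕜 V]

def IsSignedDependence (b : ι → V) (P N Z : Finset ι) (lam : ι → 𝕜) : Prop :=
  ∑ i, lam i • b i = 0 ∧ (∀ i, 0 < lam i → i ∈ P ∨ i ∈ Z) ∧
    (∀ i, lam i < 0 → i ∈ N ∨ i ∈ Z) ∧ ∃ i, lam i ≠ 0 ∧ i ∉ Z

theorem not_isSignedDependence_of_linearMap {b : ι → V} {P N Z : Finset ι}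
    (g : V →ₗ[𝕜] 𝕜) (hP : ∀ i ∈ P, 0 < g (b i)) (hN : ∀ i ∈ N, g (b i) < 0)
    (hZ : ∀ i ∈ Z, g (b i) = 0) (lam : ι → 𝕜) : ¬ IsSignedDependence b P N Z lam := by
  rintro ⟨hsum, hpos, hneg, i₀, hi₀, hi₀Z⟩
  have hterm : ∀ i, 0 ≤ lam i * g (b i) := fun i ↦ by
    rcases lt_trichotomy (lam i) 0 with h | h | h
    · refine mul_nonneg_of_nonpos_of_nonpos h.le ?_
      rcases hneg i h with hi | hi
      exacts [(hN i hi).le, (hZ i hi).le]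
    · simp [h]
    · refine mul_nonneg h.le ?_
      rcases hpos i h with hi | hi
      exacts [(hP i hi).le, (hZ i hi).ge]
  have hterm₀ : 0 < lam i₀ * g (b i₀) := by
    rcases hi₀.lt_or_gt with h | h
    · exact mul_pos_of_neg_of_neg h (hN i₀ ((hneg i₀ h).resolve_right hi₀Z))
    · exact mul_pos h (hP i₀ ((hpos i₀ h).resolve_right hi₀Z))
  have hzero : ∑ i, lam i * g (b i) = 0 := by
    simp_rw [← smul_eq_mul, ← map_smul, ← map_sum, hsum, map_zero]
  exact (sum_pos' (fun i _ ↦ hterm i) ⟨i₀, mem_univ _, hterm₀⟩).ne' hzero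

theorem exists_isSignedDependence_of_sum_smul_mem_span {b c : ι → V} {P N Z : Finset ι}
    (hcP : ∀ i ∈ P, c i = b i) (hcN : ∀ i ∈ N, c i = -b i) (hPZ : Disjoint P Z)
    (hNZ : Disjoint N Z) {μ : ι → 𝕜} (hμ₀ : ∀ i, 0 ≤ μ i) (hμPN : ∀ i ∉ P, i ∉ N → μ i = 0)
    (hμ₁ : ∑ i, μ i = 1) (hμZ : ∑ i, μ i • c i ∈ Submodule.span 𝕜 (b '' Z)) :
    ∃ lam : ι → 𝕜, IsSignedDependence b P N Z lam := by
  classical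
  obtain ⟨κ, hκ⟩ := (Submodule.mem_span_image_finset_iff_exists_fun' 𝕜).1 hμZ
  refine ⟨fun i ↦ (if i ∈ P then μ i else -μ i) - if i ∈ Z then κ i else 0, ?_, ?_, ?_, ?_⟩
  · have hsigned : ∑ i, (if i ∈ P then μ i else -μ i) • b i = ∑ i, μ i • c i := by
      refine sum_congr rfl fun i _ ↦ ?_
      by_cases hiP : i ∈ P
      · simp [hiP, hcP i hiP]
      by_cases hiN : i ∈ N
      · simp [hiP, hcN i hiN]
      · simp [hμPN i hiP hiN]
    have hZsum : ∑ i, (if i ∈ Z then κ i else 0) • b i = ∑ i ∈ Z, κ i • b i := by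
      simp_rw [ite_smul, zero_smul]
      rw [sum_ite_mem, univ_inter]
    simp only [sub_smul, sum_sub_distrib, hsigned, hZsum, hκ, sub_self]
  · intro i hi
    by_contra hiPZ
    rw [not_or] at hiPZ
    simp only [hiPZ.1, hiPZ.2, if_false, sub_zero] at hi
    linarith [hμ₀ i]
  · intro i hi
    by_contra hiNZ
    rw [not_or] at hiNZ
    by_cases hiP : i ∈ P
    · simp only [hiP, hiNZ.2, if_true, if_false, sub_zero] at hi
      linarith [hμ₀ i]
    · simp [hiP, hiNZ.2, hμPN i hiP hiNZ.1] at hi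
  · obtain ⟨i, -, hi⟩ := exists_ne_zero_of_sum_ne_zero (hμ₁.symm ▸ one_ne_zero : ∑ i, μ i ≠ 0)
    have hiZ : i ∉ Z := fun hiZ ↦
      hi (hμPN i (disjoint_right.1 hPZ hiZ) (disjoint_right.1 hNZ hiZ))
    refine ⟨i, ?_, hiZ⟩
    by_cases hiP : i ∈ P <;> simp [hiP, hiZ, hi]

end SignedDependence

section Separation

variable {ι E : Type*} [Fintype ι] [NormedAddCommGroup E] [NormedSpace ℝ E] [FiniteDimensional ℝ E]

theorem Submodule.exists_linearMap_pos_of_convexCombination_notMem (W : Submodule ℝ E)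
    (c : ι → E) (T : Finset ι)
    (h : ∀ μ : ι → ℝ, (∀ i, 0 ≤ μ i) → (∀ i ∉ T, μ i = 0) → ∑ i, μ i = 1 → ∑ i, μ i • c i ∉ W) :
    ∃ g : E →ₗ[ℝ] ℝ, (∀ x ∈ W, g x = 0) ∧ ∀ i ∈ T, 0 < g (c i) := by
  classical
  let S : Set (ι → ℝ) := stdSimplex ℝ ι ∩ Set.pi (↑T)ᶜ fun _ ↦ {0}
  let L := Fintype.linearCombination ℝ c
  let C : ProperCone ℝ E := ⟨W.restrictScalars ℝ≥0, W.closed_of_finiteDimensional⟩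
  have hS_convex : Convex ℝ S :=
    (convex_stdSimplex ℝ ι).inter (convex_pi fun _ _ ↦ convex_singleton 0)
  have hS_compact : IsCompact S :=
    (isCompact_stdSimplex ℝ ι).inter_right (isClosed_set_pi fun _ _ ↦ isClosed_singleton)
  have hdisj : Disjoint (L '' S) C := by
    rw [Set.disjoint_left]
    rintro _ ⟨μ, ⟨⟨hμ₀, hμ₁⟩, hμT⟩, rfl⟩ hW
    exact h μ hμ₀ hμT hμ₁ (Fintype.linearCombination_apply ℝ c μ ▸ hW)
  obtain ⟨f, hfW, hfK⟩ := C.hyperplane_separation (hS_convex.linear_image L)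
    (hS_compact.image L.continuous_of_finiteDimensional) hdisj
  refine ⟨-(f : E →ₗ[ℝ] ℝ), fun x hx ↦ ?_, fun i hi ↦ ?_⟩
  · have h₁ := hfW x hx
    have h₂ := hfW (-x) (W.neg_mem hx)
    simp only [map_neg, LinearMap.neg_apply, ContinuousLinearMap.coe_coe] at h₂ ⊢
    linarith
  · have hsingle : Pi.single i 1 ∈ S := ⟨single_mem_stdSimplex ℝ i, fun j hj ↦ by
      simp [show j ≠ i from fun hji ↦ hj (hji ▸ hi)]⟩
    have := hfK (c i) ⟨Pi.single i 1, hsingle, by simp [L, Fintype.linearCombination_apply]⟩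
    simpa using this

theorem exists_linearMap_of_forall_not_isSignedDependence (b : ι → E) {P N Z : Finset ι}
    (hPN : Disjoint P N) (hPZ : Disjoint P Z) (hNZ : Disjoint N Z)
    (h : ∀ lam : ι → ℝ, ¬ IsSignedDependence b P N Z lam) :
    ∃ g : E →ₗ[ℝ] ℝ, (∀ i ∈ P, 0 < g (b i)) ∧ (∀ i ∈ N, g (b i) < 0) ∧ ∀ i ∈ Z, g (b i) = 0 := by
  classical
  let c i := if i ∈ P then b i else -b i
  have hcP : ∀ i ∈ P, c i = b i := fun i hi ↦ if_pos hi
  have hcN : ∀ i ∈ N, c i = -b i := fun i hi ↦ if_neg (disjoint_right.1 hPN hi)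
  have hμ : ∀ μ : ι → ℝ, (∀ i, 0 ≤ μ i) → (∀ i ∉ P ∪ N, μ i = 0) → ∑ i, μ i = 1 →
      ∑ i, μ i • c i ∉ Submodule.span ℝ (b '' Z) := by
    intro μ hμ₀ hμPN hμ₁ hμZ
    obtain ⟨lam, hlam⟩ := exists_isSignedDependence_of_sum_smul_mem_span hcP hcN hPZ hNZ hμ₀
      (fun i hiP hiN ↦ hμPN i (by simp [hiP, hiN])) hμ₁ hμZ
    exact h lam hlam
  obtain ⟨g, hgZ, hgc⟩ :=
    (Submodule.span ℝ (b '' Z)).exists_linearMap_pos_of_convexCombination_notMem c (P ∪ N) hμ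
  refine ⟨g, fun i hi ↦ ?_, fun i hi ↦ ?_, fun i hi ↦ hgZ _ (Submodule.subset_span ⟨i, hi, rfl⟩)⟩
  · simpa [hcP i hi] using hgc i (mem_union_left _ hi)
  · simpa [hcN i hi] using hgc i (mem_union_right _ hi)

theorem exists_linearMap_sign_iff_forall_not_isSignedDependence (b : ι → E) {P N Z : Finset ι}
    (hPN : Disjoint P N) (hPZ : Disjoint P Z) (hNZ : Disjoint N Z) :
    (∃ g : E →ₗ[ℝ] ℝ, (∀ i ∈ P, 0 < g (b i)) ∧ (∀ i ∈ N, g (b i) < 0) ∧ ∀ i ∈ Z, g (b i) = 0) ↔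
      ∀ lam : ι → ℝ, ¬ IsSignedDependence b P N Z lam :=
  ⟨fun ⟨g, hP, hN, hZ⟩ ↦ not_isSignedDependence_of_linearMap g hP hN hZ,
    exists_linearMap_of_forall_not_isSignedDependence b hPN hPZ hNZ⟩

theorem exists_affineMap_sign_iff_not_exists_affine_dependence (a : ι → E)
    {P N Z : Finset ι} (hPN : Disjoint P N) (hPZ : Disjoint P Z) (hNZ : Disjoint N Z) :
    (∃ f : E →ᵃ[ℝ] ℝ, (∀ i ∈ P, 0 < f (a i)) ∧ (∀ i ∈ N, f (a i) < 0) ∧ ∀ i ∈ Z, f (a i) = 0) ↔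
      ¬ ∃ lam : ι → ℝ, ∑ i, lam i = 0 ∧ ∑ i, lam i • a i = 0 ∧
        (∀ i, 0 < lam i → i ∈ P ∨ i ∈ Z) ∧ (∀ i, lam i < 0 → i ∈ N ∨ i ∈ Z) ∧
        ∃ i, lam i ≠ 0 ∧ i ∉ Z := by
  rw [AffineMap.exists_iff_exists_linearMap_prod fun f ↦
      (∀ i ∈ P, 0 < f (a i)) ∧ (∀ i ∈ N, f (a i) < 0) ∧ ∀ i ∈ Z, f (a i) = 0,
    exists_linearMap_sign_iff_forall_not_isSignedDependence (fun i ↦ (a i, 1)) hPN hPZ hNZ,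
    ← not_exists]
  refine not_congr (exists_congr fun lam ↦ ?_)
  rw [IsSignedDependence, sum_smul_prod_mk_one, Prod.mk_eq_zero,
    and_comm (a := ∑ i, lam i • a i = 0), and_assoc]

end Separation

theorem separated_iff_no_circuit {n d : ℕ} (a : Fin n → (Fin d → ℝ))
    (X1 Y1 X2 Y2 : Finset (Fin n)) (h1 : X1 ⊆ Y1) (h2 : X2 ⊆ Y2) :
    SeparatedTiles a X1 Y1 X2 Y2 ↔
      ¬ ∃ lam : Fin n → ℝ, lam ≠ 0 ∧
        (∑ i, lam i) = 0 ∧ (∑ i, lam i • a i) = 0 ∧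
        (∀ i, 0 < lam i → i ∈ Y1 \ X2) ∧
        (∀ i, lam i < 0 → i ∈ Y2 \ X1) ∧
        (∃ i, lam i ≠ 0 ∧ i ∉ (Y1 ∩ Y2) \ (X1 ∪ X2)) := by
  have hPN : Disjoint ((X1 \ X2) ∪ (Y1 \ Y2)) ((X2 \ X1) ∪ (Y2 \ Y1)) :=
    disjoint_left.2 fun i ↦ by simp only [mem_union, mem_sdiff]; grind
  have hPZ : Disjoint ((X1 \ X2) ∪ (Y1 \ Y2)) ((Y1 ∩ Y2) \ (X1 ∪ X2)) :=
    disjoint_left.2 fun i ↦ by simp only [mem_union, mem_sdiff, mem_inter]; tauto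
  have hNZ : Disjoint ((X2 \ X1) ∪ (Y2 \ Y1)) ((Y1 ∩ Y2) \ (X1 ∪ X2)) :=
    disjoint_left.2 fun i ↦ by simp only [mem_union, mem_sdiff, mem_inter]; tauto
  have hpos (i) : i ∈ Y1 \ X2 ↔ i ∈ (X1 \ X2) ∪ (Y1 \ Y2) ∨ i ∈ (Y1 ∩ Y2) \ (X1 ∪ X2) := by
    simp only [mem_union, mem_sdiff, mem_inter]; grind
  have hneg (i) : i ∈ Y2 \ X1 ↔ i ∈ (X2 \ X1) ∪ (Y2 \ Y1) ∨ i ∈ (Y1 ∩ Y2) \ (X1 ∪ X2) := by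
    simp only [mem_union, mem_sdiff, mem_inter]; grind
  rw [SeparatedTiles, exists_affineMap_sign_iff_not_exists_affine_dependence a hPN hPZ hNZ]
  simp only [hpos, hneg]
  refine not_congr (exists_congr fun lam ↦ ⟨fun hlam ↦ ⟨fun h0 ↦ ?_, hlam⟩, fun h ↦ h.2⟩)
  obtain ⟨i, hi, -⟩ := hlam.2.2.2.2
  exact hi (congrFun h0 i)
end

section
/- Let a : Fin n → ℝ^d be a point configuration and let [X1,Y1], [X2,Y2] be tiles. If for every B1 with X1 ⊆ B1 ⊆ Y1 and every B2 with X2 ⊆ B2 ⊆ Y2 the subsets B1 and B2 are separated points, then the tiles [X1,Y1] and [X2,Y2] are separated. -/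
/-- `B1` and `B2` are separated points with respect to `a`. -/
def SeparatedPoints {n d : ℕ} (a : Fin n → (Fin d → ℝ))
    (B1 B2 : Finset (Fin n)) : Prop :=
  ∃ f : (Fin d → ℝ) →ᵃ[ℝ] ℝ,
    (∀ i ∈ B1 \ B2, 0 < f (a i)) ∧ (∀ i ∈ B2 \ B1, f (a i) < 0)

theorem separated_of_pointwise_separated {n d : ℕ} (a : Fin n → (Fin d → ℝ))
    (X1 Y1 X2 Y2 : Finset (Fin n)) (h1 : X1 ⊆ Y1) (h2 : X2 ⊆ Y2)
    (hpt : ∀ B1 B2 : Finset (Fin n), X1 ⊆ B1 → B1 ⊆ Y1 → X2 ⊆ B2 → B2 ⊆ Y2 →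
      SeparatedPoints a B1 B2) :
    SeparatedTiles a X1 Y1 X2 Y2 := by
  classical
  set Z : Finset (Fin n) := (Y1 ∩ Y2) \ (X1 ∪ X2) with hZdef
  have key : ∀ R : Finset (Fin n), R ⊆ Z → ∀ S : Finset (Fin n), S ⊆ Z \ R →
      ∃ f : (Fin d → ℝ) →ᵃ[ℝ] ℝ,
        (∀ i ∈ ((X1 \ X2) ∪ (Y1 \ Y2)) ∪ S, 0 < f (a i)) ∧
        (∀ i ∈ ((X2 \ X1) ∪ (Y2 \ Y1)) ∪ ((Z \ R) \ S), f (a i) < 0) ∧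
        (∀ i ∈ R, f (a i) = 0) := by
    intro R
    induction R using Finset.induction_on with
    | empty =>
      intro _ S hS
      have hSZ : ∀ j, j ∈ S → (j ∈ Y1 ∧ j ∈ Y2) ∧ ¬(j ∈ X1 ∨ j ∈ X2) := by
        intro j hj
        have := hS hj
        simp only [Finset.sdiff_empty, hZdef, Finset.mem_sdiff,
          Finset.mem_inter, Finset.mem_union] at this
        exact this
      obtain ⟨f, hf1, hf2⟩ :=
        hpt (X1 ∪ ((Y1 \ Y2) ∪ S)) (X2 ∪ ((Y2 \ Y1) ∪ (Z \ S)))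
          (Finset.subset_union_left)
          (by
            intro j hj
            simp only [Finset.mem_union, Finset.mem_sdiff] at hj
            have := hSZ j
            have h1j := @h1 j
            tauto)
          (Finset.subset_union_left)
          (by
            intro j hj
            simp only [Finset.mem_union, Finset.mem_sdiff, hZdef,
              Finset.mem_inter] at hj
            have h2j := @h2 j
            tauto)
      refine ⟨f, ?_, ?_, by simp⟩
      · intro j hj
        apply hf1
        have hjS := hSZ j
        have h1j := @h1 j
        have h2j := @h2 j
        simp only [Finset.mem_union, Finset.mem_sdiff, hZdef,
          Finset.mem_inter, not_or, not_and, not_not] at hj ⊢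
        tauto
      · intro j hj
        apply hf2
        have hjS := hSZ j
        have h1j := @h1 j
        have h2j := @h2 j
        simp only [Finset.sdiff_empty] at hj
        simp only [Finset.mem_union, Finset.mem_sdiff, hZdef,
          Finset.mem_inter, not_or, not_and, not_not] at hj ⊢
        tauto
    | @insert i R hiR ih =>
      intro hRZ S hS
      have hRZ' : R ⊆ Z := fun j hj => hRZ (Finset.mem_insert_of_mem hj)
      have hiZ : i ∈ Z := hRZ (Finset.mem_insert_self i R)
      have hiZR : i ∈ Z \ R := Finset.mem_sdiff.mpr ⟨hiZ, hiR⟩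
      have hiS : i ∉ S := by
        intro h
        have := hS h
        simp [Finset.mem_sdiff] at this
      have hSZR : S ⊆ Z \ R := by
        intro j hj
        have := hS hj
        simp only [Finset.mem_sdiff, Finset.mem_insert, not_or] at this
        exact Finset.mem_sdiff.mpr ⟨this.1, this.2.2⟩
      have hS1 : insert i S ⊆ Z \ R := by
        intro j hj
        rcases Finset.mem_insert.mp hj with h | h
        · exact h ▸ hiZR
        · exact hSZR h
      obtain ⟨fp, hp1, hp2, hp3⟩ := ih hRZ' (insert i S) hS1
      obtain ⟨fm, hm1, hm2, hm3⟩ := ih hRZ' S hSZR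
      have hpi : 0 < fp (a i) :=
        hp1 i (Finset.mem_union_right _ (Finset.mem_insert_self i S))
      have hmi : fm (a i) < 0 := by
        apply hm2
        exact Finset.mem_union_right _ (Finset.mem_sdiff.mpr ⟨hiZR, hiS⟩)
      set g : (Fin d → ℝ) →ᵃ[ℝ] ℝ := (-(fm (a i))) • fp + (fp (a i)) • fm
        with hg
      have hgapp : ∀ x, g x = (-(fm (a i))) * fp x + (fp (a i)) * fm x := by
        intro x; simp [hg]
      refine ⟨g, ?_, ?_, ?_⟩
      · intro j hj
        rw [hgapp]
        have h1' : 0 < fp (a j) := by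
          apply hp1
          rcases Finset.mem_union.mp hj with h | h
          · exact Finset.mem_union_left _ h
          · exact Finset.mem_union_right _ (Finset.mem_insert_of_mem h)
        have h2' : 0 < fm (a j) := hm1 j hj
        nlinarith
      · intro j hj
        rw [hgapp]
        have hjm : fm (a j) < 0 := by
          apply hm2
          rcases Finset.mem_union.mp hj with h | h
          · exact Finset.mem_union_left _ h
          · refine Finset.mem_union_right _ ?_
            simp only [Finset.mem_sdiff, Finset.mem_insert, not_or] at h ⊢
            exact ⟨⟨h.1.1, h.1.2.2⟩, h.2⟩
        have hjp : fp (a j) < 0 := by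
          apply hp2
          rcases Finset.mem_union.mp hj with h | h
          · exact Finset.mem_union_left _ h
          · refine Finset.mem_union_right _ ?_
            simp only [Finset.mem_sdiff, Finset.mem_insert, not_or] at h ⊢
            exact ⟨⟨h.1.1, h.1.2.2⟩, fun hc => (h.1.2.1 hc).elim, h.2⟩
        nlinarith
      · intro j hj
        rcases Finset.mem_insert.mp hj with h | h
        · subst h; rw [hgapp]; ring
        · rw [hgapp, hp3 j h, hm3 j h]; ring
  obtain ⟨f, hf1, hf2, hf3⟩ := key Z (le_refl Z) ∅ (by simp)
  refine ⟨f, ?_, ?_, hf3⟩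
  · intro i hi; exact hf1 i (Finset.mem_union_left _ hi)
  · intro i hi; exact hf2 i (Finset.mem_union_left _ hi)
end

section
/- Let a : Fin n → ℝ^d be a point configuration and let [X1,Y1], [X2,Y2] be fine tiles (i.e. the family (a i)_{i ∈ Y1 \ X1} is affinely independent and the family (a i)_{i ∈ Y2 \ X2} is affinely independent). If the tiles [X1,Y1] and [X2,Y2] are separated, then for every B1 with X1 ⊆ B1 ⊆ Y1 and every B2 with X2 ⊆ B2 ⊆ Y2, the subsets B1 and B2 are separated points. -/
/-- The tile `[X,Y]` is fine: the points indexed by `Y \ X` are affinely independent. -/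
def FineTile {n d : ℕ} (a : Fin n → (Fin d → ℝ)) (X Y : Finset (Fin n)) : Prop :=
  AffineIndependent ℝ (fun i : {x // x ∈ Y \ X} => a i)

/-!
The separating functional `f` of the tiles fails to separate `B1` from `B2` only on
`Z = (Y1 ∩ Y2) \ (X1 ∪ X2)`, where it vanishes. Since `Z ⊆ Y1 \ X1` and the points of `Y1 \ X1`
are affinely independent, some affine `g` is `1` on `B1 ∩ (Y1 \ X1)` and `-1` on the rest of
`Y1 \ X1`; then `f + ε • g` separates `B1` from `B2` for every small enough `ε > 0`.
-/

open Filter Topology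

theorem LinearIndependent.exists_linearMap_eq {ι K V : Type*} [Field K] [AddCommGroup V]
    [Module K V] {v : ι → V} (hv : LinearIndependent K v) (w : ι → K) :
    ∃ L : V →ₗ[K] K, ∀ i, L (v i) = w i := by
  let b := Module.Basis.span hv
  obtain ⟨L, hL⟩ := (b.constr K w).exists_extend
  refine ⟨L, fun i => ?_⟩
  have h := LinearMap.congr_fun hL (b i)
  rw [LinearMap.comp_apply, b.constr_basis] at h
  simpa [b, Module.Basis.span_apply] using h

theorem AffineIndependent.exists_affineMap_eq {ι k V P : Type*} [Field k] [AddCommGroup V]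
    [Module k V] [AddTorsor V P] {p : ι → P} (hp : AffineIndependent k p) (c : ι → k) :
    ∃ g : P →ᵃ[k] k, ∀ i, g (p i) = c i := by
  rcases isEmpty_or_nonempty ι with hι | ⟨⟨i₀⟩⟩
  · exact ⟨AffineMap.const k P 0, isEmptyElim⟩
  obtain ⟨L, hL⟩ := ((affineIndependent_iff_linearIndependent_vsub k p i₀).mp hp).exists_linearMap_eq
    fun i => c i - c i₀
  refine ⟨L.toAffineMap.comp (AffineMap.id k P -ᵥ AffineMap.const k P (p i₀)) +
    AffineMap.const k P (c i₀), fun i => ?_⟩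
  by_cases hi : i = i₀
  · subst hi; simp
  · simpa [eq_sub_iff_add_eq] using hL ⟨i, hi⟩

theorem eventually_pos_add_mul_of_lex {x y : ℝ} (h : 0 < x ∨ (x = 0 ∧ 0 < y)) :
    ∀ᶠ ε in 𝓝[>] (0 : ℝ), 0 < x + ε * y := by
  rcases h with hx | ⟨rfl, hy⟩
  · have hcont : Continuous fun ε : ℝ => x + ε * y := by fun_prop
    exact nhdsWithin_le_nhds ((hcont.tendsto' 0 x (by simp)).eventually (lt_mem_nhds hx))
  · filter_upwards [self_mem_nhdsWithin] with ε hε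
    simpa using mul_pos hε hy

theorem exists_affineMap_pos_neg_of_lex {ι V P : Type*} [AddCommGroup V] [Module ℝ V]
    [AddTorsor V P] (f g : P →ᵃ[ℝ] ℝ) {p : ι → P} {s t : Finset ι}
    (hs : ∀ i ∈ s, 0 < f (p i) ∨ (f (p i) = 0 ∧ 0 < g (p i)))
    (ht : ∀ i ∈ t, f (p i) < 0 ∨ (f (p i) = 0 ∧ g (p i) < 0)) :
    ∃ h : P →ᵃ[ℝ] ℝ, (∀ i ∈ s, 0 < h (p i)) ∧ ∀ i ∈ t, h (p i) < 0 := by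
  have hs' : ∀ᶠ ε in 𝓝[>] (0 : ℝ), ∀ i ∈ s, 0 < f (p i) + ε * g (p i) :=
    eventually_all_finset s |>.mpr fun i hi => eventually_pos_add_mul_of_lex (hs i hi)
  have ht' : ∀ᶠ ε in 𝓝[>] (0 : ℝ), ∀ i ∈ t, 0 < -f (p i) + ε * -g (p i) :=
    eventually_all_finset t |>.mpr fun i hi =>
      eventually_pos_add_mul_of_lex <| by simpa [neg_pos] using ht i hi
  obtain ⟨ε, hεs, hεt⟩ := (hs'.and ht').exists
  refine ⟨f + ε • g, fun i hi => by simpa using hεs i hi, fun i hi => ?_⟩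
  simp only [AffineMap.coe_add, AffineMap.coe_smul, Pi.add_apply, Pi.smul_apply, smul_eq_mul]
  linarith [hεt i hi]

theorem pointwise_separated_of_separated_fine_general {n d : ℕ} (a : Fin n → (Fin d → ℝ))
    (X1 Y1 X2 Y2 : Finset (Fin n))
    (hf1 : FineTile a X1 Y1)
    (hsep : SeparatedTiles a X1 Y1 X2 Y2)
    (B1 B2 : Finset (Fin n)) (hB1l : X1 ⊆ B1) (hB1r : B1 ⊆ Y1)
    (hB2l : X2 ⊆ B2) (hB2r : B2 ⊆ Y2) :
    SeparatedPoints a B1 B2 := by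
  obtain ⟨f, hpos, hneg, hzero⟩ := hsep
  obtain ⟨g, hg⟩ := hf1.exists_affineMap_eq fun i => if (i : Fin n) ∈ B1 then 1 else -1
  have hgY : ∀ i ∈ Y1 \ X1, g (a i) = if i ∈ B1 then 1 else -1 := fun i hi => hg ⟨i, hi⟩
  refine exists_affineMap_pos_neg_of_lex f g (fun i hi => ?_) (fun i hi => ?_)
  · by_cases hZ : i ∈ (Y1 ∩ Y2) \ (X1 ∪ X2)
    · exact .inr ⟨hzero i hZ, by rw [hgY i (by grind)]; grind⟩
    · exact .inl (hpos i (by grind))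
  · by_cases hZ : i ∈ (Y1 ∩ Y2) \ (X1 ∪ X2)
    · exact .inr ⟨hzero i hZ, by rw [hgY i (by grind)]; grind⟩
    · exact .inl (hneg i (by grind))

theorem pointwise_separated_of_separated_fine {n d : ℕ} (a : Fin n → (Fin d → ℝ))
    (X1 Y1 X2 Y2 : Finset (Fin n)) (h1 : X1 ⊆ Y1) (h2 : X2 ⊆ Y2)
    (hf1 : FineTile a X1 Y1) (hf2 : FineTile a X2 Y2)
    (hsep : SeparatedTiles a X1 Y1 X2 Y2)
    (B1 B2 : Finset (Fin n)) (hB1l : X1 ⊆ B1) (hB1r : B1 ⊆ Y1)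
    (hB2l : X2 ⊆ B2) (hB2r : B2 ⊆ Y2) :
    SeparatedPoints a B1 B2 :=
  pointwise_separated_of_separated_fine_general a X1 Y1 X2 Y2 hf1 hsep B1 B2 hB1l hB1r hB2l hB2r
end

section
/- Let a : Fin n → ℝ^d be a point configuration and let [X1,Y1], [X2,Y2] be tiles. Then the following are equivalent: (i) [X1,Y1] and [X2,Y2] are separated; (ii) there exists a weight vector w : Fin n → ℝ such that both [X1,Y1] and [X2,Y2] are w-tiles of a (i.e. there is a coherent zonotopal tiling of Z(A) using both tiles); (iii) there exists a weight vector w : Fin n → ℝ such that both Y1 \ X2 and Y2 \ X1 are w-cells of the regular subdivision of A (i.e. there is a coherent polyhedral subdivision of A using Y1\X2 and Y2\X1 as cells). -/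
/-- `C` is a `w`-cell of the regular subdivision of `a`. -/
def IsWCell {n d : ℕ} (a : Fin n → (Fin d → ℝ)) (w : Fin n → ℝ)
    (C : Finset (Fin n)) : Prop :=
  ∃ f : (Fin d → ℝ) →ᵃ[ℝ] ℝ,
    (∀ i ∈ C, f (a i) = w i) ∧ (∀ i ∉ C, f (a i) < w i)

theorem separated_iff_coherent_tiling_iff_coherent_subdivision {n d : ℕ}
    (a : Fin n → (Fin d → ℝ))
    (X1 Y1 X2 Y2 : Finset (Fin n)) (h1 : X1 ⊆ Y1) (h2 : X2 ⊆ Y2) :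
    (SeparatedTiles a X1 Y1 X2 Y2 ↔
      ∃ w : Fin n → ℝ, IsWTile a w X1 Y1 ∧ IsWTile a w X2 Y2) ∧
    (SeparatedTiles a X1 Y1 X2 Y2 ↔
      ∃ w : Fin n → ℝ, IsWCell a w (Y1 \ X2) ∧ IsWCell a w (Y2 \ X1)) := by
  have tile_mp : SeparatedTiles a X1 Y1 X2 Y2 →
      ∃ w : Fin n → ℝ, IsWTile a w X1 Y1 ∧ IsWTile a w X2 Y2 := by
    rintro ⟨f, hpos, hneg, hzero⟩
    simp only [Finset.mem_union, Finset.mem_sdiff, Finset.mem_inter] at hpos hneg hzero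
    refine ⟨fun i => if i ∈ Y2 then
        (if i ∈ X2 then
          (if i ∈ X1 then min (f (a i)) 0 - 1
           else if i ∈ Y1 then f (a i) else f (a i) / 2)
         else 0)
      else
        (if i ∈ X1 then f (a i) / 2
         else if i ∈ Y1 then f (a i) else max (f (a i)) 0 + 1), ?_, ?_⟩
    · refine ⟨f, ?_, ?_, ?_⟩
      · intro i hi
        by_cases hy2 : i ∈ Y2 <;> by_cases hx2 : i ∈ X2 <;>
          simp only [hy2, hx2, hi, if_true, if_false, if_pos, if_neg]
        · have := min_le_left (f (a i)) 0; linarith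
        · have := hpos i (Or.inl ⟨hi, hx2⟩); linarith
        · exact absurd (h2 hx2) hy2
        · have := hpos i (Or.inl ⟨hi, hx2⟩); linarith
      · intro i hi
        simp only [Finset.mem_sdiff] at hi
        obtain ⟨hy1, hx1⟩ := hi
        by_cases hy2 : i ∈ Y2 <;> by_cases hx2 : i ∈ X2 <;>
          simp only [hy2, hx2, hx1, hy1, if_true, if_false, if_pos, if_neg]
        · exact hzero i ⟨⟨hy1, hy2⟩, fun h => h.elim hx1 hx2⟩
      · intro i hy1
        have hx1 : i ∉ X1 := fun h => hy1 (h1 h)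
        by_cases hy2 : i ∈ Y2 <;> by_cases hx2 : i ∈ X2 <;>
          simp only [hy2, hx2, hx1, hy1, if_true, if_false, if_pos, if_neg]
        · have := hneg i (Or.inl ⟨hx2, hx1⟩); linarith
        · have := hneg i (Or.inr ⟨hy2, hy1⟩); linarith
        · exact absurd (h2 hx2) hy2
        · have := le_max_left (f (a i)) 0; linarith
    · refine ⟨0, ?_, ?_, ?_⟩
      · intro i hx2
        have hy2 : i ∈ Y2 := h2 hx2
        simp only [hy2, hx2, if_true, AffineMap.coe_zero, Pi.zero_apply]
        by_cases hx1 : i ∈ X1 <;> simp only [hx1, if_true, if_false]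
        · have := min_le_right (f (a i)) 0; linarith
        · by_cases hy1 : i ∈ Y1 <;> simp only [hy1, if_true, if_false]
          · have := hneg i (Or.inl ⟨hx2, hx1⟩); linarith
          · have := hneg i (Or.inl ⟨hx2, hx1⟩); linarith
      · intro i hi
        simp only [Finset.mem_sdiff] at hi
        simp only [hi.1, hi.2, if_true, if_false, AffineMap.coe_zero, Pi.zero_apply]
      · intro i hy2
        have hx2 : i ∉ X2 := fun h => hy2 (h2 h)
        simp only [hy2, hx2, if_false, AffineMap.coe_zero, Pi.zero_apply]
        by_cases hx1 : i ∈ X1 <;> simp only [hx1, if_true, if_false]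
        · have := hpos i (Or.inl ⟨hx1, hx2⟩); linarith
        · by_cases hy1 : i ∈ Y1 <;> simp only [hy1, if_true, if_false]
          · have := hpos i (Or.inr ⟨hy1, hy2⟩); linarith
          · have := le_max_right (f (a i)) 0; linarith
  have tile_mpr : (∃ w : Fin n → ℝ, IsWTile a w X1 Y1 ∧ IsWTile a w X2 Y2) →
      SeparatedTiles a X1 Y1 X2 Y2 := by
    rintro ⟨w, ⟨f1, h1pos, h1eq, h1neg⟩, ⟨f2, h2pos, h2eq, h2neg⟩⟩
    have key1 : ∀ i, i ∈ Y1 → w i ≤ f1 (a i) := by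
      intro i hi
      by_cases hx : i ∈ X1
      · exact le_of_lt (h1pos i hx)
      · exact le_of_eq (h1eq i (Finset.mem_sdiff.mpr ⟨hi, hx⟩)).symm
    have key2 : ∀ i, i ∈ Y2 → w i ≤ f2 (a i) := by
      intro i hi
      by_cases hx : i ∈ X2
      · exact le_of_lt (h2pos i hx)
      · exact le_of_eq (h2eq i (Finset.mem_sdiff.mpr ⟨hi, hx⟩)).symm
    have key1' : ∀ i, i ∉ X1 → f1 (a i) ≤ w i := by
      intro i hi
      by_cases hy : i ∈ Y1
      · exact le_of_eq (h1eq i (Finset.mem_sdiff.mpr ⟨hy, hi⟩))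
      · exact le_of_lt (h1neg i hy)
    have key2' : ∀ i, i ∉ X2 → f2 (a i) ≤ w i := by
      intro i hi
      by_cases hy : i ∈ Y2
      · exact le_of_eq (h2eq i (Finset.mem_sdiff.mpr ⟨hy, hi⟩))
      · exact le_of_lt (h2neg i hy)
    refine ⟨f1 - f2, ?_, ?_, ?_⟩
    · intro i hi
      simp only [Finset.mem_union, Finset.mem_sdiff] at hi
      simp only [AffineMap.coe_sub, Pi.sub_apply]
      rcases hi with ⟨hx1, hx2⟩ | ⟨hy1, hy2⟩
      · have := h1pos i hx1
        have := key2' i hx2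
        linarith
      · have := key1 i hy1
        have := h2neg i hy2
        linarith
    · intro i hi
      simp only [Finset.mem_union, Finset.mem_sdiff] at hi
      simp only [AffineMap.coe_sub, Pi.sub_apply]
      rcases hi with ⟨hx2, hx1⟩ | ⟨hy2, hy1⟩
      · have := h2pos i hx2
        have := key1' i hx1
        linarith
      · have := key2 i hy2
        have := h1neg i hy1
        linarith
    · intro i hi
      simp only [Finset.mem_sdiff, Finset.mem_inter, Finset.mem_union] at hi
      obtain ⟨⟨hy1, hy2⟩, hx⟩ := hi
      have e1 := h1eq i (Finset.mem_sdiff.mpr ⟨hy1, fun h => hx (Or.inl h)⟩)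
      have e2 := h2eq i (Finset.mem_sdiff.mpr ⟨hy2, fun h => hx (Or.inr h)⟩)
      simp only [AffineMap.coe_sub, Pi.sub_apply]
      linarith
  have cell_mp : SeparatedTiles a X1 Y1 X2 Y2 →
      ∃ w : Fin n → ℝ, IsWCell a w (Y1 \ X2) ∧ IsWCell a w (Y2 \ X1) := by
    rintro ⟨f, hpos, hneg, hzero⟩
    simp only [Finset.mem_union, Finset.mem_sdiff, Finset.mem_inter] at hpos hneg hzero
    refine ⟨fun i => if i ∈ Y1 \ X2 then
        (if i ∈ Y2 \ X1 then 0 else f (a i))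
      else (if i ∈ Y2 \ X1 then 0 else max (f (a i)) 0 + 1), ?_, ?_⟩
    · refine ⟨f, ?_, ?_⟩
      · intro i hi
        simp only [hi, if_true]
        by_cases hj : i ∈ Y2 \ X1 <;> simp only [hj, if_true, if_false]
        simp only [Finset.mem_sdiff] at hi hj
        exact hzero i ⟨⟨hi.1, hj.1⟩, fun h => h.elim hj.2 hi.2⟩
      · intro i hi
        simp only [hi, if_false]
        by_cases hj : i ∈ Y2 \ X1 <;> simp only [hj, if_true, if_false]
        · simp only [Finset.mem_sdiff, not_and, not_not] at hi hj
          by_cases hy1 : i ∈ Y1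
          · exact hneg i (Or.inl ⟨hi hy1, hj.2⟩)
          · exact hneg i (Or.inr ⟨hj.1, hy1⟩)
        · have := le_max_left (f (a i)) 0; linarith
    · refine ⟨0, ?_, ?_⟩
      · intro i hi
        simp only [hi, if_true, AffineMap.coe_zero, Pi.zero_apply]
        by_cases hj : i ∈ Y1 \ X2 <;> simp only [hj, if_true, if_false]
      · intro i hi
        simp only [hi, if_false, AffineMap.coe_zero, Pi.zero_apply]
        by_cases hj : i ∈ Y1 \ X2 <;> simp only [hj, if_true, if_false]
        · simp only [Finset.mem_sdiff, not_and, not_not] at hi hj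
          by_cases hy2 : i ∈ Y2
          · exact hpos i (Or.inl ⟨hi hy2, hj.2⟩)
          · exact hpos i (Or.inr ⟨hj.1, hy2⟩)
        · have := le_max_right (f (a i)) 0; linarith
  have cell_mpr : (∃ w : Fin n → ℝ, IsWCell a w (Y1 \ X2) ∧ IsWCell a w (Y2 \ X1)) →
      SeparatedTiles a X1 Y1 X2 Y2 := by
    rintro ⟨w, ⟨g1, g1eq, g1lt⟩, ⟨g2, g2eq, g2lt⟩⟩
    refine ⟨g1 - g2, ?_, ?_, ?_⟩
    · intro i hi
      simp only [Finset.mem_union, Finset.mem_sdiff] at hi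
      simp only [AffineMap.coe_sub, Pi.sub_apply]
      rcases hi with ⟨hx1, hx2⟩ | ⟨hy1, hy2⟩
      · have e1 := g1eq i (Finset.mem_sdiff.mpr ⟨h1 hx1, hx2⟩)
        have e2 := g2lt i (by simp only [Finset.mem_sdiff, not_and, not_not]; exact fun _ => hx1)
        linarith
      · have e1 := g1eq i (Finset.mem_sdiff.mpr ⟨hy1, fun h => hy2 (h2 h)⟩)
        have e2 := g2lt i (by simp only [Finset.mem_sdiff, not_and, not_not]; exact fun h => absurd h hy2)
        linarith
    · intro i hi
      simp only [Finset.mem_union, Finset.mem_sdiff] at hi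
      simp only [AffineMap.coe_sub, Pi.sub_apply]
      rcases hi with ⟨hx2, hx1⟩ | ⟨hy2, hy1⟩
      · have e1 := g2eq i (Finset.mem_sdiff.mpr ⟨h2 hx2, hx1⟩)
        have e2 := g1lt i (by simp only [Finset.mem_sdiff, not_and, not_not]; exact fun _ => hx2)
        linarith
      · have e1 := g2eq i (Finset.mem_sdiff.mpr ⟨hy2, fun h => hy1 (h1 h)⟩)
        have e2 := g1lt i (by simp only [Finset.mem_sdiff, not_and, not_not]; exact fun h => absurd h hy1)
        linarith
    · intro i hi
      simp only [Finset.mem_sdiff, Finset.mem_inter, Finset.mem_union] at hi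
      obtain ⟨⟨hy1, hy2⟩, hx⟩ := hi
      have e1 := g1eq i (Finset.mem_sdiff.mpr ⟨hy1, fun h => hx (Or.inr h)⟩)
      have e2 := g2eq i (Finset.mem_sdiff.mpr ⟨hy2, fun h => hx (Or.inl h)⟩)
      simp only [AffineMap.coe_sub, Pi.sub_apply]
      linarith
  exact ⟨⟨tile_mp, tile_mpr⟩, ⟨cell_mp, cell_mpr⟩⟩
end

section
/- Let a : Fin n → ℝ^d be a point configuration, let [X1,Y1] and [X2,Y2] be separated tiles, and for j = 1,2 let [X̃j,Ỹj] be a face of [Xj,Yj]. Then the tiles [X̃1,Ỹ1] and [X̃2,Ỹ2] are separated. -/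
/-- `[X',Y']` is a face of the tile `[X,Y]`. -/
def IsFaceOfTile {n d : ℕ} (a : Fin n → (Fin d → ℝ))
    (X Y X' Y' : Finset (Fin n)) : Prop :=
  X ⊆ X' ∧ X' ⊆ Y' ∧ Y' ⊆ Y ∧
  ∃ h : (Fin d → ℝ) →ᵃ[ℝ] ℝ,
    (∀ i ∈ X' \ X, 0 < h (a i)) ∧ (∀ i ∈ Y' \ X', h (a i) = 0) ∧
      (∀ i ∈ Y \ Y', h (a i) < 0)

private lemma aux_pos (x δ ε : ℝ) (hε : 0 < ε) (hx : 0 < x) (hb : ε * |δ| < |x|) :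
    0 < x + ε * δ := by
  have h1 : -|δ| ≤ δ := neg_abs_le δ
  have h2 : ε * (-|δ|) ≤ ε * δ := mul_le_mul_of_nonneg_left h1 hε.le
  have h3 : |x| = x := abs_of_pos hx
  nlinarith

private lemma aux_neg (x δ ε : ℝ) (hε : 0 < ε) (hx : x < 0) (hb : ε * |δ| < |x|) :
    x + ε * δ < 0 := by
  have h1 : δ ≤ |δ| := le_abs_self δ
  have h2 : ε * δ ≤ ε * |δ| := mul_le_mul_of_nonneg_left h1 hε.le
  have h3 : |x| = -x := abs_of_neg hx
  nlinarith

theorem faces_of_separated_tiles_are_separated {n d : ℕ} (a : Fin n → (Fin d → ℝ))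
    (X1 Y1 X2 Y2 : Finset (Fin n)) (h1 : X1 ⊆ Y1) (h2 : X2 ⊆ Y2)
    (hsep : SeparatedTiles a X1 Y1 X2 Y2)
    (X1' Y1' X2' Y2' : Finset (Fin n))
    (hf1 : IsFaceOfTile a X1 Y1 X1' Y1') (hf2 : IsFaceOfTile a X2 Y2 X2' Y2') :
    SeparatedTiles a X1' Y1' X2' Y2' := by
  obtain ⟨f, hfpos, hfneg, hfzero⟩ := hsep
  obtain ⟨hX1s, hXY1', hY1'Y1, g1, hg1pos, hg1zero, hg1neg⟩ := hf1
  obtain ⟨hX2s, hXY2', hY2'Y2, g2, hg2pos, hg2zero, hg2neg⟩ := hf2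
  -- the perturbation size
  set c : Fin n → ℝ := fun i => |g1 (a i) - g2 (a i)| with hc
  set T : Finset ℝ :=
    insert 1 ((Finset.univ.filter (fun i => f (a i) ≠ 0)).image
      (fun i => |f (a i)| / (c i + 1))) with hT
  have hTne : T.Nonempty := ⟨1, Finset.mem_insert_self _ _⟩
  set ε : ℝ := T.min' hTne with hεdef
  have hεmem : ε ∈ T := Finset.min'_mem _ _
  have hε : 0 < ε := by
    rcases Finset.mem_insert.1 hεmem with h | h
    · rw [h]; norm_num
    · obtain ⟨i, hi, hie⟩ := Finset.mem_image.1 h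
      have hfi : f (a i) ≠ 0 := (Finset.mem_filter.1 hi).2
      have hci : 0 < c i + 1 := by positivity
      rw [← hie]
      exact div_pos (abs_pos.2 hfi) hci
  have hεb : ∀ i : Fin n, f (a i) ≠ 0 → ε * c i < |f (a i)| := by
    intro i hfi
    have hmem : |f (a i)| / (c i + 1) ∈ T := by
      refine Finset.mem_insert_of_mem (Finset.mem_image.2 ⟨i, ?_, rfl⟩)
      exact Finset.mem_filter.2 ⟨Finset.mem_univ _, hfi⟩
    have hle : ε ≤ |f (a i)| / (c i + 1) := Finset.min'_le _ _ hmem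
    have hci : 0 < c i + 1 := by positivity
    have h4 : ε * (c i + 1) ≤ |f (a i)| := by
      rw [← le_div_iff₀ hci]; exact hle
    have h5 : 0 ≤ c i := abs_nonneg _
    have h6 : 0 < |f (a i)| := abs_pos.2 hfi
    nlinarith
  refine ⟨f + ε • (g1 - g2), ?_, ?_, ?_⟩
  · intro i hi
    have heval : (f + ε • (g1 - g2)) (a i) = f (a i) + ε * (g1 (a i) - g2 (a i)) := by
      simp [AffineMap.coe_add, AffineMap.coe_smul, AffineMap.coe_sub]
    rw [heval]
    rcases Finset.mem_union.1 hi with hi | hi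
    · -- i ∈ X1' \ X2'
      obtain ⟨hiX1', hiX2'⟩ := Finset.mem_sdiff.1 hi
      have hiY1' : i ∈ Y1' := hXY1' hiX1'
      have hiY1 : i ∈ Y1 := hY1'Y1 hiY1'
      have hiX2 : i ∉ X2 := fun h => hiX2' (hX2s h)
      by_cases hx1 : i ∈ X1
      · have hf : 0 < f (a i) :=
          hfpos i (Finset.mem_union_left _ (Finset.mem_sdiff.2 ⟨hx1, hiX2⟩))
        exact aux_pos _ _ _ hε hf (hεb i hf.ne')
      · have hg1 : 0 < g1 (a i) := hg1pos i (Finset.mem_sdiff.2 ⟨hiX1', hx1⟩)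
        by_cases hy2 : i ∈ Y2
        · have hf0 : f (a i) = 0 := by
            refine hfzero i (Finset.mem_sdiff.2 ⟨Finset.mem_inter.2 ⟨hiY1, hy2⟩, ?_⟩)
            simp [hx1, hiX2]
          have hg2 : g2 (a i) ≤ 0 := by
            by_cases hy2' : i ∈ Y2'
            · exact le_of_eq (hg2zero i (Finset.mem_sdiff.2 ⟨hy2', hiX2'⟩))
            · exact (hg2neg i (Finset.mem_sdiff.2 ⟨hy2, hy2'⟩)).le
          rw [hf0]
          have : 0 < g1 (a i) - g2 (a i) := by linarith
          nlinarith
        · have hf : 0 < f (a i) :=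
            hfpos i (Finset.mem_union_right _ (Finset.mem_sdiff.2 ⟨hiY1, hy2⟩))
          exact aux_pos _ _ _ hε hf (hεb i hf.ne')
    · -- i ∈ Y1' \ Y2'
      obtain ⟨hiY1', hiY2'⟩ := Finset.mem_sdiff.1 hi
      have hiY1 : i ∈ Y1 := hY1'Y1 hiY1'
      have hiX2' : i ∉ X2' := fun h => hiY2' (hXY2' h)
      have hiX2 : i ∉ X2 := fun h => hiX2' (hX2s h)
      by_cases hy2 : i ∈ Y2
      · have hg2 : g2 (a i) < 0 := hg2neg i (Finset.mem_sdiff.2 ⟨hy2, hiY2'⟩)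
        by_cases hx1 : i ∈ X1
        · have hf : 0 < f (a i) :=
            hfpos i (Finset.mem_union_left _ (Finset.mem_sdiff.2 ⟨hx1, hiX2⟩))
          exact aux_pos _ _ _ hε hf (hεb i hf.ne')
        · have hf0 : f (a i) = 0 := by
            refine hfzero i (Finset.mem_sdiff.2 ⟨Finset.mem_inter.2 ⟨hiY1, hy2⟩, ?_⟩)
            simp [hx1, hiX2]
          have hg1 : 0 ≤ g1 (a i) := by
            by_cases hx1' : i ∈ X1'
            · exact (hg1pos i (Finset.mem_sdiff.2 ⟨hx1', hx1⟩)).le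
            · exact le_of_eq (hg1zero i (Finset.mem_sdiff.2 ⟨hiY1', hx1'⟩)).symm
          rw [hf0]
          have : 0 < g1 (a i) - g2 (a i) := by linarith
          nlinarith
      · have hf : 0 < f (a i) :=
          hfpos i (Finset.mem_union_right _ (Finset.mem_sdiff.2 ⟨hiY1, hy2⟩))
        exact aux_pos _ _ _ hε hf (hεb i hf.ne')
  · intro i hi
    have heval : (f + ε • (g1 - g2)) (a i) = f (a i) + ε * (g1 (a i) - g2 (a i)) := by
      simp [AffineMap.coe_add, AffineMap.coe_smul, AffineMap.coe_sub]
    rw [heval]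
    rcases Finset.mem_union.1 hi with hi | hi
    · -- i ∈ X2' \ X1'
      obtain ⟨hiX2', hiX1'⟩ := Finset.mem_sdiff.1 hi
      have hiY2' : i ∈ Y2' := hXY2' hiX2'
      have hiY2 : i ∈ Y2 := hY2'Y2 hiY2'
      have hiX1 : i ∉ X1 := fun h => hiX1' (hX1s h)
      by_cases hx2 : i ∈ X2
      · have hf : f (a i) < 0 :=
          hfneg i (Finset.mem_union_left _ (Finset.mem_sdiff.2 ⟨hx2, hiX1⟩))
        exact aux_neg _ _ _ hε hf (hεb i hf.ne)
      · have hg2 : 0 < g2 (a i) := hg2pos i (Finset.mem_sdiff.2 ⟨hiX2', hx2⟩)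
        by_cases hy1 : i ∈ Y1
        · have hf0 : f (a i) = 0 := by
            refine hfzero i (Finset.mem_sdiff.2 ⟨Finset.mem_inter.2 ⟨hy1, hiY2⟩, ?_⟩)
            simp [hiX1, hx2]
          have hg1 : g1 (a i) ≤ 0 := by
            by_cases hy1' : i ∈ Y1'
            · exact le_of_eq (hg1zero i (Finset.mem_sdiff.2 ⟨hy1', hiX1'⟩))
            · exact (hg1neg i (Finset.mem_sdiff.2 ⟨hy1, hy1'⟩)).le
          rw [hf0]
          have : g1 (a i) - g2 (a i) < 0 := by linarith
          nlinarith
        · have hf : f (a i) < 0 :=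
            hfneg i (Finset.mem_union_right _ (Finset.mem_sdiff.2 ⟨hiY2, hy1⟩))
          exact aux_neg _ _ _ hε hf (hεb i hf.ne)
    · -- i ∈ Y2' \ Y1'
      obtain ⟨hiY2', hiY1'⟩ := Finset.mem_sdiff.1 hi
      have hiY2 : i ∈ Y2 := hY2'Y2 hiY2'
      have hiX1' : i ∉ X1' := fun h => hiY1' (hXY1' h)
      have hiX1 : i ∉ X1 := fun h => hiX1' (hX1s h)
      by_cases hy1 : i ∈ Y1
      · have hg1 : g1 (a i) < 0 := hg1neg i (Finset.mem_sdiff.2 ⟨hy1, hiY1'⟩)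
        by_cases hx2 : i ∈ X2
        · have hf : f (a i) < 0 :=
            hfneg i (Finset.mem_union_left _ (Finset.mem_sdiff.2 ⟨hx2, hiX1⟩))
          exact aux_neg _ _ _ hε hf (hεb i hf.ne)
        · have hf0 : f (a i) = 0 := by
            refine hfzero i (Finset.mem_sdiff.2 ⟨Finset.mem_inter.2 ⟨hy1, hiY2⟩, ?_⟩)
            simp [hiX1, hx2]
          have hg2 : 0 ≤ g2 (a i) := by
            by_cases hx2' : i ∈ X2'
            · exact (hg2pos i (Finset.mem_sdiff.2 ⟨hx2', hx2⟩)).le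
            · exact le_of_eq (hg2zero i (Finset.mem_sdiff.2 ⟨hiY2', hx2'⟩)).symm
          rw [hf0]
          have : g1 (a i) - g2 (a i) < 0 := by linarith
          nlinarith
      · have hf : f (a i) < 0 :=
          hfneg i (Finset.mem_union_right _ (Finset.mem_sdiff.2 ⟨hiY2, hy1⟩))
        exact aux_neg _ _ _ hε hf (hεb i hf.ne)
  · intro i hi
    have heval : (f + ε • (g1 - g2)) (a i) = f (a i) + ε * (g1 (a i) - g2 (a i)) := by
      simp [AffineMap.coe_add, AffineMap.coe_smul, AffineMap.coe_sub]
    rw [heval]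
    obtain ⟨hiYY, hiXX⟩ := Finset.mem_sdiff.1 hi
    obtain ⟨hiY1', hiY2'⟩ := Finset.mem_inter.1 hiYY
    have hiX1' : i ∉ X1' := fun h => hiXX (Finset.mem_union_left _ h)
    have hiX2' : i ∉ X2' := fun h => hiXX (Finset.mem_union_right _ h)
    have hiX1 : i ∉ X1 := fun h => hiX1' (hX1s h)
    have hiX2 : i ∉ X2 := fun h => hiX2' (hX2s h)
    have hg1 : g1 (a i) = 0 := hg1zero i (Finset.mem_sdiff.2 ⟨hiY1', hiX1'⟩)
    have hg2 : g2 (a i) = 0 := hg2zero i (Finset.mem_sdiff.2 ⟨hiY2', hiX2'⟩)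
    have hf0 : f (a i) = 0 := by
      refine hfzero i (Finset.mem_sdiff.2 ⟨Finset.mem_inter.2
        ⟨hY1'Y1 hiY1', hY2'Y2 hiY2'⟩, ?_⟩)
      simp [hiX1, hiX2]
    rw [hf0, hg1, hg2]; ring
end

section
/- Let a : Fin n → ℝ^d be a point configuration and let [X1,Y1], [X2,Y2] be tiles with Y1 \ X1 = Y2 \ X2 such that the points (a i)_{i ∈ Y1 \ X1} affinely span ℝ^d. If [X1,Y1] and [X2,Y2] are separated, then X1 = X2. (In particular, no zonotopal tiling — coherent or not — contains two distinct tiles translated along the same spanning generator set.) -/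
theorem eq_of_separated_translates {n d : ℕ} (a : Fin n → (Fin d → ℝ))
    (X1 Y1 X2 Y2 : Finset (Fin n)) (h1 : X1 ⊆ Y1) (h2 : X2 ⊆ Y2)
    (heq : Y1 \ X1 = Y2 \ X2)
    (hspan : affineSpan ℝ (a '' ((Y1 \ X1 : Finset (Fin n)) : Set (Fin n))) = ⊤)
    (hsep : SeparatedTiles a X1 Y1 X2 Y2) :
    X1 = X2 := by
  obtain ⟨f, hpos, hneg, hzero⟩ := hsep
  -- f vanishes on a '' (Y1 \ X1)
  have hz : ∀ i ∈ Y1 \ X1, f (a i) = 0 := by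
    intro i hi
    have hi2 : i ∈ Y2 \ X2 := heq ▸ hi
    rw [Finset.mem_sdiff] at hi hi2
    exact hzero i (by
      rw [Finset.mem_sdiff, Finset.mem_inter, Finset.mem_union]
      exact ⟨⟨hi.1, hi2.1⟩, fun h => h.elim hi.2 hi2.2⟩)
  -- the zero set of f is an affine subspace containing the span, so f = 0
  have hf0 : ∀ x, f x = 0 := by
    have hle : affineSpan ℝ (a '' ((Y1 \ X1 : Finset (Fin n)) : Set (Fin n))) ≤
        (AffineSubspace.mk' (0 : ℝ) ⊥).comap f := by
      rw [affineSpan_le]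
      rintro _ ⟨i, hi, rfl⟩
      rw [SetLike.mem_coe, AffineSubspace.mem_comap, hz i hi]
      exact AffineSubspace.self_mem_mk' _ _
    intro x
    have hx : x ∈ (AffineSubspace.mk' (0 : ℝ) ⊥).comap f := by
      rw [hspan] at hle
      exact hle trivial
    rw [AffineSubspace.mem_comap] at hx
    have := AffineSubspace.mem_mk'.mp hx
    simpa using this
  -- now use positivity/negativity to conclude
  ext i
  constructor
  · intro hi
    by_contra hi2
    have := hpos i (Finset.mem_union_left _ (Finset.mem_sdiff.mpr ⟨hi, hi2⟩))
    rw [hf0] at this; exact lt_irrefl _ this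
  · intro hi
    by_contra hi1
    have := hneg i (Finset.mem_union_left _ (Finset.mem_sdiff.mpr ⟨hi, hi1⟩))
    rw [hf0] at this; exact lt_irrefl _ this
end

section
/- Let a : Fin n → ℝ^d be an injective point configuration (a i ≠ a j for i ≠ j), let 1 ≤ k ≤ n−1, and let [X1,Y1], [X2,Y2] be tiles that cover level k (|X_j| < k < |Y_j|) and are NOT separated. Then there exist fine tiles [X'1,Y'1] and [X'2,Y'2] with X_j ⊆ X'_j ⊆ Y'_j ⊆ Y_j for j = 1,2, each covering level k (|X'_j| < k < |Y'_j|), such that [X'1,Y'1] and [X'2,Y'2] are NOT separated. -/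
/-!
Put `A = Y1 \ X2` and `B = Y2 \ X1`. When `X1 ⊆ Y1` and `X2 ⊆ Y2`, the tiles are separated iff
some affine function is positive on `A \ B`, negative on `B \ A` and zero on `A ∩ B`. By a
Gordan-type theorem of alternatives (Hahn–Banach), this fails iff the points admit an affine
dependence `w` that is positive only on `A`, negative only on `B` and nonzero somewhere outside
`A ∩ B`.

Moving `i ∈ Y1 \ X1` into `X1` shrinks `B` by `i`, which keeps `w` valid as soon as `w i ≥ 0`;
removing `i` from `Y1` shrinks `A`, which needs `w i ≤ 0`. If `[X1, Y1]` is not fine, the points of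
`Y1 \ X1` carry an affine dependence `l`, and when `w` has the wrong sign on all of `Y1 \ X1` we
shift `w` along `l` until it does not. By injectivity `|Y1 \ X1| ≥ 3`, so one of the two moves
keeps level `k` covered, and we induct on `|Y1 \ X1| + |Y2 \ X2|`.
-/

open Finset

section Gordan

variable {ι E : Type*} [NormedAddCommGroup E] [NormedSpace ℝ E] [FiniteDimensional ℝ E]

theorem exists_pos_dual_or_exists_convex_combination_mem (g : ι → E) (s : Finset ι)
    (U : Submodule ℝ E) :
    (∃ φ : StrongDual ℝ E, (∀ i ∈ s, 0 < φ (g i)) ∧ ∀ u ∈ U, φ u = 0) ∨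
      ∃ μ : ι → ℝ, (∀ i ∈ s, 0 ≤ μ i) ∧ ∑ i ∈ s, μ i = 1 ∧ ∑ i ∈ s, μ i • g i ∈ U := by
  classical
  set L := Fintype.linearCombination ℝ (fun k : s => g k)
  by_cases hC : Disjoint (L '' stdSimplex ℝ s) U
  · left
    obtain ⟨f, u, v, hfC, huv, hfU⟩ := geometric_hahn_banach_compact_closed
      ((convex_stdSimplex ℝ s).linear_image L)
      ((isCompact_stdSimplex ℝ s).image L.continuous_of_finiteDimensional)
      U.convex U.closed_of_finiteDimensional hC
    -- a functional bounded below on a subspace vanishes on it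
    have hf0 : ∀ x ∈ U, f x = 0 := fun x hx => by
      by_contra hne
      have := hfU (((v - 1) / f x) • x) (U.smul_mem _ hx)
      rw [map_smul, smul_eq_mul, div_mul_cancel₀ _ hne] at this
      linarith
    have hv : v < 0 := by simpa [hf0 0 U.zero_mem] using hfU 0 U.zero_mem
    refine ⟨-f, fun i hi => ?_, fun x hx => by simp [hf0 x hx]⟩
    have := hfC (g i) ⟨Pi.single ⟨i, hi⟩ 1, single_mem_stdSimplex _ _, by simp [L]⟩
    change 0 < -f (g i)
    linarith
  · right
    obtain ⟨_, ⟨μ, hμ, rfl⟩, hU⟩ := Set.not_disjoint_iff.mp hC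
    refine ⟨fun i => if h : i ∈ s then μ ⟨i, h⟩ else 0, fun i hi => by simp [hi, hμ.1], ?_, ?_⟩
    · rw [← sum_coe_sort s]
      simpa using hμ.2
    · rw [← sum_coe_sort s]
      simpa [L, Fintype.linearCombination_apply] using hU

end Gordan

section Shift

variable {ι : Type*} {S D : Finset ι} {w l : ι → ℝ}

theorem exists_add_mul_pos_of_nonpos (hw : ∀ j ∈ S, w j < 0) (hlS : ∀ j ∈ S, l j ≤ 0)
    (hsum : ∑ j ∈ D, l j = 0) (hl : ∃ j ∈ D, l j ≠ 0) :
    ∃ t : ℝ, (∀ j ∈ S, w j + t * l j ≤ 0) ∧ ∃ i ∈ D, 0 < w i + t * l i := by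
  obtain ⟨i, hiD, hli⟩ := exists_pos_of_sum_zero_of_exists_nonzero l hsum hl
  have ht : 0 ≤ (|w i| + 1) / l i := by positivity
  refine ⟨(|w i| + 1) / l i, fun j hj => ?_, i, hiD, ?_⟩
  · linarith [hw j hj, mul_nonpos_of_nonneg_of_nonpos ht (hlS j hj)]
  · rw [div_mul_cancel₀ _ hli.ne']
    linarith [neg_abs_le (w i)]

theorem exists_add_mul_nonpos_nonneg [DecidableEq ι] (hSD : S ⊆ D) (hw : ∀ j ∈ S, w j < 0)
    (hsum : ∑ j ∈ D, l j = 0) (hl : ∃ j ∈ D, l j ≠ 0) :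
    ∃ t : ℝ, (∀ j ∈ S, w j + t * l j ≤ 0) ∧
      ∃ i ∈ D, 0 ≤ w i + t * l i ∧ ∃ j ∈ insert i S, w j + t * l j ≠ 0 := by
  by_cases hneg : ∀ j ∈ S, l j ≤ 0
  · obtain ⟨t, hS, i, hiD, hi⟩ := exists_add_mul_pos_of_nonpos hw hneg hsum hl
    exact ⟨t, hS, i, hiD, hi.le, i, mem_insert_self i S, hi.ne'⟩
  by_cases hpos : ∀ j ∈ S, 0 ≤ l j
  · obtain ⟨t, hS, i, hiD, hi⟩ := exists_add_mul_pos_of_nonpos (D := D) (l := -l) hw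
      (fun j hj => neg_nonpos.2 (hpos j hj)) (by simp [hsum])
      (by simpa using hl)
    simp only [Pi.neg_apply, mul_neg, ← neg_mul] at hS hi
    exact ⟨-t, hS, i, hiD, hi.le, i, mem_insert_self i S, hi.ne'⟩
  push Not at hneg hpos
  obtain ⟨j₁, hj₁, hlj₁⟩ := hneg
  obtain ⟨j₂, hj₂, hlj₂⟩ := hpos
  -- move along `l` until the first coordinate of `S` on which `l` is positive reaches zero
  obtain ⟨i, hi, hmin⟩ := (S.filter (0 < l ·)).exists_min_image (fun j => -w j / l j)
    ⟨j₁, mem_filter.2 ⟨hj₁, hlj₁⟩⟩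
  obtain ⟨hiS, hli⟩ := mem_filter.1 hi
  have ht : 0 < -w i / l i := div_pos (neg_pos.2 (hw i hiS)) hli
  refine ⟨-w i / l i, fun j hj => ?_, i, hSD hiS, ?_, j₂, mem_insert_of_mem hj₂, ?_⟩
  · rcases lt_or_ge 0 (l j) with hlj | hlj
    · have := (le_div_iff₀ hlj).1 (hmin j (mem_filter.2 ⟨hj, hlj⟩))
      linarith
    · linarith [hw j hj, mul_nonpos_of_nonneg_of_nonpos ht.le hlj]
  · rw [div_mul_cancel₀ _ hli.ne']
    simp
  · linarith [hw j₂ hj₂, mul_neg_of_pos_of_neg ht hlj₂]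

end Shift

section AffineRelation

variable {ι V : Type*} [AddCommGroup V] [Module ℝ V] {p : ι → V} {s : Finset ι} {l : ι → ℝ}

structure IsAffineDependenceOn (p : ι → V) (s : Finset ι) (l : ι → ℝ) : Prop where
  eq_zero_of_notMem : ∀ i ∉ s, l i = 0
  sum_eq_zero : ∑ i ∈ s, l i = 0
  sum_smul_eq_zero : ∑ i ∈ s, l i • p i = 0
  exists_ne_zero : ∃ i ∈ s, l i ≠ 0

theorem exists_isAffineDependenceOn_of_not_affineIndependent
    (h : ¬ AffineIndependent ℝ (fun i : s => p i)) : ∃ l, IsAffineDependenceOn p s l := by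
  classical
  rw [affineIndependent_iff_of_fintype] at h
  push Not at h
  obtain ⟨w, hw_sum, hw_vsub, i, hi⟩ := h
  rw [univ.weightedVSub_eq_linear_combination hw_sum] at hw_vsub
  refine ⟨fun j => if h : j ∈ s then w ⟨j, h⟩ else 0,
    ⟨fun j hj => dif_neg hj, ?_, ?_, i, i.2, by simpa using hi⟩⟩
  · rw [← sum_coe_sort s]
    simpa using hw_sum
  · rw [← sum_coe_sort s]
    simpa using hw_vsub

theorem IsAffineDependenceOn.three_le_card (hl : IsAffineDependenceOn p s l)
    (hp : Function.Injective p) : 3 ≤ #s := by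
  classical
  obtain ⟨-, hl_sum, hl_smul, i, his, hli⟩ := hl
  by_contra! hs
  interval_cases hc : #s
  · simp_all
  · obtain ⟨x, rfl⟩ := card_eq_one.1 hc
    simp_all
  · obtain ⟨x, y, hxy, rfl⟩ := card_eq_two.1 hc
    rw [sum_pair hxy] at hl_sum hl_smul
    rw [eq_neg_of_add_eq_zero_right hl_sum, neg_smul, ← sub_eq_add_neg, ← smul_sub,
      smul_eq_zero, sub_eq_zero] at hl_smul
    rcases hl_smul with hx | hpxy
    · rcases mem_insert.1 his with rfl | hiy
      · exact hli hx
      · simp_all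
    · exact hxy (hp hpxy)

end AffineRelation

section Obstruction

variable {ι V : Type*} [Fintype ι] [DecidableEq ι] [AddCommGroup V] [Module ℝ V]

def IsSeparating (p : ι → V) (A B : Finset ι) (f : V →ᵃ[ℝ] ℝ) : Prop :=
  (∀ i ∈ A \ B, 0 < f (p i)) ∧ (∀ i ∈ B \ A, f (p i) < 0) ∧ ∀ i ∈ A ∩ B, f (p i) = 0

structure IsObstruction (p : ι → V) (A B : Finset ι) (w : ι → ℝ) : Prop where
  mem_left_of_pos : ∀ i, 0 < w i → i ∈ A
  mem_right_of_neg : ∀ i, w i < 0 → i ∈ B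
  exists_ne_zero : ∃ i ∉ A ∩ B, w i ≠ 0
  sum_eq_zero : ∑ i, w i = 0
  sum_smul_eq_zero : ∑ i, w i • p i = 0

namespace IsObstruction

variable {p : ι → V} {A B : Finset ι} {w : ι → ℝ}

theorem sum_mul_apply_eq_zero (hw : IsObstruction p A B w) (f : V →ᵃ[ℝ] ℝ) :
    ∑ i, w i * f (p i) = 0 := by
  have h := congrArg f.linear hw.sum_smul_eq_zero
  simp only [map_sum, map_smul, smul_eq_mul, map_zero] at h
  rw [f.decomp]
  simp only [Pi.add_apply, mul_add, sum_add_distrib, ← sum_mul, hw.sum_eq_zero,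
    zero_mul, add_zero, h]

theorem not_isSeparating (hw : IsObstruction p A B w) (f : V →ᵃ[ℝ] ℝ) :
    ¬ IsSeparating p A B f := by
  rintro ⟨hA, hB, hAB⟩
  have hpos : ∀ i ∉ A ∩ B, w i ≠ 0 → 0 < w i * f (p i) := fun i hiAB hi => by
    rcases hi.lt_or_gt with hi | hi
    · have hiB := hw.mem_right_of_neg i hi
      exact mul_pos_of_neg_of_neg hi
        (hB i (mem_sdiff.2 ⟨hiB, fun hiA => hiAB (mem_inter.2 ⟨hiA, hiB⟩)⟩))
    · have hiA := hw.mem_left_of_pos i hi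
      exact mul_pos hi (hA i (mem_sdiff.2 ⟨hiA, fun hiB => hiAB (mem_inter.2 ⟨hiA, hiB⟩)⟩))
  have hnonneg : ∀ i ∈ univ, 0 ≤ w i * f (p i) := fun i _ => by
    by_cases hi : w i = 0
    · simp [hi]
    by_cases hiAB : i ∈ A ∩ B
    · simp [hAB i hiAB]
    · exact (hpos i hiAB hi).le
  obtain ⟨j, hjAB, hj⟩ := hw.exists_ne_zero
  have := sum_pos' hnonneg ⟨j, mem_univ j, hpos j hjAB hj⟩
  linarith [hw.sum_mul_apply_eq_zero f]

theorem neg (hw : IsObstruction p A B w) : IsObstruction p B A (-w) where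
  mem_left_of_pos i hi := hw.mem_right_of_neg i (neg_pos.1 hi)
  mem_right_of_neg i hi := hw.mem_left_of_pos i (neg_neg_iff_pos.1 hi)
  exists_ne_zero := by simpa [inter_comm] using hw.exists_ne_zero
  sum_eq_zero := by simp [hw.sum_eq_zero]
  sum_smul_eq_zero := by simp [hw.sum_smul_eq_zero]

theorem erase_right {i : ι} (hw : IsObstruction p A B w) (hi : 0 ≤ w i) :
    IsObstruction p A (B.erase i) w where
  mem_left_of_pos := hw.mem_left_of_pos
  mem_right_of_neg j hj := mem_erase.2 ⟨fun h => (h ▸ hi).not_gt hj, hw.mem_right_of_neg j hj⟩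
  exists_ne_zero := by
    obtain ⟨j, hj, hwj⟩ := hw.exists_ne_zero
    exact ⟨j, fun h => hj (inter_subset_inter_left (erase_subset i B) h), hwj⟩
  sum_eq_zero := hw.sum_eq_zero
  sum_smul_eq_zero := hw.sum_smul_eq_zero

theorem exists_erase_right_of_neg {D : Finset ι} {l : ι → ℝ} (hw : IsObstruction p A B w)
    (hwD : ∀ j ∈ D, w j < 0) (hl : IsAffineDependenceOn p D l) :
    ∃ i ∈ D, ∃ w', IsObstruction p A (B.erase i) w' := by
  obtain ⟨t, hS, i, hiD, hi, j, hj, hwj⟩ :=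
    exists_add_mul_nonpos_nonneg (filter_subset (· ∉ A) D) (fun j hj => hwD j (mem_filter.1 hj).1)
      hl.sum_eq_zero hl.exists_ne_zero
  have hoff : ∀ j ∉ D, w j + t * l j = w j := fun j hj => by simp [hl.eq_zero_of_notMem j hj]
  have hl_sum : ∑ j, l j = 0 := by
    rw [← sum_subset (subset_univ D) fun j _ hj => hl.eq_zero_of_notMem j hj, hl.sum_eq_zero]
  have hl_smul : ∑ j, l j • p j = 0 := by
    rw [← sum_subset (subset_univ D) fun j _ hj => by simp [hl.eq_zero_of_notMem j hj],
      hl.sum_smul_eq_zero]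
  refine ⟨i, hiD, fun j => w j + t * l j, ⟨fun k hk => ?_, fun k hk => ?_, ⟨j, ?_, hwj⟩, ?_, ?_⟩⟩
  · by_contra hkA
    by_cases hkD : k ∈ D
    · exact (hS k (mem_filter.2 ⟨hkD, hkA⟩)).not_gt hk
    · exact hkA (hw.mem_left_of_pos k (hoff k hkD ▸ hk))
  · refine mem_erase.2 ⟨fun h => (h ▸ hi).not_gt hk, ?_⟩
    by_cases hkD : k ∈ D
    · exact hw.mem_right_of_neg k (hwD k hkD)
    · exact hw.mem_right_of_neg k (hoff k hkD ▸ hk)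
  · rcases mem_insert.1 hj with rfl | hj
    · simp
    · exact fun h => (mem_filter.1 hj).2 (mem_inter.1 h).1
  · simp [sum_add_distrib, ← mul_sum, hw.sum_eq_zero, hl_sum]
  · simp [add_smul, mul_smul, sum_add_distrib, ← smul_sum, hw.sum_smul_eq_zero, hl_smul]

theorem exists_erase_right {D : Finset ι} {l : ι → ℝ} (hw : IsObstruction p A B w)
    (hl : IsAffineDependenceOn p D l) : ∃ i ∈ D, ∃ w', IsObstruction p A (B.erase i) w' := by
  by_cases h : ∃ i ∈ D, 0 ≤ w i
  · obtain ⟨i, hiD, hi⟩ := h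
    exact ⟨i, hiD, w, hw.erase_right hi⟩
  · push Not at h
    exact hw.exists_erase_right_of_neg h hl

theorem exists_erase_left {D : Finset ι} {l : ι → ℝ} (hw : IsObstruction p A B w)
    (hl : IsAffineDependenceOn p D l) : ∃ i ∈ D, ∃ w', IsObstruction p (A.erase i) B w' := by
  obtain ⟨i, hiD, w', hw'⟩ := hw.neg.exists_erase_right hl
  exact ⟨i, hiD, -w', hw'.neg⟩

end IsObstruction

end Obstruction

theorem exists_isSeparating_or_exists_isObstruction {ι V : Type*} [Fintype ι] [DecidableEq ι]
    [NormedAddCommGroup V] [NormedSpace ℝ V] [FiniteDimensional ℝ V] (p : ι → V)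
    (A B : Finset ι) : (∃ f, IsSeparating p A B f) ∨ ∃ w, IsObstruction p A B w := by
  -- lifting `p i` to `(p i, 1)` turns affine maps on `V` into linear functionals on `V × ℝ`
  set b : ι → V × ℝ := fun i => (p i, 1)
  set σ : ι → ℝ := fun i => if i ∈ A then 1 else -1
  rcases exists_pos_dual_or_exists_convex_combination_mem (fun i => σ i • b i) (A \ B ∪ B \ A)
    (Submodule.span ℝ (b '' ↑(A ∩ B))) with ⟨φ, hφ, hφU⟩ | ⟨μ, hμ0, hμ1, hμU⟩
  · left
    let f : V →ᵃ[ℝ] ℝ :=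
      (φ.toLinearMap.comp (LinearMap.inl ℝ V ℝ)).toAffineMap + AffineMap.const ℝ V (φ (0, 1))
    have hf : ∀ i, f (p i) = φ (b i) := fun i => by
      simp [f, b, ← map_add]
    refine ⟨f, fun i hi => ?_, fun i hi => ?_, fun i hi => ?_⟩
    · have := hφ i (mem_union_left _ hi)
      simp_all [σ]
    · have := hφ i (mem_union_right _ hi)
      simp_all [σ, mem_sdiff]
    · rw [hf]
      exact hφU _ (Submodule.subset_span ⟨i, hi, rfl⟩)
  · right
    obtain ⟨c, hc⟩ := (Submodule.mem_span_image_finset_iff_exists_fun' ℝ).1 hμU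
    let w : ι → ℝ := fun i =>
      (if i ∈ A \ B ∪ B \ A then μ i * σ i else 0) - if i ∈ A ∩ B then c i else 0
    have hwb : ∑ i, w i • b i = 0 := by
      simp only [w, sub_smul, ite_smul, zero_smul, sum_sub_distrib, Fintype.sum_ite_mem, mul_smul]
      rw [hc, sub_self]
    have hsign : ∀ i, (0 < w i → i ∈ A) ∧ (w i < 0 → i ∈ B) := fun i => by
      by_cases hA : i ∈ A <;> by_cases hB : i ∈ B <;>
        simp [w, σ, hA, hB] <;> exact hμ0 i (by simp [hA, hB])
    obtain ⟨j, hj, hμj⟩ := exists_ne_zero_of_sum_ne_zero (hμ1.trans_ne one_ne_zero)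
    have hjAB : j ∉ A ∩ B := by simp only [mem_union, mem_sdiff, mem_inter] at hj ⊢; tauto
    refine ⟨w, fun i => (hsign i).1, fun i => (hsign i).2, ⟨j, hjAB, ?_⟩, ?_, ?_⟩
    · simp only [w, if_pos hj, if_neg hjAB, sub_zero, σ]
      split_ifs <;> simpa using hμj
    · simpa [b, Prod.snd_sum] using congrArg Prod.snd hwb
    · simpa [b, Prod.fst_sum] using congrArg Prod.fst hwb

section Tiles

variable {n d : ℕ} {a : Fin n → Fin d → ℝ} {X1 Y1 X2 Y2 : Finset (Fin n)}

theorem SeparatedTiles.symm (h : SeparatedTiles a X1 Y1 X2 Y2) : SeparatedTiles a X2 Y2 X1 Y1 := by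
  obtain ⟨f, hP, hN, hZ⟩ := h
  refine ⟨-f, fun i hi => ?_, fun i hi => ?_, fun i hi => ?_⟩
  · simpa using hN i hi
  · simpa using hP i hi
  · rw [inter_comm, union_comm] at hi
    simpa using hZ i hi

theorem separatedTiles_iff (h1 : X1 ⊆ Y1) (h2 : X2 ⊆ Y2) :
    SeparatedTiles a X1 Y1 X2 Y2 ↔ ∃ f, IsSeparating a (Y1 \ X2) (Y2 \ X1) f := by
  have hdiff : ∀ {X Y X' Y' : Finset (Fin n)}, X ⊆ Y → X' ⊆ Y' →
      (Y \ X') \ (Y' \ X) = (X \ X') ∪ (Y \ Y') := fun hXY hXY' => by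
    ext i
    have := @hXY i
    have := @hXY' i
    simp only [mem_sdiff, mem_union]
    tauto
  have hinter : (Y1 \ X2) ∩ (Y2 \ X1) = (Y1 ∩ Y2) \ (X1 ∪ X2) := by
    ext i
    simp only [mem_sdiff, mem_inter, mem_union]
    tauto
  simp only [SeparatedTiles, IsSeparating, hdiff h1 h2, hdiff h2 h1, hinter]

theorem not_separatedTiles_iff (h1 : X1 ⊆ Y1) (h2 : X2 ⊆ Y2) :
    ¬ SeparatedTiles a X1 Y1 X2 Y2 ↔ ∃ w, IsObstruction a (Y1 \ X2) (Y2 \ X1) w := by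
  rw [separatedTiles_iff h1 h2]
  refine ⟨(exists_isSeparating_or_exists_isObstruction a _ _).resolve_left, ?_⟩
  rintro ⟨w, hw⟩ ⟨f, hf⟩
  exact hw.not_isSeparating f hf

theorem exists_refinement_of_not_fineTile (hinj : Function.Injective a) {k : ℕ}
    (h1 : X1 ⊆ Y1) (h2 : X2 ⊆ Y2) (hcov : #X1 < k ∧ k < #Y1) (hfine : ¬ FineTile a X1 Y1)
    (hsep : ¬ SeparatedTiles a X1 Y1 X2 Y2) :
    ∃ X1' Y1', X1 ⊆ X1' ∧ X1' ⊆ Y1' ∧ Y1' ⊆ Y1 ∧ #(Y1' \ X1') < #(Y1 \ X1) ∧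
      (#X1' < k ∧ k < #Y1') ∧ ¬ SeparatedTiles a X1' Y1' X2 Y2 := by
  obtain ⟨w, hw⟩ := (not_separatedTiles_iff h1 h2).1 hsep
  obtain ⟨l, hl⟩ := exists_isAffineDependenceOn_of_not_affineIndependent hfine
  have h3 := hl.three_le_card hinj
  have hcard := card_sdiff_of_subset h1
  -- `Y1 \ X1` has at least three elements, so one of the two moves keeps level `k` covered
  by_cases hk : #X1 + 2 ≤ k
  · obtain ⟨i, hi, w', hw'⟩ := hw.exists_erase_right hl
    obtain ⟨hiY, hiX⟩ := mem_sdiff.1 hi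
    refine ⟨insert i X1, Y1, subset_insert i X1, insert_subset hiY h1, subset_rfl, ?_, ?_, ?_⟩
    · rw [sdiff_insert]
      exact card_erase_lt_of_mem hi
    · rw [card_insert_of_notMem hiX]
      omega
    · rw [not_separatedTiles_iff (insert_subset hiY h1) h2, sdiff_insert]
      exact ⟨w', hw'⟩
  · obtain ⟨i, hi, w', hw'⟩ := hw.exists_erase_left hl
    obtain ⟨hiY, hiX⟩ := mem_sdiff.1 hi
    refine ⟨X1, Y1.erase i, subset_rfl, subset_erase.2 ⟨h1, hiX⟩, erase_subset i Y1, ?_, ?_, ?_⟩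
    · rw [erase_sdiff_comm]
      exact card_erase_lt_of_mem hi
    · rw [card_erase_of_mem hiY]
      omega
    · rw [not_separatedTiles_iff (subset_erase.2 ⟨h1, hiX⟩) h2, erase_sdiff_comm]
      exact ⟨w', hw'⟩

end Tiles

theorem nonseparated_refines_to_fine_nonseparated_general {n d : ℕ} (a : Fin n → (Fin d → ℝ))
    (hinj : Function.Injective a)
    (k : ℕ)
    (X1 Y1 X2 Y2 : Finset (Fin n)) (h1 : X1 ⊆ Y1) (h2 : X2 ⊆ Y2)
    (hcov1 : X1.card < k ∧ k < Y1.card) (hcov2 : X2.card < k ∧ k < Y2.card)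
    (hsep : ¬ SeparatedTiles a X1 Y1 X2 Y2) :
    ∃ X1' Y1' X2' Y2' : Finset (Fin n),
      X1 ⊆ X1' ∧ X1' ⊆ Y1' ∧ Y1' ⊆ Y1 ∧
      X2 ⊆ X2' ∧ X2' ⊆ Y2' ∧ Y2' ⊆ Y2 ∧
      FineTile a X1' Y1' ∧ FineTile a X2' Y2' ∧
      (X1'.card < k ∧ k < Y1'.card) ∧ (X2'.card < k ∧ k < Y2'.card) ∧
      ¬ SeparatedTiles a X1' Y1' X2' Y2' := by
  induction hm : #(Y1 \ X1) + #(Y2 \ X2) using Nat.strong_induction_on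
    generalizing X1 Y1 X2 Y2 with
  | _ m ih =>
  by_cases hf1 : FineTile a X1 Y1
  · by_cases hf2 : FineTile a X2 Y2
    · exact ⟨X1, Y1, X2, Y2, subset_rfl, h1, subset_rfl, subset_rfl, h2, subset_rfl,
        hf1, hf2, hcov1, hcov2, hsep⟩
    obtain ⟨X2', Y2', hX2, hXY2, hY2, hlt, hcov2', hsep'⟩ :=
      exists_refinement_of_not_fineTile hinj h2 h1 hcov2 hf2 fun h => hsep h.symm
    obtain ⟨X1'', Y1'', X2'', Y2'', hX1, hXY1, hY1, hX2', hXY2', hY2', hrest⟩ :=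
      ih _ (hm ▸ by omega) X1 Y1 X2' Y2' h1 hXY2 hcov1 hcov2' (fun h => hsep' h.symm) rfl
    exact ⟨X1'', Y1'', X2'', Y2'', hX1, hXY1, hY1, hX2.trans hX2', hXY2', hY2'.trans hY2, hrest⟩
  · obtain ⟨X1', Y1', hX1, hXY1, hY1, hlt, hcov1', hsep'⟩ :=
      exists_refinement_of_not_fineTile hinj h1 h2 hcov1 hf1 hsep
    obtain ⟨X1'', Y1'', X2'', Y2'', hX1', hXY1', hY1', hrest⟩ :=
      ih _ (hm ▸ by omega) X1' Y1' X2 Y2 hXY1 h2 hcov1' hcov2 hsep' rfl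
    exact ⟨X1'', Y1'', X2'', Y2'', hX1.trans hX1', hXY1', hY1'.trans hY1, hrest⟩

theorem nonseparated_refines_to_fine_nonseparated {n d : ℕ} (a : Fin n → (Fin d → ℝ))
    (hinj : Function.Injective a)
    (k : ℕ) (hk1 : 1 ≤ k) (hk2 : k ≤ n - 1)
    (X1 Y1 X2 Y2 : Finset (Fin n)) (h1 : X1 ⊆ Y1) (h2 : X2 ⊆ Y2)
    (hcov1 : X1.card < k ∧ k < Y1.card) (hcov2 : X2.card < k ∧ k < Y2.card)
    (hsep : ¬ SeparatedTiles a X1 Y1 X2 Y2) :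
    ∃ X1' Y1' X2' Y2' : Finset (Fin n),
      X1 ⊆ X1' ∧ X1' ⊆ Y1' ∧ Y1' ⊆ Y1 ∧
      X2 ⊆ X2' ∧ X2' ⊆ Y2' ∧ Y2' ⊆ Y2 ∧
      FineTile a X1' Y1' ∧ FineTile a X2' Y2' ∧
      (X1'.card < k ∧ k < Y1'.card) ∧ (X2'.card < k ∧ k < Y2'.card) ∧
      ¬ SeparatedTiles a X1' Y1' X2' Y2' :=
  nonseparated_refines_to_fine_nonseparated_general a hinj k X1 Y1 X2 Y2 h1 h2 hcov1 hcov2 hsep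
end
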